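/- arXiv:1208.3088 — 10 statements merged into one kernel-verified Lean document; each statement's English description precedes it below -/
import Mathlib

section
/- Let P = (P_t)_{t∈ℕ₀} be a [0,1]-valued process adapted to a filtration (F_t)_{t∈ℕ₀} such that E_t[P_{t+1}] − P_t ≥ δ_t·P_t·(1 − P_t) almost surely for every t, where each δ_t is a nonnegative F_t-measurable random variable and Σ_{t=0}^∞ δ_t = ∞ almost surely. Then P_t converges almost surely to a random variable P_∞ and P_∞ ∈ {0,1} almost surely. -/
open MeasureTheory Filter Set

/-- A `[0,1]`-valued adapted process whose expected hazard rates are bounded below by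
nonnegative `F_t`-measurable random variables `δ_t` with `Σ_t δ_t = ∞` a.s. converges
almost surely, and its limit takes values in `{0,1}` almost surely. -/
theorem stmt0 {Ω : Type*} {m : MeasurableSpace Ω} {μ : Measure Ω} [IsProbabilityMeasure μ]
    (𝓕 : Filtration ℕ m) (P δ : ℕ → Ω → ℝ)
    (hP_adapted : ∀ t, StronglyMeasurable[𝓕 t] (P t))
    (hP_mem : ∀ t, ∀ᵐ ω ∂μ, P t ω ∈ Set.Icc (0 : ℝ) 1)
    (hP_int : ∀ t, Integrable (P t) μ)
    (hδ_meas : ∀ t, StronglyMeasurable[𝓕 t] (δ t))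
    (hδ_nonneg : ∀ t, ∀ᵐ ω ∂μ, 0 ≤ δ t ω)
    (hhaz : ∀ t, ∀ᵐ ω ∂μ,
      δ t ω * (P t ω * (1 - P t ω)) ≤ (μ[P (t + 1)|𝓕 t]) ω - P t ω)
    (hδ_div : ∀ᵐ ω ∂μ,
      Tendsto (fun n => ∑ t ∈ Finset.range n, δ t ω) atTop atTop) :
    ∃ Plim : Ω → ℝ,
      (∀ᵐ ω ∂μ, Tendsto (fun t => P t ω) atTop (nhds (Plim ω))) ∧
      (∀ᵐ ω ∂μ, Plim ω = 0 ∨ Plim ω = 1) := by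
  classical
  set g : ℕ → Ω → ℝ := fun t ω => δ t ω * (P t ω * (1 - P t ω)) with hg_def
  have hg_nonneg : ∀ t, ∀ᵐ ω ∂μ, 0 ≤ g t ω := by
    intro t
    filter_upwards [hδ_nonneg t, hP_mem t] with ω h1 h2
    exact mul_nonneg h1 (mul_nonneg h2.1 (by linarith [h2.2]))
  -- submartingale
  have hsub : Submartingale P 𝓕 μ := by
    refine submartingale_nat hP_adapted hP_int fun t => ?_
    filter_upwards [hhaz t, hg_nonneg t] with ω h1 h2
    simpa using le_trans h2 h1
  have hbdd : ∀ n, eLpNorm (P n) 1 μ ≤ ((1 : NNReal) : ENNReal) := by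
    intro n
    have h := eLpNorm_le_of_ae_bound (μ := μ) (p := 1) (f := P n) (C := 1) ?_
    · simpa using h
    · filter_upwards [hP_mem n] with ω h
      rw [Real.norm_eq_abs, abs_le]
      exact ⟨by linarith [h.1], h.2⟩
  have htend := hsub.ae_tendsto_limitProcess (R := 1) hbdd
  refine ⟨𝓕.limitProcess P μ, htend, ?_⟩
  -- measurability of g
  have hg_m : ∀ t, Measurable (g t) := by
    intro t
    have hδm : Measurable (δ t) := ((hδ_meas t).measurable).mono (𝓕.le t) le_rfl
    have hPm : Measurable (P t) := ((hP_adapted t).measurable).mono (𝓕.le t) le_rfl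
    exact hδm.mul (hPm.mul (measurable_const.sub hPm))
  have hg_meas : ∀ t : ℕ, AEMeasurable (fun ω => ENNReal.ofReal (g t ω)) μ := fun t =>
    (ENNReal.measurable_ofReal.comp (hg_m t)).aemeasurable
  -- integrability of g
  have hg_int : ∀ t, Integrable (g t) μ := by
    intro t
    refine Integrable.mono' (g := μ[P (t + 1)|𝓕 t] - P t)
      (integrable_condExp.sub (hP_int t)) (hg_m t).aestronglyMeasurable ?_
    filter_upwards [hhaz t, hg_nonneg t] with ω h1 h2
    rw [Real.norm_eq_abs, abs_of_nonneg h2]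
    simpa [Pi.sub_apply] using h1
  -- partial sums of integrals bounded by 1
  have hkey : ∀ n, ∑ t ∈ Finset.range n, ∫ ω, g t ω ∂μ ≤ 1 := by
    intro n
    have h1 : ∀ t, ∫ ω, g t ω ∂μ ≤ (∫ ω, P (t+1) ω ∂μ) - ∫ ω, P t ω ∂μ := by
      intro t
      have h := integral_mono_ae (hg_int t) (integrable_condExp.sub (hP_int t)) (hhaz t)
      simp only [Pi.sub_apply] at h
      rwa [integral_sub integrable_condExp (hP_int t), integral_condExp (𝓕.le t)] at h
    have h2 : ∑ t ∈ Finset.range n, ∫ ω, g t ω ∂μ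
        ≤ ∑ t ∈ Finset.range n, ((∫ ω, P (t+1) ω ∂μ) - ∫ ω, P t ω ∂μ) :=
      Finset.sum_le_sum fun t _ => h1 t
    rw [Finset.sum_range_sub (fun t => ∫ ω, P t ω ∂μ)] at h2
    have h3 : ∫ ω, P n ω ∂μ ≤ 1 := by
      calc ∫ ω, P n ω ∂μ ≤ ∫ _ω, (1 : ℝ) ∂μ := by
            refine integral_mono_ae (hP_int n) (integrable_const 1) ?_
            filter_upwards [hP_mem n] with ω h using h.2
        _ = 1 := by simp
    have h4 : 0 ≤ ∫ ω, P 0 ω ∂μ := by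
      refine integral_nonneg_of_ae ?_
      filter_upwards [hP_mem 0] with ω h using h.1
    linarith
  -- a.e. finiteness of the ENNReal tsum
  have hfin : ∀ᵐ ω ∂μ, (∑' t, ENNReal.ofReal (g t ω)) < ⊤ := by
    refine ae_lt_top' (AEMeasurable.ennreal_tsum hg_meas) ?_
    rw [lintegral_tsum hg_meas]
    have heq : ∀ t : ℕ, ∫⁻ ω, ENNReal.ofReal (g t ω) ∂μ = ENNReal.ofReal (∫ ω, g t ω ∂μ) :=
      fun t => (ofReal_integral_eq_lintegral_ofReal (hg_int t) (hg_nonneg t)).symm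
    have hle : (∑' t : ℕ, ∫⁻ ω, ENNReal.ofReal (g t ω) ∂μ) ≤ 1 := by
      rw [ENNReal.tsum_eq_iSup_sum]
      refine iSup_le fun s => ?_
      obtain ⟨n, hn⟩ := Finset.exists_nat_subset_range s
      calc ∑ t ∈ s, ∫⁻ ω, ENNReal.ofReal (g t ω) ∂μ
          ≤ ∑ t ∈ Finset.range n, ∫⁻ ω, ENNReal.ofReal (g t ω) ∂μ :=
            Finset.sum_le_sum_of_subset hn
        _ = ENNReal.ofReal (∑ t ∈ Finset.range n, ∫ ω, g t ω ∂μ) := by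
            simp_rw [heq]
            rw [ENNReal.ofReal_sum_of_nonneg fun t _ => integral_nonneg_of_ae (hg_nonneg t)]
        _ ≤ ENNReal.ofReal 1 := ENNReal.ofReal_le_ofReal (hkey n)
        _ = 1 := ENNReal.ofReal_one
    exact ne_top_of_le_ne_top (by simp) hle
  -- pointwise argument
  filter_upwards [hfin, hδ_div, ae_all_iff.2 hP_mem, ae_all_iff.2 hδ_nonneg, htend] with
    ω hfinω hdivω hmemω hδω htendω
  set L := 𝓕.limitProcess P μ ω with hL
  by_contra hcon
  push_neg at hcon
  obtain ⟨hL0, hL1⟩ := hcon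
  have hLmem0 : 0 ≤ L := ge_of_tendsto htendω (Eventually.of_forall fun t => (hmemω t).1)
  have hLmem1 : L ≤ 1 := le_of_tendsto htendω (Eventually.of_forall fun t => (hmemω t).2)
  have hc : 0 < L * (1 - L) :=
    mul_pos (lt_of_le_of_ne hLmem0 (Ne.symm hL0)) (by cases lt_or_eq_of_le hLmem1 with
      | inl h => linarith
      | inr h => exact absurd h hL1)
  set c := L * (1 - L) with hcdef
  have htendq : Tendsto (fun t => P t ω * (1 - P t ω)) atTop (nhds c) :=
    htendω.mul (tendsto_const_nhds.sub htendω)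
  have hev : ∀ᶠ t in atTop, c / 2 < P t ω * (1 - P t ω) :=
    (tendsto_order.1 htendq).1 (c / 2) (by linarith)
  obtain ⟨N, hN⟩ := eventually_atTop.1 hev
  -- summability of g at ω
  have hsumm : Summable (fun t => g t ω) := by
    have h := ENNReal.summable_toReal hfinω.ne
    refine h.congr fun t => ?_
    exact ENNReal.toReal_ofReal
      (mul_nonneg (hδω t) (mul_nonneg (hmemω t).1 (by linarith [(hmemω t).2])))
  have h1 : Summable (fun t => g (t + N) ω) := (summable_nat_add_iff N).2 hsumm
  have h2 : Summable (fun t => c / 2 * δ (t + N) ω) := by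
    refine Summable.of_nonneg_of_le (fun t => mul_nonneg (by linarith) (hδω (t + N)))
      (fun t => ?_) h1
    have hq := hN (t + N) (Nat.le_add_left N t)
    have hδn := hδω (t + N)
    have : c / 2 * δ (t + N) ω ≤ (P (t + N) ω * (1 - P (t + N) ω)) * δ (t + N) ω :=
      mul_le_mul_of_nonneg_right hq.le hδn
    simpa [hg_def, mul_comm] using this
  have h3 : Summable (fun t => δ (t + N) ω) := by
    have h4 := h2.mul_left (2 / c)
    refine h4.congr fun t => ?_
    field_simp
  have h5 : Summable (fun t => δ t ω) := (summable_nat_add_iff N).1 h3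
  exact not_tendsto_atTop_of_tendsto_nhds h5.hasSum.tendsto_sum_nat hdivω
end

section
/- Let t ∈ ℕ₀, let a, δ, γ, θ be F_t-measurable random variables with a ∈ [0,1], δ ≥ 0, 0 ≤ γ ≤ min(1, δ), and θ ∈ (0,1], and let X be a [0,1]-valued random variable satisfying E_t[X] − a ≥ δ·a·(1 − a) almost surely. Then E_t[ exp( −(γ/θ)·(a + θ·(X − a)) ) ] ≤ exp( −(γ/θ)·a ) almost surely. -/
/-!
Write the integrand as `exp (γ a - (γ/θ) a) * exp (-γ X)`; the first factor is
`F_t`-measurable and at most `1`. On `[0,1]` convexity bounds `exp (-γ X)` by its chord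
`1 - (1 - e^{-γ}) X`, so
`E_t[exp (-γ X)] ≤ 1 - (1 - e^{-γ}) E_t[X] ≤ 1 - (1 - e^{-γ}) (a + γ a (1 - a))`.
That the last quantity is at most `e^{-γ a}` is an inequality in the single variable `γ` which
holds at `γ = 0`; the chord bound, applied once more, shows that the derivative of the gap is
at least `γ e^{-γ} a (1 - a) ≥ 0`.
-/

open MeasureTheory Filter Set Real

lemma exp_neg_mul_le_one_sub_mul {x : ℝ} (y : ℝ) (hx₀ : 0 ≤ x) (hx₁ : x ≤ 1) :
    exp (-(y * x)) ≤ 1 - (1 - exp (-y)) * x := by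
  have :=
    convexOn_exp.2 (mem_univ 0) (mem_univ (-y)) (sub_nonneg.2 hx₁) hx₀ (sub_add_cancel 1 x)
  simp only [smul_eq_mul, mul_zero, zero_add, exp_zero, mul_one] at this
  rw [show -(y * x) = x * -y by ring]
  linarith

lemma one_sub_exp_neg_mul_le {a g : ℝ} (ha₀ : 0 ≤ a) (ha₁ : a ≤ 1) (hg : 0 ≤ g) :
    1 - exp (-(g * a)) ≤ (1 - exp (-g)) * (a + g * (a * (1 - a))) := by
  set F : ℝ → ℝ := fun s ↦ (1 - exp (-s)) * (a + s * (a * (1 - a))) - (1 - exp (-(s * a)))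
  set F' : ℝ → ℝ := fun s ↦
    exp (-s) * (a + s * (a * (1 - a))) + (1 - exp (-s)) * (a * (1 - a)) - a * exp (-(s * a))
  have hF : ∀ s, HasDerivAt F (F' s) s := fun s ↦
    ((((hasDerivAt_neg s).exp.const_sub 1).mul
      (((hasDerivAt_id s).mul_const (a * (1 - a))).const_add a)).sub
      (((hasDerivAt_id s).mul_const a).neg.exp.const_sub 1)).congr_deriv
      (by simp only [F', id, Pi.neg_apply]; ring)
  have hF'_nonneg : ∀ s, 0 ≤ s → 0 ≤ F' s := fun s hs ↦ by
    have : 0 ≤ exp (-s) * s * (a * (1 - a)) := by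
      have := exp_pos (-s); have : 0 ≤ 1 - a := by linarith
      positivity
    nlinarith [mul_le_mul_of_nonneg_left (exp_neg_mul_le_one_sub_mul s ha₀ ha₁) ha₀]
  have hmono : MonotoneOn F (Ici 0) :=
    monotoneOn_of_hasDerivWithinAt_nonneg (convex_Ici 0)
      (fun s _ ↦ (hF s).continuousAt.continuousWithinAt) (fun s _ ↦ (hF s).hasDerivWithinAt)
      (fun s hs ↦ hF'_nonneg s (le_of_lt (by simpa using hs)))
  have := hmono self_mem_Ici hg hg
  simp only [F, neg_zero, exp_zero, zero_mul, sub_self] at this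
  linarith

lemma exp_add_mul_mul_le_exp {a γ κ E : ℝ} (ha₀ : 0 ≤ a) (ha₁ : a ≤ 1) (hγ : 0 ≤ γ)
    (hE : a + γ * (a * (1 - a)) ≤ E) :
    exp (κ + γ * a) * (1 - (1 - exp (-γ)) * E) ≤ exp κ := by
  have hγ' : 0 ≤ 1 - exp (-γ) := by simpa using hγ
  calc exp (κ + γ * a) * (1 - (1 - exp (-γ)) * E)
      ≤ exp (κ + γ * a) * exp (-(γ * a)) := by
        gcongr
        nlinarith [one_sub_exp_neg_mul_le ha₀ ha₁ hγ, mul_le_mul_of_nonneg_left hE hγ']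
    _ = exp κ := by rw [← exp_add, add_neg_cancel_right]

lemma exp_neg_div_mul_add_mul_sub {γ θ a x : ℝ} (hθ : θ ≠ 0) :
    exp (-(γ / θ) * (a + θ * (x - a))) = exp (-(γ / θ) * a + γ * a) * exp (-(γ * x)) := by
  rw [← exp_add]
  congr 1
  field_simp
  ring

lemma exp_neg_div_mul_add_mul_le_one {γ θ a : ℝ} (hγ : 0 ≤ γ) (ha : 0 ≤ a) (hθ₀ : 0 < θ)
    (hθ₁ : θ ≤ 1) : exp (-(γ / θ) * a + γ * a) ≤ 1 := by
  rw [exp_le_one_iff]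
  nlinarith [mul_le_mul_of_nonneg_right (le_div_self hγ hθ₀ hθ₁) ha]

section CondExp

variable {Ω : Type*} {m m₀ : MeasurableSpace Ω} {μ : Measure Ω} [IsFiniteMeasure μ]

lemma integrable_exp_neg_mul {g X : Ω → ℝ} (hg : AEStronglyMeasurable g μ)
    (hX : AEStronglyMeasurable X μ) (hgX : ∀ᵐ ω ∂μ, 0 ≤ g ω * X ω) :
    Integrable (fun ω ↦ exp (-(g ω * X ω))) μ := by
  refine .of_bound (by fun_prop) 1 ?_
  filter_upwards [hgX] with ω hω
  rw [norm_of_nonneg (exp_pos _).le, exp_le_one_iff]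
  linarith

lemma condExp_exp_neg_mul_le (hm : m ≤ m₀) {g X : Ω → ℝ} (hg : StronglyMeasurable[m] g)
    (hg₀ : ∀ᵐ ω ∂μ, 0 ≤ g ω) (hX : Integrable X μ) (hX₀₁ : ∀ᵐ ω ∂μ, X ω ∈ Icc 0 1) :
    μ[fun ω ↦ exp (-(g ω * X ω)) | m] ≤ᵐ[μ]
      fun ω ↦ 1 - (1 - exp (-g ω)) * μ[X | m] ω := by
  set h : Ω → ℝ := fun ω ↦ 1 - exp (-g ω)
  have hh : StronglyMeasurable[m] h := by fun_prop
  have hh_bound : ∀ᵐ ω ∂μ, ‖h ω‖ ≤ 1 := by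
    filter_upwards [hg₀] with ω hω
    rw [norm_of_nonneg (by simpa [h] using hω)]
    simpa [h] using (exp_pos (-g ω)).le
  have hhX : Integrable (h * X) μ := hX.bdd_mul (hh.mono hm).aestronglyMeasurable hh_bound
  have hchord : (fun ω ↦ exp (-(g ω * X ω))) ≤ᵐ[μ] fun ω ↦ 1 - h ω * X ω := by
    filter_upwards [hX₀₁] with ω hω using exp_neg_mul_le_one_sub_mul (g ω) hω.1 hω.2
  have hlin : μ[fun ω ↦ 1 - h ω * X ω | m] =ᵐ[μ] fun ω ↦ 1 - h ω * μ[X | m] ω := by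
    filter_upwards [condExp_sub (integrable_const 1) hhX m,
      condExp_mul_of_stronglyMeasurable_left hh hhX hX] with ω hsub hmul
    simp only [Pi.sub_def, Pi.mul_def] at hsub hmul
    rw [hsub, hmul, condExp_const hm]
  refine (condExp_mono ?_ ((integrable_const 1).sub hhX) hchord).trans_eq hlin
  refine integrable_exp_neg_mul (hg.mono hm).aestronglyMeasurable hX.1 ?_
  filter_upwards [hg₀, hX₀₁] with ω hgω hXω using mul_nonneg hgω hXω.1

end CondExp

theorem stmt1_general {Ω : Type*} {m : MeasurableSpace Ω} {μ : Measure Ω} [IsProbabilityMeasure μ]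
    (𝓕 : Filtration ℕ m) (t : ℕ) (a δ γ θ X : Ω → ℝ)
    (ha_meas : StronglyMeasurable[𝓕 t] a)
    (hγ_meas : StronglyMeasurable[𝓕 t] γ)
    (hθ_meas : StronglyMeasurable[𝓕 t] θ)
    (ha_mem : ∀ᵐ ω ∂μ, a ω ∈ Set.Icc (0 : ℝ) 1)
    (hγ_mem : ∀ᵐ ω ∂μ, γ ω ∈ Set.Icc 0 (min 1 (δ ω)))
    (hθ_mem : ∀ᵐ ω ∂μ, θ ω ∈ Set.Ioc (0 : ℝ) 1)
    (hX_mem : ∀ᵐ ω ∂μ, X ω ∈ Set.Icc (0 : ℝ) 1)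
    (hX_int : Integrable X μ)
    (hhaz : ∀ᵐ ω ∂μ, δ ω * (a ω * (1 - a ω)) ≤ (μ[X|𝓕 t]) ω - a ω) :
    ∀ᵐ ω ∂μ,
      (μ[fun ω' => Real.exp (-(γ ω' / θ ω') * (a ω' + θ ω' * (X ω' - a ω')))|𝓕 t]) ω
        ≤ Real.exp (-(γ ω / θ ω) * a ω) := by
  set c : Ω → ℝ := fun ω ↦ exp (-(γ ω / θ ω) * a ω + γ ω * a ω)
  set V : Ω → ℝ := fun ω ↦ exp (-(γ ω * X ω))
  have hγ₀ : ∀ᵐ ω ∂μ, 0 ≤ γ ω := hγ_mem.mono fun ω h ↦ h.1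
  have hc : StronglyMeasurable[𝓕 t] c := by fun_prop
  have hc_bound : ∀ᵐ ω ∂μ, ‖c ω‖ ≤ 1 := by
    filter_upwards [ha_mem, hγ_mem, hθ_mem] with ω ha hγ hθ
    rw [norm_of_nonneg (exp_pos _).le]
    exact exp_neg_div_mul_add_mul_le_one hγ.1 ha.1 hθ.1 hθ.2
  have hV : Integrable V μ :=
    integrable_exp_neg_mul (hγ_meas.mono (𝓕.le t)).aestronglyMeasurable hX_int.1
      (by filter_upwards [hγ₀, hX_mem] with ω hγ hXω using mul_nonneg hγ hXω.1)
  have hcV : Integrable (c * V) μ :=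
    hV.bdd_mul (hc.mono (𝓕.le t)).aestronglyMeasurable hc_bound
  have hfactor : (fun ω ↦ exp (-(γ ω / θ ω) * (a ω + θ ω * (X ω - a ω)))) =ᵐ[μ] c * V := by
    filter_upwards [hθ_mem] with ω hθ using exp_neg_div_mul_add_mul_sub hθ.1.ne'
  filter_upwards
    [(condExp_congr_ae hfactor).trans (condExp_mul_of_stronglyMeasurable_left hc hcV hV),
    condExp_exp_neg_mul_le (𝓕.le t) hγ_meas hγ₀ hX_int hX_mem, hhaz, ha_mem, hγ_mem]
    with ω hZ hV_le hdrift ha hγ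
  have hE : a ω + γ ω * (a ω * (1 - a ω)) ≤ μ[X|𝓕 t] ω := by
    nlinarith [mul_le_mul_of_nonneg_right (hγ.2.trans (min_le_right _ _))
      (mul_nonneg ha.1 (sub_nonneg.2 ha.2))]
  rw [hZ, Pi.mul_apply]
  exact (mul_le_mul_of_nonneg_left hV_le (exp_pos _).le).trans
    (exp_add_mul_mul_le_exp ha.1 ha.2 hγ.1 hE)

/-- One-step exponential supermartingale inequality: if `a, δ, γ, θ` are `F_t`-measurable with
`a ∈ [0,1]`, `δ ≥ 0`, `0 ≤ γ ≤ min(1,δ)`, `θ ∈ (0,1]`, and `X` is a `[0,1]`-valued random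
variable with `E_t[X] − a ≥ δ·a·(1 − a)` a.s., then
`E_t[exp(−(γ/θ)·(a + θ·(X − a)))] ≤ exp(−(γ/θ)·a)` a.s. -/
theorem stmt1 {Ω : Type*} {m : MeasurableSpace Ω} {μ : Measure Ω} [IsProbabilityMeasure μ]
    (𝓕 : Filtration ℕ m) (t : ℕ) (a δ γ θ X : Ω → ℝ)
    (ha_meas : StronglyMeasurable[𝓕 t] a)
    (hδ_meas : StronglyMeasurable[𝓕 t] δ)
    (hγ_meas : StronglyMeasurable[𝓕 t] γ)
    (hθ_meas : StronglyMeasurable[𝓕 t] θ)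
    (ha_mem : ∀ᵐ ω ∂μ, a ω ∈ Set.Icc (0 : ℝ) 1)
    (hδ_nonneg : ∀ᵐ ω ∂μ, 0 ≤ δ ω)
    (hγ_mem : ∀ᵐ ω ∂μ, γ ω ∈ Set.Icc 0 (min 1 (δ ω)))
    (hθ_mem : ∀ᵐ ω ∂μ, θ ω ∈ Set.Ioc (0 : ℝ) 1)
    (hX_meas : Measurable X)
    (hX_mem : ∀ᵐ ω ∂μ, X ω ∈ Set.Icc (0 : ℝ) 1)
    (hX_int : Integrable X μ)
    (hhaz : ∀ᵐ ω ∂μ, δ ω * (a ω * (1 - a ω)) ≤ (μ[X|𝓕 t]) ω - a ω) :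
    ∀ᵐ ω ∂μ,
      (μ[fun ω' => Real.exp (-(γ ω' / θ ω') * (a ω' + θ ω' * (X ω' - a ω')))|𝓕 t]) ω
        ≤ Real.exp (-(γ ω / θ ω) * a ω) :=
  stmt1_general 𝓕 t a δ γ θ X ha_meas hγ_meas hθ_meas ha_mem hγ_mem hθ_mem hX_mem hX_int hhaz
end

section
/- Let δ > 0 and γ ∈ (0, min(1, δ)]. Then for every z ∈ [0,1]: z + δ·z·(1 − z) ≥ (1 − e^{−γz}) / (1 − e^{−γ}). -/
open Real Set

/-! Clearing the denominator `1 - e^{-γ}`, the claim for `δ = γ` says that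
`z ↦ (1 - e^{-γ}) (z + γ z (1 - z)) - (1 - e^{-γ z})` is nonnegative on `[0, 1]`.
It vanishes at `0` and `1`, and it is concave on `[0, ∞)`: its second derivative
`γ² e^{-γ z} - 2γ (1 - e^{-γ})` is at most `γ (γ - 2 (1 - e^{-γ})) ≤ 0`, because
`e^{-γ} ≤ 1 - γ/2` for `γ ∈ [0, 1]`. Replacing `γ` by `δ ≥ γ` only enlarges the right-hand side. -/

lemma exp_neg_le_one_sub_half {γ : ℝ} (h0 : 0 ≤ γ) (h1 : γ ≤ 1) : exp (-γ) ≤ 1 - γ / 2 :=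
  calc exp (-γ) = (exp γ)⁻¹ := exp_neg γ
    _ ≤ (1 + γ)⁻¹ := inv_anti₀ (by linarith) (by linarith [add_one_le_exp γ])
    _ ≤ 1 - γ / 2 := by rw [inv_le_iff_one_le_mul₀ (by linarith)]; nlinarith

noncomputable def expGap (γ z : ℝ) : ℝ :=
  (1 - exp (-γ)) * (z + γ * z * (1 - z)) - (1 - exp (-γ * z))

lemma hasDerivAt_exp_neg_mul (γ z : ℝ) :
    HasDerivAt (fun z ↦ exp (-γ * z)) (-γ * exp (-γ * z)) z := by
  simpa [mul_comm] using ((hasDerivAt_id z).const_mul (-γ)).exp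

lemma hasDerivAt_expGap (γ z : ℝ) :
    HasDerivAt (expGap γ) ((1 - exp (-γ)) * (1 + γ * (1 - 2 * z)) - γ * exp (-γ * z)) z := by
  have hpoly : HasDerivAt (fun z ↦ z + γ * z * (1 - z)) (1 + γ * (1 - 2 * z)) z :=
    ((hasDerivAt_id' z).add (((hasDerivAt_id' z).const_mul γ).mul
      ((hasDerivAt_id' z).const_sub 1))).congr_deriv (by ring)
  exact ((hpoly.const_mul (1 - exp (-γ))).sub
    ((hasDerivAt_exp_neg_mul γ z).const_sub 1)).congr_deriv (by ring)

lemma hasDerivAt_deriv_expGap (γ z : ℝ) :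
    HasDerivAt (fun z ↦ (1 - exp (-γ)) * (1 + γ * (1 - 2 * z)) - γ * exp (-γ * z))
      (γ ^ 2 * exp (-γ * z) - 2 * γ * (1 - exp (-γ))) z := by
  have hlin : HasDerivAt (fun z ↦ 1 + γ * (1 - 2 * z)) (-2 * γ) z :=
    ((((hasDerivAt_id' z).const_mul 2).const_sub 1).const_mul γ |>.const_add 1).congr_deriv
      (by ring)
  exact ((hlin.const_mul (1 - exp (-γ))).sub
    ((hasDerivAt_exp_neg_mul γ z).const_mul γ)).congr_deriv (by ring)

lemma concaveOn_expGap {γ : ℝ} (h0 : 0 ≤ γ) (h1 : γ ≤ 1) : ConcaveOn ℝ (Ici 0) (expGap γ) := by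
  refine concaveOn_of_hasDerivWithinAt2_nonpos (convex_Ici 0)
    (fun z _ ↦ (hasDerivAt_expGap γ z).continuousAt.continuousWithinAt)
    (fun z _ ↦ (hasDerivAt_expGap γ z).hasDerivWithinAt)
    (fun z _ ↦ (hasDerivAt_deriv_expGap γ z).hasDerivWithinAt) ?_
  intro z hz
  rw [interior_Ici] at hz
  have hexp : exp (-γ * z) ≤ 1 := exp_le_one_iff.2 (by nlinarith [hz.out])
  have hhalf := exp_neg_le_one_sub_half h0 h1
  nlinarith [mul_le_mul_of_nonneg_left hexp (sq_nonneg γ)]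

lemma expGap_nonneg {γ z : ℝ} (h0 : 0 ≤ γ) (h1 : γ ≤ 1) (hz : z ∈ Icc (0 : ℝ) 1) :
    0 ≤ expGap γ z := by
  have h := (concaveOn_expGap h0 h1).ge_on_segment (x := 0) (y := 1) self_mem_Ici
    (mem_Ici.2 zero_le_one) (by rwa [segment_eq_Icc zero_le_one])
  simpa [expGap] using h

lemma one_sub_exp_neg_mul_div_le {γ z : ℝ} (h0 : 0 < γ) (h1 : γ ≤ 1) (hz : z ∈ Icc (0 : ℝ) 1) :
    (1 - exp (-γ * z)) / (1 - exp (-γ)) ≤ z + γ * z * (1 - z) := by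
  have hden : 0 < 1 - exp (-γ) := by simpa using h0
  rw [div_le_iff₀ hden]
  have h := expGap_nonneg h0.le h1 hz
  unfold expGap at h
  linarith

theorem stmt2_general (δ γ : ℝ) (hγ : γ ∈ Set.Ioc 0 (min 1 δ)) :
    ∀ z ∈ Set.Icc (0 : ℝ) 1,
      (1 - Real.exp (-γ * z)) / (1 - Real.exp (-γ)) ≤ z + δ * z * (1 - z) := by
  obtain ⟨h0, hγ1, hγδ⟩ : 0 < γ ∧ γ ≤ 1 ∧ γ ≤ δ := by simpa using hγ
  intro z hz
  have hz_mul : 0 ≤ z * (1 - z) := mul_nonneg hz.1 (sub_nonneg.2 hz.2)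
  calc (1 - exp (-γ * z)) / (1 - exp (-γ)) ≤ z + γ * z * (1 - z) :=
        one_sub_exp_neg_mul_div_le h0 hγ1 hz
    _ ≤ z + δ * z * (1 - z) := by linarith [mul_le_mul_of_nonneg_right hγδ hz_mul]

/-- For `δ > 0` and `γ ∈ (0, min(1,δ)]`, every `z ∈ [0,1]` satisfies
`z + δ·z·(1−z) ≥ (1 − e^{−γz})/(1 − e^{−γ})`. -/
theorem stmt2 (δ γ : ℝ) (hδ : 0 < δ) (hγ : γ ∈ Set.Ioc 0 (min 1 δ)) :
    ∀ z ∈ Set.Icc (0 : ℝ) 1,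
      (1 - Real.exp (-γ * z)) / (1 - Real.exp (-γ)) ≤ z + δ * z * (1 - z) :=
  stmt2_general δ γ hγ
end

section
/- Let (F_t)_{t∈ℕ₀} be a filtration, let δ_t ≥ 0 be F_t-measurable random variables with Σ_{t=0}^∞ δ_t² = ∞ almost surely, let p₀ ∈ (0,1] be a constant, and fix ε ∈ (0,1). Let γ̃ be the smallest positive integer with e^{−γ̃ p₀} < ε and set θ_t := min(1, δ_t)/γ̃. Let η_t ∈ (0,1] be F_t-measurable random variables with Σ_{t=0}^∞ η_t δ_t² = ∞ almost surely. Suppose P = (P_t)_{t∈ℕ₀} is a [0,1]-valued adapted process with P₀ = p₀ such that for every t there is a [0,1]-valued F_{t+1}-measurable random variable X_{t+1} with E_t[X_{t+1}] − P_t ≥ δ_t·P_t·(1 − P_t) almost surely and P_{t+1} = P_t + η_t θ_t (X_{t+1} − P_t). Then P_t converges almost surely and ℙ( lim_{t→∞} P_t = 1 ) > 1 − ε. -/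
/-!
Since `E_t[X_{t+1}] - P_t ≥ δ_t P_t (1 - P_t) ≥ 0`, the process `P` is a `[0, 1]`-valued
submartingale: it converges almost surely, and its drifts `η_t θ_t (E_t[X_{t+1}] - P_t)` have
expectations telescoping to at most `1`, so they are almost surely summable. Where the limit lies
in `(0, 1)`, the hazard-rate bound makes the drift at least a constant times `η_t δ_t²`, which
contradicts `Σ η_t δ_t² = ∞`; hence `P_t → 0` or `P_t → 1` almost surely.

Since `γ̃ η_t θ_t ≤ min(1, δ_t)`, convexity of `exp` together with the hazard-rate bound makes
`exp(-γ̃ P_t)` a supermartingale. By Fatou's lemma,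
`ℙ(P_t → 0) ≤ E[exp(-γ̃ P_0)] = exp(-γ̃ p₀) < ε`.
-/

open MeasureTheory Filter Set Real
open scoped ENNReal Topology

namespace Real

lemma half_le_one_sub_exp_neg {c : ℝ} (hc0 : 0 ≤ c) (hc1 : c ≤ 1) : c / 2 ≤ 1 - exp (-c) := by
  have h : exp (-c) ≤ (1 + c)⁻¹ := by
    rw [exp_neg]
    exact inv_anti₀ (by linarith) (by linarith [add_one_le_exp c])
  have h' : (1 + c)⁻¹ ≤ 1 - c / 2 := by
    rw [inv_le_iff_one_le_mul₀ (by linarith)]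
    nlinarith
  linarith

lemma exp_neg_mul_le_one_sub_mul (c : ℝ) {x : ℝ} (hx0 : 0 ≤ x) (hx1 : x ≤ 1) :
    exp (-(c * x)) ≤ 1 - (1 - exp (-c)) * x := by
  have h := convexOn_exp.2 (mem_univ 0) (mem_univ (-c)) (sub_nonneg.2 hx1) hx0 (by ring)
  simp only [smul_eq_mul, mul_zero, zero_add, exp_zero, mul_one, mul_neg] at h
  rw [mul_comm]
  linarith

lemma one_sub_exp_neg_mul_le {c p : ℝ} (hc0 : 0 ≤ c) (hc1 : c ≤ 1) (hp0 : 0 ≤ p) (hp1 : p ≤ 1) :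
    1 - exp (-(c * p)) ≤ (1 - exp (-c)) * (p + c * (p * (1 - p))) := by
  set a := 1 - exp (-c)
  let F : ℝ → ℝ := fun x => a * ((1 + c) * x - c * x ^ 2) - 1 + exp (-(c * x))
  have hF' (x : ℝ) : HasDerivAt F (a * ((1 + c) - c * (2 * x)) - c * exp (-(c * x))) x := by
    have hpoly := (((hasDerivAt_id x).const_mul (1 + c)).sub
      ((hasDerivAt_pow 2 x).const_mul c)).const_mul a
    have hexp := ((hasDerivAt_id x).const_mul c).neg.exp
    exact ((hpoly.sub_const 1).add hexp).congr_deriv (by simp; ring)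
  have hF'' (x : ℝ) : HasDerivAt (fun x => a * ((1 + c) - c * (2 * x)) - c * exp (-(c * x)))
      (c ^ 2 * exp (-(c * x)) - 2 * a * c) x := by
    have hlin := ((hasDerivAt_id x).const_mul 2 |>.const_mul c |>.const_sub (1 + c)).const_mul a
    have hexp := (((hasDerivAt_id x).const_mul c).neg.exp).const_mul c
    exact (hlin.sub hexp).congr_deriv (by simp; ring)
  -- `F'' ≤ c² - 2ac ≤ 0` because `c ≤ 2a`.
  have hconc : ConcaveOn ℝ (Icc 0 1) F := by
    refine concaveOn_of_hasDerivWithinAt2_nonpos (convex_Icc 0 1) (by fun_prop)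
      (fun x _ => (hF' x).hasDerivWithinAt) (fun x _ => (hF'' x).hasDerivWithinAt) ?_
    intro x hx
    rw [interior_Icc] at hx
    have : exp (-(c * x)) ≤ 1 := exp_le_one_iff.2 (by nlinarith [hx.1])
    nlinarith [half_le_one_sub_exp_neg hc0 hc1]
  have hFp : min (F 0) (F 1) ≤ F p := hconc.ge_on_segment (by simp) (by simp)
    (by rw [segment_eq_Icc zero_le_one]; exact ⟨hp0, hp1⟩)
  have hF0 : F 0 = 0 := by simp [F]
  have hF1 : F 1 = 0 := by simp [F, a]
  rw [hF0, hF1, min_self] at hFp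
  simp only [F] at hFp
  nlinarith

lemma exp_neg_mul_add_mul_sub_le (γ θ p : ℝ) {x : ℝ} (hx0 : 0 ≤ x) (hx1 : x ≤ 1) :
    exp (-γ * (p + θ * (x - p))) ≤ exp (γ * (θ - 1) * p) * (1 - (1 - exp (-(γ * θ))) * x) := by
  rw [show -γ * (p + θ * (x - p)) = γ * (θ - 1) * p + -(γ * θ * x) by ring, exp_add]
  exact mul_le_mul_of_nonneg_left (exp_neg_mul_le_one_sub_mul _ hx0 hx1) (exp_pos _).le

lemma exp_mul_one_sub_mul_le_exp_neg_mul {γ θ p e : ℝ} (hc0 : 0 ≤ γ * θ) (hc1 : γ * θ ≤ 1)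
    (hp0 : 0 ≤ p) (hp1 : p ≤ 1) (he : p + γ * θ * (p * (1 - p)) ≤ e) :
    exp (γ * (θ - 1) * p) * (1 - (1 - exp (-(γ * θ))) * e) ≤ exp (-γ * p) := by
  have ha : 0 ≤ 1 - exp (-(γ * θ)) := sub_nonneg.2 (exp_le_one_iff.2 (neg_nonpos.2 hc0))
  have hkey : 1 - (1 - exp (-(γ * θ))) * e ≤ exp (-(γ * θ * p)) := by
    nlinarith [mul_le_mul_of_nonneg_left he ha, one_sub_exp_neg_mul_le hc0 hc1 hp0 hp1]
  calc _ ≤ exp (γ * (θ - 1) * p) * exp (-(γ * θ * p)) :=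
        mul_le_mul_of_nonneg_left hkey (exp_pos _).le
    _ = exp (-γ * p) := by rw [← exp_add]; ring_nf

end Real

theorem eq_zero_or_one_of_summable {η δ p e : ℕ → ℝ} {l : ℝ} (hη : ∀ t, 0 ≤ η t)
    (hδ : ∀ t, 0 ≤ δ t) (hp : ∀ t, p t ∈ Icc 0 1) (he : ∀ t, e t ≤ 1)
    (hhaz : ∀ t, δ t * (p t * (1 - p t)) ≤ e t - p t)
    (hsum : Summable fun t => η t * min 1 (δ t) * (e t - p t))
    (hdiv : Tendsto (fun n => ∑ t ∈ Finset.range n, η t * δ t ^ 2) atTop atTop)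
    (hlim : Tendsto p atTop (𝓝 l)) : l = 0 ∨ l = 1 := by
  have hl : l ∈ Icc 0 1 := isClosed_Icc.mem_of_tendsto hlim (Eventually.of_forall hp)
  by_contra! hne
  have hl0 : 0 < l := hl.1.lt_of_ne' hne.1
  have hl1 : l < 1 := hl.2.lt_of_ne hne.2
  obtain ⟨a, ha, hal, hla⟩ : ∃ a, 0 < a ∧ a < l ∧ l < 1 - a :=
    ⟨min l (1 - l) / 2, by positivity, by linarith [min_le_left l (1 - l)],
      by linarith [min_le_right l (1 - l)]⟩
  -- While `p t ∈ (a, 1 - a)`, both `min 1 (δ t) ≥ a δ t` and `e t - p t ≥ a² δ t`.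
  have hbound : ∀ᶠ t in atTop,
      ‖η t * δ t ^ 2‖ ≤ (a ^ 3)⁻¹ * (η t * min 1 (δ t) * (e t - p t)) := by
    filter_upwards [hlim.eventually (Ioo_mem_nhds hal hla)] with t ⟨hpa, hpa'⟩
    have hδt := hδ t
    have hgap : δ t * (a * a) ≤ e t - p t :=
      (mul_le_mul_of_nonneg_left (by nlinarith) hδt).trans (hhaz t)
    have hδp : δ t * p t ≤ 1 := by nlinarith [hhaz t, he t]
    have hmin : a * δ t ≤ min 1 (δ t) := le_min (by nlinarith) (by nlinarith)
    rw [norm_of_nonneg (by have := hη t; positivity), le_inv_mul_iff₀ (by positivity)]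
    calc a ^ 3 * (η t * δ t ^ 2) = η t * ((a * δ t) * (δ t * (a * a))) := by ring
      _ ≤ η t * (min 1 (δ t) * (e t - p t)) := by
        gcongr
        exact hη t
      _ = η t * min 1 (δ t) * (e t - p t) := by ring
  exact not_tendsto_atTop_of_tendsto_nhds
    ((hsum.mul_left _).of_norm_bounded_eventually_nat hbound).tendsto_sum_tsum_nat hdiv

section Measure

variable {Ω : Type*} {m0 : MeasurableSpace Ω} {μ : Measure Ω}

theorem ae_norm_le_one_of_mem_Icc {f : Ω → ℝ} (hf : ∀ᵐ ω ∂μ, f ω ∈ Icc 0 1) :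
    ∀ᵐ ω ∂μ, ‖f ω‖ ≤ 1 :=
  hf.mono fun _ h => abs_le.2 ⟨by linarith [h.1], h.2⟩

theorem ae_summable_of_sum_integral_le {D : ℕ → Ω → ℝ} {R : ℝ} (hD : ∀ t, 0 ≤ᵐ[μ] D t)
    (hint : ∀ t, Integrable (D t) μ) (hR : ∀ n, ∑ t ∈ Finset.range n, ∫ ω, D t ω ∂μ ≤ R) :
    ∀ᵐ ω ∂μ, Summable fun t => D t ω := by
  have hmeas (t : ℕ) : AEMeasurable (fun ω => ENNReal.ofReal (D t ω)) μ :=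
    (hint t).aemeasurable.ennreal_ofReal
  have hlint : ∫⁻ ω, ∑' t, ENNReal.ofReal (D t ω) ∂μ ≠ ∞ := by
    rw [lintegral_tsum hmeas]
    refine ne_top_of_le_ne_top (ENNReal.ofReal_ne_top (r := R))
      (ENNReal.tsum_le_of_sum_range_le fun n => ?_)
    simp_rw [← ofReal_integral_eq_lintegral_ofReal (hint _) (hD _)]
    rw [← ENNReal.ofReal_sum_of_nonneg fun t _ => integral_nonneg_of_ae (hD t)]
    exact ENNReal.ofReal_le_ofReal (hR n)
  filter_upwards [ae_lt_top' (AEMeasurable.tsum hmeas) hlint, ae_all_iff.2 hD]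
    with ω hfin hnonneg
  simpa [ENNReal.toReal_ofReal (hnonneg _)] using ENNReal.summable_toReal hfin.ne

theorem measure_setOf_tendsto_one_le {f : ℕ → Ω → ℝ} {K : ℝ} (hmeas : ∀ t, Measurable (f t))
    (hnonneg : ∀ t, 0 ≤ᵐ[μ] f t) (hint : ∀ t, Integrable (f t) μ)
    (hK : ∀ t, ∫ ω, f t ω ∂μ ≤ K) :
    μ {ω | Tendsto (fun t => f t ω) atTop (𝓝 1)} ≤ ENNReal.ofReal K := by
  have hmeas' (t : ℕ) : Measurable fun ω => ENNReal.ofReal (f t ω) :=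
    ENNReal.measurable_ofReal.comp (hmeas t)
  calc μ {ω | Tendsto (fun t => f t ω) atTop (𝓝 1)}
      ≤ ∫⁻ ω, liminf (fun t => ENNReal.ofReal (f t ω)) atTop ∂μ := by
        refine meas_le_lintegral₀ (Measurable.liminf hmeas').aemeasurable fun ω hω => ?_
        rw [(ENNReal.tendsto_ofReal hω).liminf_eq, ENNReal.ofReal_one]
    _ ≤ liminf (fun t => ∫⁻ ω, ENNReal.ofReal (f t ω) ∂μ) atTop := lintegral_liminf_le hmeas'
    _ ≤ ENNReal.ofReal K := by
        refine liminf_le_of_frequently_le' (Frequently.of_forall fun t => ?_)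
        rw [← ofReal_integral_eq_lintegral_ofReal (hint t) (hnonneg t)]
        exact ENNReal.ofReal_le_ofReal (hK t)

theorem ofReal_one_sub_lt_measure [IsProbabilityMeasure μ] {s t : Set Ω} {ε : ℝ} (hε : ε ≤ 1)
    (hst : ∀ᵐ ω ∂μ, ω ∈ s ∨ ω ∈ t) (ht : μ t < ENNReal.ofReal ε) :
    ENNReal.ofReal (1 - ε) < μ s := by
  have hε0 : 0 < ε := ENNReal.ofReal_pos.1 (zero_le.trans_lt ht)
  have hsplit : ENNReal.ofReal (1 - ε) + ENNReal.ofReal ε = 1 := by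
    rw [← ENNReal.ofReal_add (by linarith) hε0.le, sub_add_cancel, ENNReal.ofReal_one]
  refine lt_of_add_lt_add_right (a := ENNReal.ofReal ε) ?_
  calc ENNReal.ofReal (1 - ε) + ENNReal.ofReal ε = μ univ := by rw [hsplit, measure_univ]
    _ ≤ μ (s ∪ t) := measure_mono_ae (hst.mono fun ω h _ => h)
    _ ≤ μ s + μ t := measure_union_le s t
    _ < μ s + ENNReal.ofReal ε := ENNReal.add_lt_add_left (measure_ne_top μ s) ht

theorem condExp_add_mul_ae_eq {m : MeasurableSpace Ω} [IsFiniteMeasure μ] (hm : m ≤ m0)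
    {a b X : Ω → ℝ} (ha : StronglyMeasurable[m] a) (ha_int : Integrable a μ)
    (hb : StronglyMeasurable[m] b) (hbX : Integrable (b * X) μ) (hX : Integrable X μ) :
    μ[a + b * X|m] =ᵐ[μ] a + b * μ[X|m] := by
  filter_upwards [condExp_add ha_int hbX m, condExp_mul_of_stronglyMeasurable_left hb hbX hX]
    with ω hadd hmul
  rw [hadd, Pi.add_apply, hmul, condExp_of_stronglyMeasurable hm ha ha_int, Pi.add_apply]

theorem MeasureTheory.Submartingale.ae_summable_condExp_sub [IsFiniteMeasure μ]
    {𝓕 : Filtration ℕ m0} {f : ℕ → Ω → ℝ} (hf : Submartingale f 𝓕 μ) {R : ℝ}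
    (hR : ∀ n, ∫ ω, f n ω ∂μ ≤ R) :
    ∀ᵐ ω ∂μ, Summable fun t => μ[f (t + 1)|𝓕 t] ω - f t ω := by
  have hincr (t : ℕ) :
      ∫ ω, μ[f (t + 1)|𝓕 t] ω - f t ω ∂μ = ∫ ω, f (t + 1) ω ∂μ - ∫ ω, f t ω ∂μ := by
    rw [integral_sub integrable_condExp (hf.integrable t), integral_condExp (𝓕.le t)]
  refine ae_summable_of_sum_integral_le (R := R - ∫ ω, f 0 ω ∂μ)
    (fun t => (hf.ae_le_condExp (Nat.le_succ t)).mono fun _ h => sub_nonneg.2 h)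
    (fun t => integrable_condExp.sub (hf.integrable t)) fun n => ?_
  rw [Finset.sum_congr rfl fun t _ => hincr t, Finset.sum_range_sub fun t => ∫ ω, f t ω ∂μ]
  linarith [hR n]

end Measure

/-- `θ t` plays the role of the paper's slowing factor `η_t θ_t`. -/
structure IsSlowUpdate {Ω : Type*} {m0 : MeasurableSpace Ω} (𝓕 : Filtration ℕ m0)
    (μ : Measure Ω) (P X θ : ℕ → Ω → ℝ) : Prop where
  stronglyMeasurable : ∀ t, StronglyMeasurable[𝓕 t] (P t)
  mem_Icc : ∀ t, ∀ᵐ ω ∂μ, P t ω ∈ Icc 0 1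
  stronglyMeasurable_rate : ∀ t, StronglyMeasurable[𝓕 t] (θ t)
  rate_mem_Icc : ∀ t, ∀ᵐ ω ∂μ, θ t ω ∈ Icc 0 1
  target_mem_Icc : ∀ t, ∀ᵐ ω ∂μ, X (t + 1) ω ∈ Icc 0 1
  integrable_target : ∀ t, Integrable (X (t + 1)) μ
  succ_ae_eq : ∀ t, ∀ᵐ ω ∂μ, P (t + 1) ω = P t ω + θ t ω * (X (t + 1) ω - P t ω)

namespace IsSlowUpdate

variable {Ω : Type*} {m0 : MeasurableSpace Ω} {μ : Measure Ω} {𝓕 : Filtration ℕ m0}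
  {P X θ : ℕ → Ω → ℝ}

theorem integrable_rate_mul (h : IsSlowUpdate 𝓕 μ P X θ) {Y : Ω → ℝ} (hY : Integrable Y μ)
    (t : ℕ) : Integrable (θ t * Y) μ :=
  hY.bdd_mul ((h.stronglyMeasurable_rate t).mono (𝓕.le t)).aestronglyMeasurable
    (ae_norm_le_one_of_mem_Icc (h.rate_mem_Icc t))

theorem stronglyMeasurable_exp_neg_mul (h : IsSlowUpdate 𝓕 μ P X θ) (γ : ℝ) (t : ℕ) :
    StronglyMeasurable[𝓕 t] fun ω => exp (-γ * P t ω) := by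
  have := h.stronglyMeasurable t
  fun_prop

section Finite

variable [IsFiniteMeasure μ]

theorem integrable (h : IsSlowUpdate 𝓕 μ P X θ) (t : ℕ) : Integrable (P t) μ :=
  .of_bound ((h.stronglyMeasurable t).mono (𝓕.le t)).aestronglyMeasurable 1
    (ae_norm_le_one_of_mem_Icc (h.mem_Icc t))

theorem condExp_target_le_one (h : IsSlowUpdate 𝓕 μ P X θ) (t : ℕ) :
    ∀ᵐ ω ∂μ, μ[X (t + 1)|𝓕 t] ω ≤ 1 := by
  have := condExp_mono (m := 𝓕 t) (h.integrable_target t) (integrable_const 1)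
    ((h.target_mem_Icc t).mono fun _ hω => hω.2)
  rwa [condExp_const (𝓕.le t)] at this

theorem condExp_succ_ae_eq (h : IsSlowUpdate 𝓕 μ P X θ) (t : ℕ) :
    μ[P (t + 1)|𝓕 t] =ᵐ[μ] fun ω => P t ω + θ t ω * (μ[X (t + 1)|𝓕 t] ω - P t ω) := by
  have hP := h.stronglyMeasurable t
  have hθ := h.stronglyMeasurable_rate t
  have hrec : P (t + 1) =ᵐ[μ] (P t - θ t * P t) + θ t * X (t + 1) := by
    filter_upwards [h.succ_ae_eq t] with ω hω
    simp only [Pi.add_apply, Pi.sub_apply, Pi.mul_apply, hω]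
    ring
  filter_upwards [condExp_congr_ae hrec, condExp_add_mul_ae_eq (𝓕.le t) (by fun_prop)
    ((h.integrable t).sub (h.integrable_rate_mul (h.integrable t) t)) hθ
    (h.integrable_rate_mul (h.integrable_target t) t) (h.integrable_target t)] with ω h₁ h₂
  rw [h₁, h₂]
  simp only [Pi.add_apply, Pi.sub_apply, Pi.mul_apply]
  ring

theorem submartingale (h : IsSlowUpdate 𝓕 μ P X θ)
    (hdrift : ∀ t, P t ≤ᵐ[μ] μ[X (t + 1)|𝓕 t]) : Submartingale P 𝓕 μ :=
  submartingale_nat h.stronglyMeasurable h.integrable fun t => by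
    filter_upwards [h.condExp_succ_ae_eq t, hdrift t, h.rate_mem_Icc t] with ω hcond hle hθ
    rw [hcond]
    exact le_add_of_nonneg_right (mul_nonneg hθ.1 (sub_nonneg.2 hle))

theorem integrable_exp_neg_mul (h : IsSlowUpdate 𝓕 μ P X θ) {γ : ℝ} (hγ : 0 ≤ γ) (t : ℕ) :
    Integrable (fun ω => exp (-γ * P t ω)) μ := by
  refine .of_bound ((h.stronglyMeasurable_exp_neg_mul γ t).mono (𝓕.le t)).aestronglyMeasurable
    1 ?_
  filter_upwards [h.mem_Icc t] with ω hω
  rw [norm_of_nonneg (exp_pos _).le]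
  exact exp_le_one_iff.2 (by nlinarith [hω.1])

/-- Convexity of `exp` bounds `exp (-γ P_{t+1})` by an affine function `A + B X_{t+1}` whose
coefficients are `𝓕 t`-measurable, and the conditional expectation passes through it. -/
theorem condExp_exp_neg_mul_succ_le (h : IsSlowUpdate 𝓕 μ P X θ) {γ : ℝ} (hγ : 0 ≤ γ) (t : ℕ) :
    μ[fun ω => exp (-γ * P (t + 1) ω)|𝓕 t] ≤ᵐ[μ] fun ω =>
      exp (γ * (θ t ω - 1) * P t ω) * (1 - (1 - exp (-(γ * θ t ω))) * μ[X (t + 1)|𝓕 t] ω) := by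
  have hP := h.stronglyMeasurable t
  have hθ := h.stronglyMeasurable_rate t
  set A : Ω → ℝ := fun ω => exp (γ * (θ t ω - 1) * P t ω)
  set B : Ω → ℝ := fun ω => -(A ω * (1 - exp (-(γ * θ t ω))))
  have hA : StronglyMeasurable[𝓕 t] A := by fun_prop
  have hB : StronglyMeasurable[𝓕 t] B := by fun_prop
  have hbound : ∀ᵐ ω ∂μ, ‖A ω‖ ≤ 1 ∧ ‖B ω‖ ≤ 1 := by
    filter_upwards [h.mem_Icc t, h.rate_mem_Icc t] with ω hPω hθω
    have hA1 : A ω ≤ 1 := exp_le_one_iff.2 (mul_nonpos_of_nonpos_of_nonneg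
      (mul_nonpos_of_nonneg_of_nonpos hγ (by linarith [hθω.2])) hPω.1)
    have hexp : exp (-(γ * θ t ω)) ≤ 1 := exp_le_one_iff.2 (by nlinarith [hθω.1])
    have hA0 : 0 < A ω := exp_pos _
    simp only [B, norm_neg, norm_mul, Real.norm_eq_abs, abs_of_pos hA0,
      abs_of_nonneg (sub_nonneg.2 hexp)]
    exact ⟨hA1, by nlinarith [exp_pos (-(γ * θ t ω))]⟩
  have hAint : Integrable A μ :=
    .of_bound (hA.mono (𝓕.le t)).aestronglyMeasurable 1 (hbound.mono fun _ h => h.1)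
  have hBX : Integrable (B * X (t + 1)) μ := (h.integrable_target t).bdd_mul
    (hB.mono (𝓕.le t)).aestronglyMeasurable (hbound.mono fun _ h => h.2)
  have hle : (fun ω => exp (-γ * P (t + 1) ω)) ≤ᵐ[μ] A + B * X (t + 1) := by
    filter_upwards [h.succ_ae_eq t, h.target_mem_Icc t] with ω hrec hX
    rw [hrec]
    convert exp_neg_mul_add_mul_sub_le γ (θ t ω) (P t ω) hX.1 hX.2 using 1
    simp only [Pi.add_apply, Pi.mul_apply, A, B]
    ring
  filter_upwards [condExp_mono (h.integrable_exp_neg_mul hγ (t + 1)) (hAint.add hBX) hle,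
    condExp_add_mul_ae_eq (𝓕.le t) hA hAint hB hBX (h.integrable_target t)] with ω h₁ h₂
  rw [h₂] at h₁
  simp only [Pi.add_apply, Pi.mul_apply, A, B] at h₁
  linarith

theorem supermartingale_exp_neg_mul (h : IsSlowUpdate 𝓕 μ P X θ) {γ : ℝ} (hγ : 0 ≤ γ)
    (hγθ : ∀ t, ∀ᵐ ω ∂μ, γ * θ t ω ≤ 1)
    (hhaz : ∀ t, ∀ᵐ ω ∂μ, P t ω + γ * θ t ω * (P t ω * (1 - P t ω)) ≤ μ[X (t + 1)|𝓕 t] ω) :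
    Supermartingale (fun t ω => exp (-γ * P t ω)) 𝓕 μ := by
  refine supermartingale_nat (h.stronglyMeasurable_exp_neg_mul γ) (h.integrable_exp_neg_mul hγ)
    fun t => ?_
  filter_upwards [h.condExp_exp_neg_mul_succ_le hγ t, h.mem_Icc t, h.rate_mem_Icc t, hγθ t,
    hhaz t] with ω hle hP hθ hγθ hhaz
  exact hle.trans (exp_mul_one_sub_mul_le_exp_neg_mul (mul_nonneg hγ hθ.1) hγθ hP.1 hP.2 hhaz)

theorem measure_tendsto_zero_le (h : IsSlowUpdate 𝓕 μ P X θ) {γ : ℝ} (hγ : 0 ≤ γ)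
    (hγθ : ∀ t, ∀ᵐ ω ∂μ, γ * θ t ω ≤ 1)
    (hhaz : ∀ t, ∀ᵐ ω ∂μ, P t ω + γ * θ t ω * (P t ω * (1 - P t ω)) ≤ μ[X (t + 1)|𝓕 t] ω) :
    μ {ω | Tendsto (fun t => P t ω) atTop (𝓝 0)} ≤
      ENNReal.ofReal (∫ ω, exp (-γ * P 0 ω) ∂μ) := by
  refine (measure_mono fun ω hω => ?_).trans (measure_setOf_tendsto_one_le
    (fun t => ((h.stronglyMeasurable_exp_neg_mul γ t).mono (𝓕.le t)).measurable)
    (fun t => ae_of_all _ fun ω => (exp_pos _).le) (h.integrable_exp_neg_mul hγ) fun t => ?_)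
  · have := (continuous_exp.tendsto _).comp (hω.const_mul (-γ))
    rwa [mul_zero, exp_zero] at this
  · simpa using (h.supermartingale_exp_neg_mul hγ hγθ hhaz).setIntegral_le (Nat.zero_le t)
      MeasurableSet.univ

end Finite

section Probability

variable [IsProbabilityMeasure μ]

theorem integral_le_one (h : IsSlowUpdate 𝓕 μ P X θ) (t : ℕ) : ∫ ω, P t ω ∂μ ≤ 1 :=
  (integral_mono_ae (h.integrable t) (integrable_const 1)
    ((h.mem_Icc t).mono fun _ hω => hω.2)).trans_eq (by simp)

theorem ae_exists_tendsto (h : IsSlowUpdate 𝓕 μ P X θ)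
    (hdrift : ∀ t, P t ≤ᵐ[μ] μ[X (t + 1)|𝓕 t]) :
    ∀ᵐ ω ∂μ, ∃ l, Tendsto (fun t => P t ω) atTop (𝓝 l) :=
  (h.submartingale hdrift).exists_ae_tendsto_of_bdd (R := 1) fun t => by
    simpa using eLpNorm_le_of_ae_bound (p := 1) (ae_norm_le_one_of_mem_Icc (h.mem_Icc t))

theorem ae_summable_drift (h : IsSlowUpdate 𝓕 μ P X θ)
    (hdrift : ∀ t, P t ≤ᵐ[μ] μ[X (t + 1)|𝓕 t]) :
    ∀ᵐ ω ∂μ, Summable fun t => θ t ω * (μ[X (t + 1)|𝓕 t] ω - P t ω) := by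
  filter_upwards [(h.submartingale hdrift).ae_summable_condExp_sub h.integral_le_one,
    ae_all_iff.2 h.condExp_succ_ae_eq] with ω hsum hcond
  refine hsum.congr fun t => ?_
  rw [hcond t]
  ring

theorem ae_tendsto_one_or_zero (h : IsSlowUpdate 𝓕 μ P X θ) {γ : ℝ} {η δ : ℕ → Ω → ℝ}
    (hθ : ∀ t ω, γ * θ t ω = η t ω * min 1 (δ t ω)) (hη : ∀ t, ∀ᵐ ω ∂μ, 0 ≤ η t ω)
    (hδ : ∀ t, ∀ᵐ ω ∂μ, 0 ≤ δ t ω)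
    (hhaz : ∀ t, ∀ᵐ ω ∂μ, δ t ω * (P t ω * (1 - P t ω)) ≤ μ[X (t + 1)|𝓕 t] ω - P t ω)
    (hdiv : ∀ᵐ ω ∂μ, Tendsto (fun n => ∑ t ∈ Finset.range n, η t ω * δ t ω ^ 2) atTop atTop) :
    ∀ᵐ ω ∂μ, Tendsto (P · ω) atTop (𝓝 1) ∨ Tendsto (P · ω) atTop (𝓝 0) := by
  have hdrift (t : ℕ) : P t ≤ᵐ[μ] μ[X (t + 1)|𝓕 t] := by
    filter_upwards [hhaz t, hδ t, h.mem_Icc t] with ω hhaz hδ hP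
    nlinarith [mul_nonneg hδ (mul_nonneg hP.1 (sub_nonneg.2 hP.2))]
  filter_upwards [h.ae_exists_tendsto hdrift, h.ae_summable_drift hdrift, hdiv,
    ae_all_iff.2 hη, ae_all_iff.2 hδ, ae_all_iff.2 h.mem_Icc,
    ae_all_iff.2 h.condExp_target_le_one, ae_all_iff.2 hhaz]
    with ω ⟨l, hl⟩ hsum hdiv hη hδ hP hE hhaz
  have hsum' : Summable fun t => η t ω * min 1 (δ t ω) * (μ[X (t + 1)|𝓕 t] ω - P t ω) :=
    (Summable.mul_left γ hsum).congr fun t => by rw [← hθ, mul_assoc]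
  rcases eq_zero_or_one_of_summable hη hδ hP hE hhaz hsum' hdiv hl with rfl | rfl
  exacts [Or.inr hl, Or.inl hl]

end Probability

end IsSlowUpdate

theorem stmt4_general {Ω : Type*} {m : MeasurableSpace Ω} {μ : Measure Ω} [IsProbabilityMeasure μ]
    (𝓕 : Filtration ℕ m) (δ η P X : ℕ → Ω → ℝ) (p₀ ε : ℝ) (γ' : ℕ)
    (hδ_meas : ∀ t, StronglyMeasurable[𝓕 t] (δ t))
    (hδ_nonneg : ∀ t, ∀ᵐ ω ∂μ, 0 ≤ δ t ω)
    (hε : ε ∈ Set.Ioo (0 : ℝ) 1)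
    (hγ'_pos : 0 < γ')
    (hγ' : Real.exp (-(γ' : ℝ) * p₀) < ε)
    (hη_meas : ∀ t, StronglyMeasurable[𝓕 t] (η t))
    (hη_mem : ∀ t, ∀ᵐ ω ∂μ, η t ω ∈ Set.Ioc (0 : ℝ) 1)
    (hηδ : ∀ᵐ ω ∂μ,
      Tendsto (fun n => ∑ t ∈ Finset.range n, η t ω * (δ t ω) ^ 2) atTop atTop)
    (hP_adapted : ∀ t, StronglyMeasurable[𝓕 t] (P t))
    (hP_mem : ∀ t, ∀ᵐ ω ∂μ, P t ω ∈ Set.Icc (0 : ℝ) 1)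
    (hP0 : ∀ ω, P 0 ω = p₀)
    (hX_mem : ∀ t : ℕ, ∀ᵐ ω ∂μ, X (t + 1) ω ∈ Set.Icc (0 : ℝ) 1)
    (hX_int : ∀ t : ℕ, Integrable (X (t + 1)) μ)
    (hhaz : ∀ t, ∀ᵐ ω ∂μ,
      δ t ω * (P t ω * (1 - P t ω)) ≤ (μ[X (t + 1)|𝓕 t]) ω - P t ω)
    (hrec : ∀ t, ∀ᵐ ω ∂μ,
      P (t + 1) ω = P t ω + η t ω * (min 1 (δ t ω) / (γ' : ℝ)) * (X (t + 1) ω - P t ω)) :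
    (∀ᵐ ω ∂μ, ∃ l : ℝ, Tendsto (fun t => P t ω) atTop (nhds l)) ∧
      ENNReal.ofReal (1 - ε) < μ {ω | Tendsto (fun t => P t ω) atTop (nhds 1)} := by
  have hγ : (1 : ℝ) ≤ γ' := Nat.one_le_cast.2 hγ'_pos
  set θ : ℕ → Ω → ℝ := fun t ω => η t ω * (min 1 (δ t ω) / γ')
  have hγθ (t : ℕ) (ω : Ω) : γ' * θ t ω = η t ω * min 1 (δ t ω) := by
    simp only [θ]
    field_simp
  have hθ (t : ℕ) : ∀ᵐ ω ∂μ, θ t ω ∈ Icc 0 1 ∧ γ' * θ t ω ≤ 1 := by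
    filter_upwards [hη_mem t, hδ_nonneg t] with ω hη hδ
    have := hγθ t ω
    refine ⟨⟨?_, ?_⟩, ?_⟩ <;> nlinarith [le_min zero_le_one hδ, min_le_left 1 (δ t ω), hη.1, hη.2]
  have hslow : IsSlowUpdate 𝓕 μ P X θ :=
    ⟨hP_adapted, hP_mem, fun t => by have := hη_meas t; have := hδ_meas t; fun_prop,
      fun t => (hθ t).mono fun _ h => h.1, hX_mem, hX_int, hrec⟩
  have hdrift (t : ℕ) :
      ∀ᵐ ω ∂μ, P t ω + γ' * θ t ω * (P t ω * (1 - P t ω)) ≤ μ[X (t + 1)|𝓕 t] ω := by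
    filter_upwards [hη_mem t, hδ_nonneg t, hhaz t, hP_mem t] with ω hη hδ hhaz hP
    have hle : η t ω * min 1 (δ t ω) ≤ δ t ω :=
      (mul_le_of_le_one_left (le_min zero_le_one hδ) hη.2).trans (min_le_right 1 (δ t ω))
    rw [hγθ]
    nlinarith [mul_le_mul_of_nonneg_right hle (mul_nonneg hP.1 (sub_nonneg.2 hP.2))]
  have hcover := hslow.ae_tendsto_one_or_zero hγθ (fun t => (hη_mem t).mono fun _ h => h.1.le)
    hδ_nonneg hhaz hηδ
  have h0 : μ {ω | Tendsto (P · ω) atTop (𝓝 0)} < ENNReal.ofReal ε := by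
    refine (hslow.measure_tendsto_zero_le (by positivity) (fun t => (hθ t).mono fun _ h => h.2)
      hdrift).trans_lt ?_
    simpa [hP0] using (ENNReal.ofReal_lt_ofReal_iff hε.1).2 hγ'
  exact ⟨hcover.mono fun ω h => h.elim (⟨1, ·⟩) (⟨0, ·⟩),
    ofReal_one_sub_lt_measure hε.2.le hcover h0⟩

/-- Theorem 1 (slow versions achieve optimality with high probability): if the unslowed
updates `X_{t+1}` satisfy the WBERHR inequality with nonnegative `F_t`-measurable lower
bounds `δ_t` such that `Σ δ_t² = ∞` a.s., `γ'` is the smallest positive integer with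
`e^{−γ' p₀} < ε`, `θ_t = min(1,δ_t)/γ'`, and `η_t ∈ (0,1]` are `F_t`-measurable with
`Σ η_t δ_t² = ∞` a.s., then the slow version
`P_{t+1} = P_t + η_t θ_t (X_{t+1} − P_t)`, `P₀ = p₀ ∈ (0,1]`, converges a.s. and
`ℙ(lim P_t = 1) > 1 − ε`. -/
theorem stmt4 {Ω : Type*} {m : MeasurableSpace Ω} {μ : Measure Ω} [IsProbabilityMeasure μ]
    (𝓕 : Filtration ℕ m) (δ η P X : ℕ → Ω → ℝ) (p₀ ε : ℝ) (γ' : ℕ)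
    (hδ_meas : ∀ t, StronglyMeasurable[𝓕 t] (δ t))
    (hδ_nonneg : ∀ t, ∀ᵐ ω ∂μ, 0 ≤ δ t ω)
    (hδ_sq : ∀ᵐ ω ∂μ,
      Tendsto (fun n => ∑ t ∈ Finset.range n, (δ t ω) ^ 2) atTop atTop)
    (hp₀ : p₀ ∈ Set.Ioc (0 : ℝ) 1) (hε : ε ∈ Set.Ioo (0 : ℝ) 1)
    (hγ'_pos : 0 < γ')
    (hγ' : Real.exp (-(γ' : ℝ) * p₀) < ε)
    (hγ'_min : ∀ k : ℕ, 0 < k → Real.exp (-(k : ℝ) * p₀) < ε → γ' ≤ k)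
    (hη_meas : ∀ t, StronglyMeasurable[𝓕 t] (η t))
    (hη_mem : ∀ t, ∀ᵐ ω ∂μ, η t ω ∈ Set.Ioc (0 : ℝ) 1)
    (hηδ : ∀ᵐ ω ∂μ,
      Tendsto (fun n => ∑ t ∈ Finset.range n, η t ω * (δ t ω) ^ 2) atTop atTop)
    (hP_adapted : ∀ t, StronglyMeasurable[𝓕 t] (P t))
    (hP_mem : ∀ t, ∀ᵐ ω ∂μ, P t ω ∈ Set.Icc (0 : ℝ) 1)
    (hP0 : ∀ ω, P 0 ω = p₀)
    (hX_meas : ∀ t : ℕ, StronglyMeasurable[𝓕 (t + 1)] (X (t + 1)))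
    (hX_mem : ∀ t : ℕ, ∀ᵐ ω ∂μ, X (t + 1) ω ∈ Set.Icc (0 : ℝ) 1)
    (hX_int : ∀ t : ℕ, Integrable (X (t + 1)) μ)
    (hhaz : ∀ t, ∀ᵐ ω ∂μ,
      δ t ω * (P t ω * (1 - P t ω)) ≤ (μ[X (t + 1)|𝓕 t]) ω - P t ω)
    (hrec : ∀ t, ∀ᵐ ω ∂μ,
      P (t + 1) ω = P t ω + η t ω * (min 1 (δ t ω) / (γ' : ℝ)) * (X (t + 1) ω - P t ω)) :
    (∀ᵐ ω ∂μ, ∃ l : ℝ, Tendsto (fun t => P t ω) atTop (nhds l)) ∧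
      ENNReal.ofReal (1 - ε) < μ {ω | Tendsto (fun t => P t ω) atTop (nhds 1)} :=
  stmt4_general 𝓕 δ η P X p₀ ε γ' hδ_meas hδ_nonneg hε hγ'_pos hγ' hη_meas hη_mem hηδ hP_adapted
    hP_mem hP0 hX_mem hX_int hhaz hrec
end

section
/- Let (F_t)_{t∈ℕ₀} be a filtration and let P = (P_t)_{t∈ℕ₀} be a [0,1]-valued adapted process with P₀ > 0 a constant, such that for every t there is a [0,1]-valued F_{t+1}-measurable random variable X_{t+1} with P_{t+1} = P_t + (1/(t+2))·(X_{t+1} − P_t) and E_t[X_{t+1}] ≥ P_t almost surely. Fix y > 0 and define the stopping time ρ := min{ t ∈ ℕ₀ : P_t ≥ y/(t+2) } (with min ∅ := ∞). Then ℙ(ρ < ∞) = 1. -/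
open MeasureTheory Filter Set

/-! The rescaled process `Q_t = (t + 1) P_t` satisfies `Q_{t+1} = Q_t + X_{t+1}` and hence
`Q_t ≥ P₀`, so the conditional drift `E_t[X_{t+1}] ≥ P_t ≥ P₀ / (t + 1)` has divergent sum.
On the event `T` that `Q` stays below `y` forever, the increments `X_{s+1}` collected while
`Q_s < y` add up to at most `y + 1` pathwise, while in expectation they add up to at least
`μ(T) · P₀ · ∑ 1/(s+1) = ∞`; hence `μ(T) = 0`. -/

theorem sum_ite_lt_le_min_sub_min {q x : ℕ → ℝ} (y : ℝ)
    (hq : ∀ s, q (s + 1) = q s + x (s + 1)) (hx : ∀ s, x (s + 1) ∈ Icc (0 : ℝ) 1) (n : ℕ) :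
    ∑ s ∈ Finset.range n, (if q s < y then x (s + 1) else 0)
      ≤ min (q n) (y + 1) - min (q 0) (y + 1) := by
  induction n with
  | zero => simp
  | succ n ih =>
    rw [Finset.sum_range_succ, hq n]
    obtain ⟨hx0, hx1⟩ := hx n
    split_ifs with h
    · rw [min_eq_left (by linarith : q n ≤ y + 1)] at ih
      rw [min_eq_left (by linarith : q n + x (n + 1) ≤ y + 1)]
      linarith
    · linarith [min_le_min_right (y + 1) (le_add_of_nonneg_right hx0 : q n ≤ q n + x (n + 1))]

theorem eq_zero_of_sum_mul_le {d : ℕ → ℝ} {a B : ℝ} (ha : 0 ≤ a)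
    (hd : Tendsto (fun n ↦ ∑ s ∈ Finset.range n, d s) atTop atTop)
    (hB : ∀ n, (∑ s ∈ Finset.range n, d s) * a ≤ B) : a = 0 := by
  by_contra ha0
  obtain ⟨n, hn⟩ := ((hd.atTop_mul_const (ha.lt_of_ne' ha0)).eventually_gt_atTop B).exists
  exact (hB n).not_gt hn

section

variable {Ω : Type*} {m₀ : MeasurableSpace Ω} {μ : Measure Ω} [IsFiniteMeasure μ]

theorem mul_measureReal_le_setIntegral_of_le_condExp {m : MeasurableSpace Ω} (hm : m ≤ m₀)
    {f : Ω → ℝ} {c : ℝ} {s : Set Ω} (hf : Integrable f μ) (hc : ∀ᵐ ω ∂μ, c ≤ μ[f|m] ω)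
    (hs : MeasurableSet[m] s) :
    c * μ.real s ≤ ∫ ω in s, f ω ∂μ :=
  calc c * μ.real s = ∫ _ in s, c ∂μ := by rw [setIntegral_const, smul_eq_mul, mul_comm]
    _ ≤ ∫ ω in s, μ[f|m] ω ∂μ :=
      setIntegral_mono_ae (integrableOn_const (measure_ne_top μ s))
        integrable_condExp.integrableOn hc
    _ = ∫ ω in s, f ω ∂μ := setIntegral_condExp hm hf hs

theorem sum_setIntegral_lt_le {Q X : ℕ → Ω → ℝ} {y : ℝ}
    (hA : ∀ s, MeasurableSet {ω | Q s ω < y}) (hQ₀ : ∀ᵐ ω ∂μ, 0 ≤ Q 0 ω)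
    (hQ_rec : ∀ t, ∀ᵐ ω ∂μ, Q (t + 1) ω = Q t ω + X (t + 1) ω)
    (hX_int : ∀ t, Integrable (X (t + 1)) μ)
    (hX_mem : ∀ t, ∀ᵐ ω ∂μ, X (t + 1) ω ∈ Icc (0 : ℝ) 1) (n : ℕ) :
    ∑ s ∈ Finset.range n, ∫ ω in {ω | Q s ω < y}, X (s + 1) ω ∂μ ≤ (|y| + 1) * μ.real univ := by
  have hint : ∀ s, Integrable ({ω | Q s ω < y}.indicator (X (s + 1))) μ :=
    fun s ↦ (hX_int s).indicator (hA s)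
  have hpath : ∀ᵐ ω ∂μ,
      ∑ s ∈ Finset.range n, {ω | Q s ω < y}.indicator (X (s + 1)) ω ≤ |y| + 1 := by
    filter_upwards [hQ₀, ae_all_iff.2 hQ_rec, ae_all_iff.2 hX_mem] with ω h₀ hrec hx
    simp only [indicator_apply, mem_ofPred_eq]
    have hlow : y - |y| ≤ min (Q 0 ω) (y + 1) :=
      le_min (by linarith [le_abs_self y]) (by linarith [abs_nonneg y])
    linarith [sum_ite_lt_le_min_sub_min (q := (Q · ω)) (x := (X · ω)) y hrec hx n,
      min_le_right (Q n ω) (y + 1)]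
  calc ∑ s ∈ Finset.range n, ∫ ω in {ω | Q s ω < y}, X (s + 1) ω ∂μ
      = ∫ ω, ∑ s ∈ Finset.range n, {ω | Q s ω < y}.indicator (X (s + 1)) ω ∂μ := by
        rw [integral_finsetSum _ fun s _ ↦ hint s]
        simp only [integral_indicator (hA _)]
    _ ≤ ∫ _, (|y| + 1) ∂μ :=
        integral_mono_ae (integrable_finsetSum _ fun s _ ↦ hint s) (integrable_const _) hpath
    _ = (|y| + 1) * μ.real univ := by rw [integral_const, smul_eq_mul, mul_comm]

theorem ae_exists_le_of_le_condExp (𝓕 : Filtration ℕ m₀) {Q X : ℕ → Ω → ℝ} {d : ℕ → ℝ}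
    (hQ : ∀ t, StronglyMeasurable[𝓕 t] (Q t)) (hQ₀ : ∀ᵐ ω ∂μ, 0 ≤ Q 0 ω)
    (hQ_rec : ∀ t, ∀ᵐ ω ∂μ, Q (t + 1) ω = Q t ω + X (t + 1) ω)
    (hX_int : ∀ t, Integrable (X (t + 1)) μ)
    (hX_mem : ∀ t, ∀ᵐ ω ∂μ, X (t + 1) ω ∈ Icc (0 : ℝ) 1)
    (hd_nonneg : ∀ t, 0 ≤ d t) (hd : ∀ t, ∀ᵐ ω ∂μ, d t ≤ μ[X (t + 1)|𝓕 t] ω)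
    (hd_sum : Tendsto (fun n ↦ ∑ t ∈ Finset.range n, d t) atTop atTop) (y : ℝ) :
    ∀ᵐ ω ∂μ, ∃ t, y ≤ Q t ω := by
  have hA𝓕 : ∀ s, MeasurableSet[𝓕 s] {ω | Q s ω < y} :=
    fun s ↦ measurableSet_lt (hQ s).measurable measurable_const
  set T := ⋂ s, {ω | Q s ω < y}
  have hT : μ.real T = 0 := by
    refine eq_zero_of_sum_mul_le (B := (|y| + 1) * μ.real univ) measureReal_nonneg hd_sum
      fun n ↦ ?_
    calc (∑ s ∈ Finset.range n, d s) * μ.real T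
        = ∑ s ∈ Finset.range n, d s * μ.real T := Finset.sum_mul ..
      _ ≤ ∑ s ∈ Finset.range n, ∫ ω in {ω | Q s ω < y}, X (s + 1) ω ∂μ :=
          Finset.sum_le_sum fun s _ ↦
            (mul_le_mul_of_nonneg_left (measureReal_mono (iInter_subset _ s)) (hd_nonneg s)).trans
              (mul_measureReal_le_setIntegral_of_le_condExp (𝓕.le s) (hX_int s) (hd s) (hA𝓕 s))
      _ ≤ (|y| + 1) * μ.real univ :=
          sum_setIntegral_lt_le (fun s ↦ 𝓕.le s _ (hA𝓕 s)) hQ₀ hQ_rec hX_int hX_mem n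
  filter_upwards [measure_eq_zero_iff_ae_notMem.1 ((measureReal_eq_zero_iff).1 hT)] with ω hω
  simpa [T] using hω

end

theorem stmt8_general {Ω : Type*} {m : MeasurableSpace Ω} {μ : Measure Ω} [IsProbabilityMeasure μ]
    (𝓕 : Filtration ℕ m) (P X : ℕ → Ω → ℝ) (p₀ : ℝ) (hp₀ : 0 < p₀)
    (hP0 : ∀ ω, P 0 ω = p₀)
    (hP_adapted : ∀ t, StronglyMeasurable[𝓕 t] (P t))
    (hX_mem : ∀ t : ℕ, ∀ᵐ ω ∂μ, X (t + 1) ω ∈ Set.Icc (0 : ℝ) 1)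
    (hX_int : ∀ t : ℕ, Integrable (X (t + 1)) μ)
    (hrec : ∀ t : ℕ, ∀ᵐ ω ∂μ,
      P (t + 1) ω = P t ω + (1 / ((t : ℝ) + 2)) * (X (t + 1) ω - P t ω))
    (hsub : ∀ t, ∀ᵐ ω ∂μ, P t ω ≤ (μ[X (t + 1)|𝓕 t]) ω)
    (y : ℝ) (hy : 0 < y) :
    ∀ᵐ ω ∂μ, ∃ t : ℕ, y / ((t : ℝ) + 2) ≤ P t ω := by
  set Q : ℕ → Ω → ℝ := fun t ω ↦ ((t : ℝ) + 1) * P t ω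
  have hQ_rec : ∀ t, ∀ᵐ ω ∂μ, Q (t + 1) ω = Q t ω + X (t + 1) ω := fun t ↦
    (hrec t).mono fun ω h ↦ by
      simp only [Q, h, Nat.cast_succ]
      field_simp
      ring
  have hQ_ge : ∀ᵐ ω ∂μ, ∀ t, p₀ ≤ Q t ω := by
    filter_upwards [ae_all_iff.2 hQ_rec, ae_all_iff.2 hX_mem] with ω hQω hXω t
    induction t with
    | zero => simp [Q, hP0]
    | succ t ih => linarith [hQω t, (hXω t).1]
  have hdrift : ∀ t : ℕ, ∀ᵐ ω ∂μ, p₀ / ((t : ℝ) + 1) ≤ μ[X (t + 1)|𝓕 t] ω := fun t ↦ by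
    filter_upwards [hQ_ge, hsub t] with ω hω hPω
    rw [div_le_iff₀ (by positivity), mul_comm]
    exact (hω t).trans (mul_le_mul_of_nonneg_left hPω (by positivity))
  have hharmonic : Tendsto (fun n ↦ ∑ t ∈ Finset.range n, p₀ / ((t : ℝ) + 1)) atTop atTop := by
    simpa only [Finset.mul_sum, mul_one_div] using
      Real.tendsto_sum_range_one_div_nat_succ_atTop.const_mul_atTop hp₀
  filter_upwards [ae_exists_le_of_le_condExp 𝓕 (Q := Q)
    (fun t ↦ (hP_adapted t).const_mul _) (ae_of_all _ fun ω ↦ by simp [Q, hP0, hp₀.le])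
    hQ_rec hX_int hX_mem (fun t ↦ by positivity) hdrift hharmonic y] with ω ⟨t, ht⟩
  refine ⟨t, ?_⟩
  calc y / ((t : ℝ) + 2) ≤ y / ((t : ℝ) + 1) := by gcongr; linarith
    _ ≤ P t ω := by rwa [div_le_iff₀ (by positivity), mul_comm]

/-- Arbitrary slowing down over time for `θ_t = 1/(t+2)`: if `P` is a `[0,1]`-valued
adapted process with `P₀ > 0` constant, `P_{t+1} = P_t + (1/(t+2))·(X_{t+1} − P_t)` with
`E_t[X_{t+1}] ≥ P_t` a.s., then for every `y > 0` the stopping time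
`ρ = min{t : P_t ≥ y/(t+2)}` is almost surely finite. -/
theorem stmt8 {Ω : Type*} {m : MeasurableSpace Ω} {μ : Measure Ω} [IsProbabilityMeasure μ]
    (𝓕 : Filtration ℕ m) (P X : ℕ → Ω → ℝ) (p₀ : ℝ) (hp₀ : 0 < p₀)
    (hP0 : ∀ ω, P 0 ω = p₀)
    (hP_adapted : ∀ t, StronglyMeasurable[𝓕 t] (P t))
    (hP_mem : ∀ t, ∀ᵐ ω ∂μ, P t ω ∈ Set.Icc (0 : ℝ) 1)
    (hX_meas : ∀ t : ℕ, StronglyMeasurable[𝓕 (t + 1)] (X (t + 1)))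
    (hX_mem : ∀ t : ℕ, ∀ᵐ ω ∂μ, X (t + 1) ω ∈ Set.Icc (0 : ℝ) 1)
    (hX_int : ∀ t : ℕ, Integrable (X (t + 1)) μ)
    (hrec : ∀ t : ℕ, ∀ᵐ ω ∂μ,
      P (t + 1) ω = P t ω + (1 / ((t : ℝ) + 2)) * (X (t + 1) ω - P t ω))
    (hsub : ∀ t, ∀ᵐ ω ∂μ, P t ω ≤ (μ[X (t + 1)|𝓕 t]) ω)
    (y : ℝ) (hy : 0 < y) :
    ∀ᵐ ω ∂μ, ∃ t : ℕ, y / ((t : ℝ) + 2) ≤ P t ω :=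
  stmt8_general 𝓕 P X p₀ hp₀ hP0 hP_adapted hX_mem hX_int hrec hsub y hy
end

section
/- Let X = [x_min, x_max] ⊂ ℝ with −∞ < x_min < x_max < ∞, let g: X² → [−1,1] be a measurable symmetric-switch function, and let X and Y be independent X-valued random variables such that X first-order stochastically dominates Y. Then E[ g(Y, X) ] ≥ 0. -/
open MeasureTheory ProbabilityTheory Set

/-! If `X` dominates `Y`, then for every `y` the monotone function `x ↦ g(y, x)` has a larger
mean under the law of `X` than under the law of `Y`; integrating in `y`, `E[g(Y, X)]` dominates
`E[g(Y, Y')]` for an independent copy `Y'` of `Y`, which vanishes by antisymmetry. The comparison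
of means goes through the layer-cake formula, since the superlevel sets of a monotone function are
upper sets, i.e. half-lines. -/

section StochasticOrder

variable {μ ν : Measure ℝ}

lemma measure_Iio_le_of_measure_Iic_le (h : ∀ z, μ (Iic z) ≤ ν (Iic z)) (c : ℝ) :
    μ (Iio c) ≤ ν (Iio c) := by
  obtain ⟨u, hu_mono, hu_lt, hu_lim⟩ := exists_seq_strictMono_tendsto c
  have hIic_mono : Monotone fun n => Iic (u n) := fun _ _ hmn =>
    Iic_subset_Iic.2 (hu_mono.monotone hmn)
  rw [← iUnion_Iic_eq_Iio_of_lt_of_tendsto hu_lt hu_lim, hIic_mono.measure_iUnion,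
    hIic_mono.measure_iUnion]
  exact iSup_mono fun n => h (u n)

lemma measure_le_of_isUpperSet_of_measure_Iic_le [IsProbabilityMeasure μ] [IsProbabilityMeasure ν]
    (h : ∀ z, ν (Iic z) ≤ μ (Iic z)) {S : Set ℝ} (hS : IsUpperSet S) : μ S ≤ ν S := by
  rcases S.eq_empty_or_nonempty with rfl | hne
  · simp
  by_cases hbdd : BddBelow S
  swap
  · have : S = univ := eq_univ_of_forall fun x => by
      obtain ⟨s, hs, hsx⟩ := not_bddBelow_iff.mp hbdd x
      exact hS hsx.le hs
    simp [this]
  set c := sInf S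
  have hIoi : Ioi c ⊆ S := fun x hx => by
    obtain ⟨s, hs, hsx⟩ := exists_lt_of_csInf_lt hne hx
    exact hS hsx.le hs
  have hIci : S ⊆ Ici c := fun x hx => csInf_le hbdd hx
  by_cases hc : c ∈ S
  · rw [Subset.antisymm hIci (hS.Ici_subset hc), ← compl_Iio,
      prob_compl_eq_one_sub measurableSet_Iio, prob_compl_eq_one_sub measurableSet_Iio]
    exact tsub_le_tsub_left (measure_Iio_le_of_measure_Iic_le h c) 1
  · have hS_eq : S = Ioi c := Subset.antisymm
      (fun x hx => (hIci hx).lt_of_ne fun hcx : c = x => hc (hcx ▸ hx)) hIoi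
    rw [hS_eq, ← compl_Iic,
      prob_compl_eq_one_sub measurableSet_Iic, prob_compl_eq_one_sub measurableSet_Iic]
    exact tsub_le_tsub_left (h c) 1

end StochasticOrder

lemma integral_le_integral_of_forall_measure_lt_le {α : Type*} [MeasurableSpace α]
    {μ ν : Measure α} {f : α → ℝ} (hf_nonneg : 0 ≤ f) (hf_meas : Measurable f)
    (hf_int : Integrable f ν) (h : ∀ t, μ {a | t < f a} ≤ ν {a | t < f a}) :
    ∫ a, f a ∂μ ≤ ∫ a, f a ∂ν := by
  have hf_nonneg_ae : ∀ ρ : Measure α, 0 ≤ᵐ[ρ] f := fun ρ => ae_of_all ρ hf_nonneg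
  have hlintegral : ∫⁻ a, ENNReal.ofReal (f a) ∂μ ≤ ∫⁻ a, ENNReal.ofReal (f a) ∂ν := by
    rw [lintegral_eq_lintegral_meas_lt μ (hf_nonneg_ae μ) hf_meas.aemeasurable,
      lintegral_eq_lintegral_meas_lt ν (hf_nonneg_ae ν) hf_meas.aemeasurable]
    exact lintegral_mono fun t => h t
  rw [integral_eq_lintegral_of_nonneg_ae (hf_nonneg_ae μ) hf_meas.aestronglyMeasurable,
    integral_eq_lintegral_of_nonneg_ae (hf_nonneg_ae ν) hf_meas.aestronglyMeasurable]
  exact ENNReal.toReal_mono hf_int.lintegral_lt_top.ne hlintegral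

lemma integral_le_integral_of_monotone {μ ν : Measure ℝ} [IsProbabilityMeasure μ]
    [IsProbabilityMeasure ν] (hle : ∀ z, ν (Iic z) ≤ μ (Iic z)) {h : ℝ → ℝ} (hh : Monotone h)
    {C : ℝ} (hC : ∀ x, |h x| ≤ C) : ∫ x, h x ∂μ ≤ ∫ x, h x ∂ν := by
  have hh_int : ∀ ρ : Measure ℝ, [IsProbabilityMeasure ρ] → Integrable h ρ := fun ρ _ =>
    .of_bound hh.measurable.aestronglyMeasurable C (ae_of_all ρ hC)
  have hshift : ∫ x, h x + C ∂μ ≤ ∫ x, h x + C ∂ν := by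
    refine integral_le_integral_of_forall_measure_lt_le
      (fun x => neg_le_iff_add_nonneg.1 (abs_le.1 (hC x)).1) (hh.measurable.add_const C)
      ((hh_int ν).add (integrable_const C)) fun t =>
        measure_le_of_isUpperSet_of_measure_Iic_le hle fun x y hxy (hx : t < h x + C) => ?_
    show t < h y + C
    linarith [hh hxy]
  rw [integral_add (hh_int μ) (integrable_const C),
    integral_add (hh_int ν) (integrable_const C)] at hshift
  simpa using hshift

lemma integral_prod_self_eq_zero_of_antisymm {α : Type*} [MeasurableSpace α] {μ : Measure α}
    [SFinite μ] {G : α → α → ℝ} (hG : ∀ x y, G x y = -G y x) :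
    ∫ p, G p.1 p.2 ∂μ.prod μ = 0 := by
  have hswap : ∫ p, G p.1 p.2 ∂μ.prod μ = -∫ p, G p.1 p.2 ∂μ.prod μ :=
    calc ∫ p, G p.1 p.2 ∂μ.prod μ = ∫ p, G p.2 p.1 ∂μ.prod μ := (integral_prod_swap _).symm
      _ = ∫ p, -G p.1 p.2 ∂μ.prod μ := integral_congr_ae (ae_of_all _ fun p => hG p.2 p.1)
      _ = -∫ p, G p.1 p.2 ∂μ.prod μ := integral_neg _
  linarith

theorem integral_prod_nonneg_of_antisymm_of_monotone {μ ν : Measure ℝ} [IsProbabilityMeasure μ]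
    [IsProbabilityMeasure ν] (hle : ∀ z, ν (Iic z) ≤ μ (Iic z)) {G : ℝ → ℝ → ℝ}
    (hG_meas : Measurable (Function.uncurry G)) {C : ℝ} (hC : ∀ y x, |G y x| ≤ C)
    (hG_anti : ∀ y x, G y x = -G x y) (hG_mono : ∀ y, Monotone (G y)) :
    0 ≤ ∫ p, G p.1 p.2 ∂μ.prod ν := by
  have hG_int : ∀ ρ : Measure ℝ, [IsProbabilityMeasure ρ] →
      Integrable (Function.uncurry G) (μ.prod ρ) := fun ρ _ =>
    .of_bound hG_meas.aestronglyMeasurable C (ae_of_all _ fun p => hC p.1 p.2)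
  calc 0 = ∫ p, G p.1 p.2 ∂μ.prod μ := (integral_prod_self_eq_zero_of_antisymm hG_anti).symm
    _ = ∫ y, ∫ x, G y x ∂μ ∂μ := integral_prod _ (hG_int μ)
    _ ≤ ∫ y, ∫ x, G y x ∂ν ∂μ :=
      integral_mono (hG_int μ).integral_prod_left (hG_int ν).integral_prod_left
        fun y => integral_le_integral_of_monotone hle (hG_mono y) (hC y)
    _ = ∫ p, G p.1 p.2 ∂μ.prod ν := (integral_prod _ (hG_int ν)).symm

theorem stmt9_general {Ω : Type*} [MeasurableSpace Ω] {μ : Measure Ω} [IsProbabilityMeasure μ]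
    (xmin xmax : ℝ) (hx : xmin < xmax) (g : ℝ → ℝ → ℝ)
    (hg_meas : Measurable (Function.uncurry g))
    (hg_range : ∀ x₁ ∈ Set.Icc xmin xmax, ∀ x₂ ∈ Set.Icc xmin xmax,
      g x₁ x₂ ∈ Set.Icc (-1 : ℝ) 1)
    (hg_anti : ∀ x₁ ∈ Set.Icc xmin xmax, ∀ x₂ ∈ Set.Icc xmin xmax,
      g x₁ x₂ = -g x₂ x₁)
    (hg_mono : ∀ x₁ ∈ Set.Icc xmin xmax, ∀ x₂ ∈ Set.Icc xmin xmax,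
      ∀ x₃ ∈ Set.Icc xmin xmax, x₂ ≤ x₃ → g x₁ x₂ ≤ g x₁ x₃)
    (X Y : Ω → ℝ) (hX_meas : Measurable X) (hY_meas : Measurable Y)
    (hX_mem : ∀ ω, X ω ∈ Set.Icc xmin xmax) (hY_mem : ∀ ω, Y ω ∈ Set.Icc xmin xmax)
    (hindep : IndepFun X Y μ)
    (hfosd : ∀ z : ℝ, μ {ω | X ω ≤ z} ≤ μ {ω | Y ω ≤ z}) :
    0 ≤ ∫ ω, g (Y ω) (X ω) ∂μ := by
  -- `g` is only controlled on the square, so it is extended by clamping both arguments into it.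
  set c : ℝ → ℝ := fun x => projIcc xmin xmax hx.le x
  have hc_mem : ∀ x, c x ∈ Icc xmin xmax := fun x => (projIcc xmin xmax hx.le x).2
  have hc_meas : Measurable c := (continuous_subtype_val.comp continuous_projIcc).measurable
  set G : ℝ → ℝ → ℝ := fun y x => g (c y) (c x)
  have hG_meas : Measurable (Function.uncurry G) := hg_meas.comp (hc_meas.prodMap hc_meas)
  have := Measure.isProbabilityMeasure_map (μ := μ) hX_meas.aemeasurable
  have := Measure.isProbabilityMeasure_map (μ := μ) hY_meas.aemeasurable
  have hlaw : μ.map (fun ω => (Y ω, X ω)) = (μ.map Y).prod (μ.map X) :=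
    (indepFun_iff_map_prod_eq_prod_map_map hY_meas.aemeasurable hX_meas.aemeasurable).1
      hindep.symm
  have hintegral : ∫ ω, g (Y ω) (X ω) ∂μ = ∫ p, G p.1 p.2 ∂(μ.map Y).prod (μ.map X) := by
    rw [← hlaw, integral_map (f := fun p : ℝ × ℝ => G p.1 p.2)
      (hY_meas.prodMk hX_meas).aemeasurable hG_meas.aestronglyMeasurable]
    simp [G, c, projIcc_of_mem, hX_mem, hY_mem]
  rw [hintegral]
  refine integral_prod_nonneg_of_antisymm_of_monotone (fun z => ?_) hG_meas
    (fun y x => abs_le.2 (hg_range _ (hc_mem y) _ (hc_mem x)))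
    (fun y x => hg_anti _ (hc_mem y) _ (hc_mem x))
    (fun y a b hab =>
      hg_mono _ (hc_mem y) _ (hc_mem a) _ (hc_mem b) (monotone_projIcc hx.le hab))
  rw [Measure.map_apply hX_meas measurableSet_Iic, Measure.map_apply hY_meas measurableSet_Iic]
  exact hfosd z

/-- If `g` is a measurable symmetric-switch function on `[x_min, x_max]²` with values in
`[−1,1]`, and `X`, `Y` are independent `[x_min, x_max]`-valued random variables such that
`X` first-order stochastically dominates `Y`, then `E[g(Y, X)] ≥ 0`. -/
theorem stmt9 {Ω : Type*} [MeasurableSpace Ω] {μ : Measure Ω} [IsProbabilityMeasure μ]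
    (xmin xmax : ℝ) (hx : xmin < xmax) (g : ℝ → ℝ → ℝ)
    (hg_meas : Measurable (Function.uncurry g))
    (hg_range : ∀ x₁ ∈ Set.Icc xmin xmax, ∀ x₂ ∈ Set.Icc xmin xmax,
      g x₁ x₂ ∈ Set.Icc (-1 : ℝ) 1)
    (hg_anti : ∀ x₁ ∈ Set.Icc xmin xmax, ∀ x₂ ∈ Set.Icc xmin xmax,
      g x₁ x₂ = -g x₂ x₁)
    (hg_mono : ∀ x₁ ∈ Set.Icc xmin xmax, ∀ x₂ ∈ Set.Icc xmin xmax,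
      ∀ x₃ ∈ Set.Icc xmin xmax, x₂ ≤ x₃ → g x₁ x₂ ≤ g x₁ x₃)
    (hg_pos : ∀ x₁ ∈ Set.Icc xmin xmax, ∀ x₂ ∈ Set.Icc xmin xmax,
      x₁ < x₂ → 0 ≤ g x₁ x₂)
    (X Y : Ω → ℝ) (hX_meas : Measurable X) (hY_meas : Measurable Y)
    (hX_mem : ∀ ω, X ω ∈ Set.Icc xmin xmax) (hY_mem : ∀ ω, Y ω ∈ Set.Icc xmin xmax)
    (hindep : IndepFun X Y μ)
    (hfosd : ∀ z : ℝ, μ {ω | X ω ≤ z} ≤ μ {ω | Y ω ≤ z}) :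
    0 ≤ ∫ ω, g (Y ω) (X ω) ∂μ :=
  stmt9_general xmin xmax hx g hg_meas hg_range hg_anti hg_mono X Y hX_meas hY_meas hX_mem hY_mem
    hindep hfosd
end

section
/- Let A be a finite set, A* ⊆ A, and X = [x_min, x_max] ⊂ ℝ. Let (x(a))_{a∈A} be X-valued random variables, pairwise independent, such that for every a ∈ A* and b ∈ A the variable x(a) first-order stochastically dominates x(b), and such that x(a) and x(a') are identically distributed for a, a' ∈ A*. For each unordered pair {a,b} ⊆ A with a ≠ b let g_{b,a} = g_{a,b}: X² → [−1,1] be a measurable symmetric-switch function, and let σ ∈ Δ(A) be a probability vector. Define σ'(a) := σ(a) + σ(a)·Σ_{b∈A∖{a}} σ(b)·g_{b,a}(x(b), x(a)). Set P := Σ_{a∈A*} σ(a) and δ := min_{a∈A*, b∈A∖A*} E[ g_{b,a}(x(b), x(a)) ]. Then δ ≥ 0 and E[ Σ_{a∈A*} σ'(a) ] − P ≥ δ·P·(1 − P). -/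
/-!
Under independence, `E[g(x b, x a)]` is the integral of an antisymmetric function `G` against the
product of the laws of `x b` and `x a`. Against the square of one law this integral vanishes by
antisymmetry, so it is zero for `a, b ∈ A*`. Replacing the second factor by a dominating law can
only increase it, because `G p` is monotone and dominance gives `∫ h dρ ≤ ∫ h dν` for monotone `h`;
so it is nonnegative for `a ∈ A*`, `b ∉ A*`. In the expected increment
`∑_{a ∈ A*} σ a ∑_{b ≠ a} σ b E[g_{b,a}]` only the terms with `b ∉ A*` survive, each at least `δ`,
which gives `δ P (1 - P)`.
-/

open MeasureTheory ProbabilityTheory Set Finset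

theorem IsUpperSet.eq_Ioi_or_eq_Ici_csInf {α : Type*} [ConditionallyCompleteLinearOrder α]
    {U : Set α} (hU : IsUpperSet U) (hne : U.Nonempty) (hb : BddBelow U) :
    U = Ioi (sInf U) ∨ U = Ici (sInf U) := by
  by_cases hmem : sInf U ∈ U
  · exact Or.inr <| Subset.antisymm (fun u hu => csInf_le hb hu) (hU.Ici_subset hmem)
  · refine Or.inl <| Subset.antisymm (fun u hu => ?_) (fun t ht => ?_)
    · exact (csInf_le hb hu).lt_of_ne (by rintro rfl; exact hmem hu)
    · obtain ⟨u, hu, hut⟩ := exists_lt_of_csInf_lt hne ht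
      exact hU hut.le hu

theorem IsUpperSet.eq_univ_of_not_bddBelow {α : Type*} [LinearOrder α] {U : Set α}
    (hU : IsUpperSet U) (hb : ¬BddBelow U) : U = univ :=
  eq_univ_of_forall fun t => by
    obtain ⟨u, hu, hut⟩ := not_bddBelow_iff.1 hb t
    exact hU hut.le hu

def StochasticallyDominates (ν ρ : Measure ℝ) : Prop :=
  ∀ z, ν (Iic z) ≤ ρ (Iic z)

namespace StochasticallyDominates

variable {ν ρ : Measure ℝ}

theorem measure_Iio_le (h : StochasticallyDominates ν ρ) (c : ℝ) : ν (Iio c) ≤ ρ (Iio c) := by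
  have hmono : Monotone fun n : ℕ => Iic (c - 1 / (n + 1)) := fun i j hij =>
    Iic_subset_Iic.2 <| sub_le_sub_left (Nat.one_div_le_one_div hij) c
  have hlim : Filter.Tendsto (fun n : ℕ => c - 1 / ((n : ℝ) + 1)) Filter.atTop (nhds c) := by
    simpa using tendsto_one_div_add_atTop_nhds_zero_nat.const_sub c
  rw [← iUnion_Iic_eq_Iio_of_lt_of_tendsto (fun n => sub_lt_self c Nat.one_div_pos_of_nat) hlim,
    hmono.measure_iUnion, hmono.measure_iUnion]
  exact iSup_mono fun n => h _

variable [IsProbabilityMeasure ν] [IsProbabilityMeasure ρ]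

theorem measure_le_of_isUpperSet (h : StochasticallyDominates ν ρ) {U : Set ℝ}
    (hU : IsUpperSet U) : ρ U ≤ ν U := by
  rcases U.eq_empty_or_nonempty with rfl | hne
  · simp
  by_cases hb : BddBelow U
  · rcases hU.eq_Ioi_or_eq_Ici_csInf hne hb with hU' | hU' <;> rw [hU']
    · rw [← compl_Iic, prob_compl_eq_one_sub measurableSet_Iic,
        prob_compl_eq_one_sub measurableSet_Iic]
      exact tsub_le_tsub_left (h _) 1
    · rw [← compl_Iio, prob_compl_eq_one_sub measurableSet_Iio,
        prob_compl_eq_one_sub measurableSet_Iio]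
      exact tsub_le_tsub_left (h.measure_Iio_le _) 1
  · simp [hU.eq_univ_of_not_bddBelow hb]

/-- The layer-cake formula reduces the comparison to the superlevel sets of `f`, which are
upper sets. -/
theorem lintegral_le_of_monotone (h : StochasticallyDominates ν ρ) {f : ℝ → ℝ}
    (hf : Monotone f) (hf_nonneg : 0 ≤ f) :
    ∫⁻ t, ENNReal.ofReal (f t) ∂ρ ≤ ∫⁻ t, ENNReal.ofReal (f t) ∂ν := by
  rw [lintegral_eq_lintegral_meas_lt ρ (ae_of_all _ hf_nonneg) hf.measurable.aemeasurable,
    lintegral_eq_lintegral_meas_lt ν (ae_of_all _ hf_nonneg) hf.measurable.aemeasurable]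
  exact lintegral_mono fun t =>
    h.measure_le_of_isUpperSet fun _ _ hab ha => ha.trans_le (hf hab)

theorem integral_le_of_monotone (h : StochasticallyDominates ν ρ) {f : ℝ → ℝ}
    (hf : Monotone f) {C : ℝ} (hC : ∀ t, |f t| ≤ C) : ∫ t, f t ∂ρ ≤ ∫ t, f t ∂ν := by
  have hnn : ∀ t, 0 ≤ f t + C := fun t => by linarith [neg_abs_le (f t), hC t]
  have hint : ∀ (m : Measure ℝ) [IsProbabilityMeasure m], Integrable f m := fun m _ =>
    Integrable.of_bound hf.measurable.aestronglyMeasurable C (ae_of_all _ hC)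
  have hshift : ∀ (m : Measure ℝ) [IsProbabilityMeasure m],
      ∫ t, f t ∂m = (∫⁻ t, ENNReal.ofReal (f t + C) ∂m).toReal - C := by
    intro m _
    have hfC := (hint m).add (integrable_const C)
    rw [← integral_eq_lintegral_of_nonneg_ae (ae_of_all _ hnn) hfC.1,
      integral_add (hint m) (integrable_const C)]
    simp
  rw [hshift ρ, hshift ν]
  refine sub_le_sub_right
    (ENNReal.toReal_mono ?_ (h.lintegral_le_of_monotone (hf.add_const C) hnn)) C
  exact ((hint ν).add (integrable_const C)).lintegral_lt_top.ne

end StochasticallyDominates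

structure IsSymmetricSwitch (s : Set ℝ) (G : ℝ → ℝ → ℝ) : Prop where
  mem_Icc : ∀ p ∈ s, ∀ q ∈ s, G p q ∈ Icc (-1 : ℝ) 1
  antisymm : ∀ p ∈ s, ∀ q ∈ s, G p q = -G q p
  monotoneOn : ∀ p ∈ s, MonotoneOn (G p) s

/-- Clamping extends a switch function from the payoff range to all of `ℝ` without changing it
on that range, so the lemmas about switch functions on `ℝ` apply to the payoffs. -/
theorem IsSymmetricSwitch.comp_projIcc {a b : ℝ} (hab : a ≤ b) {G : ℝ → ℝ → ℝ}
    (hG : IsSymmetricSwitch (Icc a b) G) :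
    IsSymmetricSwitch univ fun p q => G (projIcc a b hab p) (projIcc a b hab q) where
  mem_Icc p _ q _ := hG.mem_Icc _ (projIcc a b hab p).2 _ (projIcc a b hab q).2
  antisymm p _ q _ := hG.antisymm _ (projIcc a b hab p).2 _ (projIcc a b hab q).2
  monotoneOn p _ _ _ _ _ hqr := hG.monotoneOn _ (projIcc a b hab p).2 (projIcc a b hab _).2
    (projIcc a b hab _).2 (monotone_projIcc hab hqr)

theorem integral_prod_self_eq_zero_of_antisymm_s10 {α : Type*} [MeasurableSpace α] (m : Measure α)
    [SFinite m] {G : α → α → ℝ} (hG : ∀ p q, G p q = -G q p) :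
    ∫ z, G z.1 z.2 ∂m.prod m = 0 := by
  have hswap : ∫ z, G z.2 z.1 ∂m.prod m = ∫ z, G z.1 z.2 ∂m.prod m :=
    integral_prod_swap fun z => G z.1 z.2
  simp_rw [hG _ (Prod.fst _), integral_neg] at hswap
  linarith

/-- Integrating out the first coordinate against `ρ` and comparing with `ρ.prod ρ`, where the
integral vanishes by antisymmetry. -/
theorem StochasticallyDominates.integral_prod_nonneg {ν ρ : Measure ℝ} [IsProbabilityMeasure ν]
    [IsProbabilityMeasure ρ] (h : StochasticallyDominates ν ρ) {G : ℝ → ℝ → ℝ}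
    (hG_meas : Measurable (Function.uncurry G)) (hG : IsSymmetricSwitch univ G) :
    0 ≤ ∫ z, G z.1 z.2 ∂ρ.prod ν := by
  have hbound : ∀ p q, |G p q| ≤ 1 := fun p q => abs_le.2 (hG.mem_Icc p trivial q trivial)
  have hint : ∀ m : Measure ℝ, [IsProbabilityMeasure m] →
      Integrable (fun z : ℝ × ℝ => G z.1 z.2) (ρ.prod m) := fun m _ =>
    Integrable.of_bound hG_meas.aestronglyMeasurable 1 (ae_of_all _ fun z => hbound z.1 z.2)
  calc (0 : ℝ) = ∫ z, G z.1 z.2 ∂ρ.prod ρ :=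
        (integral_prod_self_eq_zero_of_antisymm_s10 ρ fun p q => hG.antisymm p trivial q trivial).symm
    _ = ∫ p, ∫ q, G p q ∂ρ ∂ρ := integral_prod _ (hint ρ)
    _ ≤ ∫ p, ∫ q, G p q ∂ν ∂ρ :=
        integral_mono (hint ρ).integral_prod_left (hint ν).integral_prod_left fun p =>
          h.integral_le_of_monotone (monotoneOn_univ.1 (hG.monotoneOn p trivial)) (hbound p)
    _ = ∫ z, G z.1 z.2 ∂ρ.prod ν := (integral_prod _ (hint ν)).symm

theorem Measurable.uncurry_comp_projIcc {a b : ℝ} (hab : a ≤ b) {G : ℝ → ℝ → ℝ}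
    (hG : Measurable (Function.uncurry G)) :
    Measurable (Function.uncurry fun p q => G (projIcc a b hab p) (projIcc a b hab q)) :=
  have hproj : Measurable fun t => (projIcc a b hab t : ℝ) :=
    continuous_subtype_val.measurable.comp continuous_projIcc.measurable
  hG.comp ((hproj.comp measurable_fst).prodMk (hproj.comp measurable_snd))

namespace ProbabilityTheory.IndepFun

variable {Ω : Type*} [MeasurableSpace Ω] {μ : Measure Ω} [IsProbabilityMeasure μ]
  {a b : ℝ} {X Y : Ω → ℝ} {G : ℝ → ℝ → ℝ}

theorem integral_comp_eq_integral_prod_projIcc (hab : a ≤ b) (hX : Measurable X) (hY : Measurable Y)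
    (hXY : IndepFun X Y μ) (hXs : ∀ ω, X ω ∈ Icc a b) (hYs : ∀ ω, Y ω ∈ Icc a b)
    (hG_meas : Measurable (Function.uncurry G)) :
    ∫ ω, G (X ω) (Y ω) ∂μ =
      ∫ z, G (projIcc a b hab z.1) (projIcc a b hab z.2) ∂(μ.map X).prod (μ.map Y) := by
  rw [← (indepFun_iff_map_prod_eq_prod_map_map hX.aemeasurable hY.aemeasurable).1 hXY,
    integral_map (hX.prodMk hY).aemeasurable
      (f := fun z : ℝ × ℝ => G (projIcc a b hab z.1) (projIcc a b hab z.2))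
      (hG_meas.uncurry_comp_projIcc hab).aestronglyMeasurable]
  simp only [projIcc_of_mem hab (hXs _), projIcc_of_mem hab (hYs _)]

theorem integral_nonneg_of_stochasticallyDominates (hab : a ≤ b) (hX : Measurable X)
    (hY : Measurable Y) (hXY : IndepFun X Y μ) (hXs : ∀ ω, X ω ∈ Icc a b)
    (hYs : ∀ ω, Y ω ∈ Icc a b)
    (hG_meas : Measurable (Function.uncurry G)) (hG : IsSymmetricSwitch (Icc a b) G)
    (hdom : StochasticallyDominates (μ.map Y) (μ.map X)) :
    0 ≤ ∫ ω, G (X ω) (Y ω) ∂μ := by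
  have := Measure.isProbabilityMeasure_map (μ := μ) hX.aemeasurable
  have := Measure.isProbabilityMeasure_map (μ := μ) hY.aemeasurable
  rw [hXY.integral_comp_eq_integral_prod_projIcc hab hX hY hXs hYs hG_meas]
  exact hdom.integral_prod_nonneg (hG_meas.uncurry_comp_projIcc hab) (hG.comp_projIcc hab)

theorem integral_eq_zero_of_identDistrib (hab : a ≤ b) (hX : Measurable X) (hY : Measurable Y)
    (hXY : IndepFun X Y μ) (hXs : ∀ ω, X ω ∈ Icc a b) (hYs : ∀ ω, Y ω ∈ Icc a b)
    (hG_meas : Measurable (Function.uncurry G)) (hG : IsSymmetricSwitch (Icc a b) G)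
    (hid : IdentDistrib X Y μ μ) :
    ∫ ω, G (X ω) (Y ω) ∂μ = 0 := by
  rw [hXY.integral_comp_eq_integral_prod_projIcc hab hX hY hXs hYs hG_meas, hid.map_eq]
  exact integral_prod_self_eq_zero_of_antisymm_s10 _ fun p q =>
    (hG.comp_projIcc hab).antisymm p trivial q trivial

end ProbabilityTheory.IndepFun

theorem le_sum_mul_sum_erase_mul {A : Type*} [Fintype A] [DecidableEq A] (S : Finset A)
    {σ : A → ℝ} (hσ_nonneg : ∀ a, 0 ≤ σ a) (hσ_sum : ∑ a, σ a = 1) {E : A → A → ℝ} {δ : ℝ}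
    (hE_inside : ∀ a ∈ S, ∀ b ∈ S, a ≠ b → E a b = 0) (hE_outside : ∀ a ∈ S, ∀ b ∈ Sᶜ, δ ≤ E a b) :
    δ * ((∑ a ∈ S, σ a) * (1 - ∑ a ∈ S, σ a)) ≤
      ∑ a ∈ S, σ a * ∑ b ∈ univ.erase a, σ b * E a b := by
  have hcompl : ∑ b ∈ Sᶜ, σ b = 1 - ∑ a ∈ S, σ a := by
    rw [← hσ_sum, ← sum_add_sum_compl S σ, add_sub_cancel_left]
  have hrow : ∀ a ∈ S, δ * (1 - ∑ a ∈ S, σ a) ≤ ∑ b ∈ univ.erase a, σ b * E a b := by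
    intro a ha
    have hsub : Sᶜ ⊆ univ.erase a := fun b hb =>
      mem_erase.2 ⟨fun hba => mem_compl.1 hb (hba ▸ ha), mem_univ b⟩
    have hinside : ∀ b ∈ univ.erase a, b ∉ Sᶜ → σ b * E a b = 0 := fun b hb hbS => by
      rw [hE_inside a ha b (notMem_compl.1 hbS) (ne_of_mem_erase hb).symm, mul_zero]
    calc δ * (1 - ∑ a ∈ S, σ a) = ∑ b ∈ Sᶜ, σ b * δ := by rw [← hcompl, mul_comm, sum_mul]
      _ ≤ ∑ b ∈ Sᶜ, σ b * E a b :=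
        sum_le_sum fun b hb => mul_le_mul_of_nonneg_left (hE_outside a ha b hb) (hσ_nonneg b)
      _ = ∑ b ∈ univ.erase a, σ b * E a b := sum_subset hsub hinside
  calc δ * ((∑ a ∈ S, σ a) * (1 - ∑ a ∈ S, σ a))
      = ∑ a ∈ S, σ a * (δ * (1 - ∑ a ∈ S, σ a)) := by rw [← sum_mul]; ring
    _ ≤ _ := sum_le_sum fun a ha => mul_le_mul_of_nonneg_left (hrow a ha) (hσ_nonneg a)

theorem integral_sum_add_mul_sum_erase {Ω : Type*} [MeasurableSpace Ω] {μ : Measure Ω}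
    [IsProbabilityMeasure μ] {A : Type*} [Fintype A] [DecidableEq A] (S : Finset A) (σ : A → ℝ)
    {F : A → A → Ω → ℝ} (hF : ∀ a b, Integrable (F a b) μ) :
    ∫ ω, ∑ a ∈ S, (σ a + σ a * ∑ b ∈ univ.erase a, σ b * F a b ω) ∂μ =
      ∑ a ∈ S, σ a + ∑ a ∈ S, σ a * ∑ b ∈ univ.erase a, σ b * ∫ ω, F a b ω ∂μ := by
  have hrow : ∀ a, Integrable (fun ω => ∑ b ∈ univ.erase a, σ b * F a b ω) μ := fun a =>
    integrable_finsetSum _ fun b _ => (hF a b).const_mul _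
  have hterm : ∀ a, Integrable (fun ω => σ a + σ a * ∑ b ∈ univ.erase a, σ b * F a b ω) μ :=
    fun a => (integrable_const _).add ((hrow a).const_mul _)
  rw [integral_finsetSum _ fun a _ => hterm a, ← sum_add_distrib]
  refine sum_congr rfl fun a _ => ?_
  rw [integral_add (integrable_const _) ((hrow a).const_mul _), integral_const_mul,
    integral_finsetSum _ fun b _ => (hF a b).const_mul _]
  simp only [integral_const, probReal_univ, one_smul, integral_const_mul]

theorem stmt10_general {Ω : Type*} [MeasurableSpace Ω] {μ : Measure Ω} [IsProbabilityMeasure μ]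
    {A : Type*} [Fintype A] [DecidableEq A] (Astar : Finset A)
    (xmin xmax : ℝ) (hx : xmin < xmax)
    (x : A → Ω → ℝ) (hx_meas : ∀ a, Measurable (x a))
    (hx_mem : ∀ a ω, x a ω ∈ Set.Icc xmin xmax)
    (hx_indep : ∀ a b : A, a ≠ b → IndepFun (x a) (x b) μ)
    (hx_fosd : ∀ a ∈ Astar, ∀ b : A, ∀ z : ℝ, μ {ω | x a ω ≤ z} ≤ μ {ω | x b ω ≤ z})
    (hx_id : ∀ a ∈ Astar, ∀ a' ∈ Astar, IdentDistrib (x a) (x a') μ μ)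
    (g : A → A → ℝ → ℝ → ℝ)
    (hg_meas : ∀ a b : A, Measurable (Function.uncurry (g a b)))
    (hg_range : ∀ a b : A, ∀ x₁ ∈ Set.Icc xmin xmax, ∀ x₂ ∈ Set.Icc xmin xmax,
      g a b x₁ x₂ ∈ Set.Icc (-1 : ℝ) 1)
    (hg_anti : ∀ a b : A, ∀ x₁ ∈ Set.Icc xmin xmax, ∀ x₂ ∈ Set.Icc xmin xmax,
      g a b x₁ x₂ = -g a b x₂ x₁)
    (hg_mono : ∀ a b : A, ∀ x₁ ∈ Set.Icc xmin xmax, ∀ x₂ ∈ Set.Icc xmin xmax,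
      ∀ x₃ ∈ Set.Icc xmin xmax, x₂ ≤ x₃ → g a b x₁ x₂ ≤ g a b x₁ x₃)
    (σ : A → ℝ) (hσ_nonneg : ∀ a, 0 ≤ σ a) (hσ_sum : ∑ a, σ a = 1)
    (hne : (Astar ×ˢ Astarᶜ).Nonempty) :
    0 ≤ (Astar ×ˢ Astarᶜ).inf' hne
        (fun p => ∫ ω, g p.2 p.1 (x p.2 ω) (x p.1 ω) ∂μ) ∧
    (Astar ×ˢ Astarᶜ).inf' hne (fun p => ∫ ω, g p.2 p.1 (x p.2 ω) (x p.1 ω) ∂μ)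
        * ((∑ a ∈ Astar, σ a) * (1 - ∑ a ∈ Astar, σ a))
      ≤ (∫ ω, ∑ a ∈ Astar, (σ a + σ a * ∑ b ∈ Finset.univ.erase a,
            σ b * g b a (x b ω) (x a ω)) ∂μ)
        - ∑ a ∈ Astar, σ a := by
  have hg : ∀ a b, IsSymmetricSwitch (Icc xmin xmax) (g a b) := fun a b =>
    ⟨hg_range a b, hg_anti a b, fun p hp _ hq _ hr hqr => hg_mono a b p hp _ hq _ hr hqr⟩
  have hdom : ∀ a ∈ Astar, ∀ b, StochasticallyDominates (μ.map (x a)) (μ.map (x b)) :=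
    fun a ha b z => by
      rw [Measure.map_apply (hx_meas _) measurableSet_Iic,
        Measure.map_apply (hx_meas _) measurableSet_Iic]
      exact hx_fosd a ha b z
  have hinside : ∀ a ∈ Astar, ∀ b ∈ Astar, a ≠ b → ∫ ω, g b a (x b ω) (x a ω) ∂μ = 0 :=
    fun a ha b hb hab => (hx_indep b a hab.symm).integral_eq_zero_of_identDistrib hx.le
      (hx_meas b) (hx_meas a) (hx_mem b) (hx_mem a) (hg_meas b a) (hg b a) (hx_id b hb a ha)
  have houtside : ∀ a ∈ Astar, ∀ b ∈ Astarᶜ, 0 ≤ ∫ ω, g b a (x b ω) (x a ω) ∂μ :=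
    fun a ha b hb => (hx_indep b a (ne_of_mem_of_not_mem ha (mem_compl.1 hb)).symm
      ).integral_nonneg_of_stochasticallyDominates hx.le (hx_meas b) (hx_meas a) (hx_mem b)
      (hx_mem a) (hg_meas b a) (hg b a) (hdom a ha b)
  refine ⟨le_inf' hne _ fun p hp => houtside p.1 (mem_product.1 hp).1 p.2 (mem_product.1 hp).2, ?_⟩
  have hint : ∀ a b, Integrable (fun ω => g b a (x b ω) (x a ω)) μ := fun a b =>
    Integrable.of_bound ((hg_meas b a).comp ((hx_meas b).prodMk (hx_meas a))).aestronglyMeasurable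
      1 (ae_of_all _ fun ω => abs_le.2 (hg_range b a _ (hx_mem b ω) _ (hx_mem a ω)))
  rw [integral_sum_add_mul_sum_erase Astar σ (F := fun a b ω => g b a (x b ω) (x a ω)) hint,
    add_sub_cancel_left]
  exact le_sum_mul_sum_erase_mul Astar hσ_nonneg hσ_sum hinside fun a ha b hb =>
    inf'_le (fun p : A × A => ∫ ω, g p.2 p.1 (x p.2 ω) (x p.1 ω) ∂μ) (b := (a, b))
      (mem_product.2 ⟨ha, hb⟩)

/-- One-step hazard-rate bound for full-information learning via pairwise comparisons with
symmetric-switch functions `g_{b,a} = g_{a,b}`: with pairwise independent payoffs such that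
payoffs of actions in `A*` first-order stochastically dominate all others and are
identically distributed within `A*`, the minimum `δ` of `E[g_{b,a}(x(b), x(a))]` over
`a ∈ A*`, `b ∉ A*` is nonnegative, and the expected performance increment of the update
`σ'(a) = σ(a) + σ(a)·Σ_{b≠a} σ(b)·g_{b,a}(x(b), x(a))` is at least `δ·P·(1 − P)` where
`P = Σ_{a∈A*} σ(a)`. -/
theorem stmt10 {Ω : Type*} [MeasurableSpace Ω] {μ : Measure Ω} [IsProbabilityMeasure μ]
    {A : Type*} [Fintype A] [DecidableEq A] (Astar : Finset A)
    (xmin xmax : ℝ) (hx : xmin < xmax)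
    (x : A → Ω → ℝ) (hx_meas : ∀ a, Measurable (x a))
    (hx_mem : ∀ a ω, x a ω ∈ Set.Icc xmin xmax)
    (hx_indep : ∀ a b : A, a ≠ b → IndepFun (x a) (x b) μ)
    (hx_fosd : ∀ a ∈ Astar, ∀ b : A, ∀ z : ℝ, μ {ω | x a ω ≤ z} ≤ μ {ω | x b ω ≤ z})
    (hx_id : ∀ a ∈ Astar, ∀ a' ∈ Astar, IdentDistrib (x a) (x a') μ μ)
    (g : A → A → ℝ → ℝ → ℝ)
    (hg_symm_idx : ∀ a b : A, g a b = g b a)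
    (hg_meas : ∀ a b : A, Measurable (Function.uncurry (g a b)))
    (hg_range : ∀ a b : A, ∀ x₁ ∈ Set.Icc xmin xmax, ∀ x₂ ∈ Set.Icc xmin xmax,
      g a b x₁ x₂ ∈ Set.Icc (-1 : ℝ) 1)
    (hg_anti : ∀ a b : A, ∀ x₁ ∈ Set.Icc xmin xmax, ∀ x₂ ∈ Set.Icc xmin xmax,
      g a b x₁ x₂ = -g a b x₂ x₁)
    (hg_mono : ∀ a b : A, ∀ x₁ ∈ Set.Icc xmin xmax, ∀ x₂ ∈ Set.Icc xmin xmax,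
      ∀ x₃ ∈ Set.Icc xmin xmax, x₂ ≤ x₃ → g a b x₁ x₂ ≤ g a b x₁ x₃)
    (hg_pos : ∀ a b : A, ∀ x₁ ∈ Set.Icc xmin xmax, ∀ x₂ ∈ Set.Icc xmin xmax,
      x₁ < x₂ → 0 ≤ g a b x₁ x₂)
    (σ : A → ℝ) (hσ_nonneg : ∀ a, 0 ≤ σ a) (hσ_sum : ∑ a, σ a = 1)
    (hne : (Astar ×ˢ Astarᶜ).Nonempty) :
    0 ≤ (Astar ×ˢ Astarᶜ).inf' hne
        (fun p => ∫ ω, g p.2 p.1 (x p.2 ω) (x p.1 ω) ∂μ) ∧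
    (Astar ×ˢ Astarᶜ).inf' hne (fun p => ∫ ω, g p.2 p.1 (x p.2 ω) (x p.1 ω) ∂μ)
        * ((∑ a ∈ Astar, σ a) * (1 - ∑ a ∈ Astar, σ a))
      ≤ (∫ ω, ∑ a ∈ Astar, (σ a + σ a * ∑ b ∈ Finset.univ.erase a,
            σ b * g b a (x b ω) (x a ω)) ∂μ)
        - ∑ a ∈ Astar, σ a :=
  stmt10_general Astar xmin xmax hx x hx_meas hx_mem hx_indep hx_fosd hx_id g hg_meas hg_range
    hg_anti hg_mono σ hσ_nonneg hσ_sum hne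
end

section
/- Let A be a finite set, σ ∈ Δ(A), and let (x(b))_{b∈A} be [x_min, x_max]-valued random variables. Let α be an A-valued random variable with ℙ(α = b) = σ(b) for all b, independent of (x(b))_{b∈A}. Let real coefficients (A_{b,a})_{a,b∈A} and (B_{b,a})_{a,b∈A} satisfy the balance conditions A_{a,a} = Σ_{c∈A} σ(c)·A_{c,a} and B_{a,a} = Σ_{c∈A} σ(c)·B_{c,a} for all a. Define the updated vector σ' by: σ'(a) = σ(a) + (1 − σ(a))·(A_{a,a} + B_{a,a}·x(a)) on the event {α = a}, and σ'(a) = σ(a) − σ(a)·(A_{b,a} + B_{b,a}·x(b)) on the event {α = b} for b ≠ a. Then for every a ∈ A: E[σ'(a)] − σ(a) = σ(a)·Σ_{b∈A} B_{b,a}·σ(b)·( E[x(a)] − E[x(b)] ). Consequently, if B_{b,a} ≥ 0 for all a ≠ b and A* := { a ∈ A : E[x(a)] ≥ E[x(b)] for all b ∈ A } then, with P := Σ_{a∈A*} σ(a) and δ := min_{a∈A*, b∈A∖A*} B_{b,a}·( E[x(a)] − E[x(b)] ) ≥ 0, it holds that E[ Σ_{a∈A*} σ'(a) ] − P ≥ δ·P·(1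 − P). -/
open MeasureTheory ProbabilityTheory Set Finset

/-!
The chosen action `α` is independent of the payoff vector and takes finitely many values, so
`E[σ'(a)] = Σ_b σ(b) E[u_{a,b}(x(b))]`, where `u_{a,b}` is the update applied when `b` is chosen.
Each `u_{a,b}` is affine in the payoff, so the expectation passes inside; the balance conditions
then cancel the `A`-terms and turn the `B`-terms into the drift
`σ(a) Σ_b B_{b,a} σ(b) (E x(a) - E x(b))`.
For `a ∈ A*` the drift terms with `b ∈ A*` vanish and those with `b ∉ A*` are at least `δ σ(b)`,
so they add up to at least `δ (1 - P)`; weighting by `σ(a)` and summing over `A*` gives `δ P (1 - P)`.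
-/

lemma comp_eq_sum_indicator {Ω β γ : Type*} [Fintype β] (α : Ω → β) (X : Ω → γ)
    (F : β → γ → ℝ) (ω : Ω) :
    F (α ω) (X ω) = ∑ b, (α ⁻¹' {b}).indicator (fun ω => F b (X ω)) ω := by
  classical
  simp [Set.indicator_apply]

lemma integrable_comp_of_fintype {Ω β γ : Type*} [MeasurableSpace Ω] {μ : Measure Ω}
    [Fintype β] [MeasurableSpace β] [MeasurableSingletonClass β]
    {α : Ω → β} {X : Ω → γ} {F : β → γ → ℝ} (hα : Measurable α)
    (hF : ∀ b, Integrable (fun ω => F b (X ω)) μ) :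
    Integrable (fun ω => F (α ω) (X ω)) μ := by
  simp_rw [comp_eq_sum_indicator α X F]
  exact integrable_finsetSum _ fun b _ => (hF b).indicator (hα (measurableSet_singleton b))

lemma integral_comp_eq_sum_of_indepFun {Ω β γ : Type*} [MeasurableSpace Ω] {μ : Measure Ω}
    [Fintype β] [MeasurableSpace β] [MeasurableSingletonClass β] [MeasurableSpace γ]
    {α : Ω → β} {X : Ω → γ} {F : β → γ → ℝ} (hα : Measurable α) (hX : AEMeasurable X μ)
    (hαX : IndepFun α X μ) (hF_meas : ∀ b, Measurable (F b))
    (hF : ∀ b, Integrable (fun ω => F b (X ω)) μ) :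
    ∫ ω, F (α ω) (X ω) ∂μ = ∑ b, μ.real {ω | α ω = b} * ∫ ω, F b (X ω) ∂μ := by
  simp_rw [comp_eq_sum_indicator α X F]
  rw [integral_finsetSum _ fun b _ => (hF b).indicator (hα (measurableSet_singleton b))]
  refine Finset.sum_congr rfl fun b _ => ?_
  rw [integral_indicator (hα (measurableSet_singleton b))]
  exact ((IndepFun_iff_Indep _ _ _).1 hαX).setIntegral_eq_mul hα.comap_le hX
    ⟨{b}, measurableSet_singleton b, rfl⟩ (hF_meas b).aestronglyMeasurable

section LearningRule

variable {A : Type*} [DecidableEq A] (σ : A → ℝ) (Acoef Bcoef : A → A → ℝ)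

/-- `σ'(a)` on the event `{α = b}` when the payoff obtained is `y`. -/
def bmsUpdate (a b : A) (y : ℝ) : ℝ :=
  if b = a then σ a + (1 - σ a) * (Acoef a a + Bcoef a a * y)
  else σ a - σ a * (Acoef b a + Bcoef b a * y)

lemma measurable_bmsUpdate (a b : A) : Measurable (bmsUpdate σ Acoef Bcoef a b) := by
  unfold bmsUpdate
  split_ifs <;> fun_prop

lemma integrable_bmsUpdate {Ω : Type*} [MeasurableSpace Ω] {μ : Measure Ω} [IsFiniteMeasure μ]
    (a b : A) {Y : Ω → ℝ} (hY : Integrable Y μ) :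
    Integrable (fun ω => bmsUpdate σ Acoef Bcoef a b (Y ω)) μ := by
  unfold bmsUpdate
  split_ifs <;> fun_prop

lemma integral_bmsUpdate {Ω : Type*} [MeasurableSpace Ω] {μ : Measure Ω}
    [IsProbabilityMeasure μ] (a b : A) {Y : Ω → ℝ} (hY : Integrable Y μ) :
    ∫ ω, bmsUpdate σ Acoef Bcoef a b (Y ω) ∂μ = bmsUpdate σ Acoef Bcoef a b (∫ ω, Y ω ∂μ) := by
  unfold bmsUpdate
  split_ifs
  · rw [integral_add (integrable_const _) (by fun_prop), integral_const_mul,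
      integral_add (integrable_const _) (hY.const_mul _), integral_const_mul]
    simp
  · rw [integral_sub (integrable_const _) (by fun_prop), integral_const_mul,
      integral_add (integrable_const _) (hY.const_mul _), integral_const_mul]
    simp

lemma sum_mul_bmsUpdate [Fintype A] (hσ : ∑ c, σ c = 1) (a : A)
    (hA : Acoef a a = ∑ c, σ c * Acoef c a) (hB : Bcoef a a = ∑ c, σ c * Bcoef c a) (I : A → ℝ) :
    ∑ b, σ b * bmsUpdate σ Acoef Bcoef a b (I b)
      = σ a + σ a * ∑ b, Bcoef b a * σ b * (I a - I b) := by
  have hterm : ∀ b, σ b * bmsUpdate σ Acoef Bcoef a b (I b)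
      = σ a * σ b - σ a * (σ b * Acoef b a) - σ a * (Bcoef b a * σ b * I b)
        + if b = a then σ a * (Acoef a a + Bcoef a a * I a) else 0 := by
    intro b
    unfold bmsUpdate
    split_ifs with h
    · subst h; ring
    · ring
  simp only [hterm, Finset.sum_add_distrib, Finset.sum_sub_distrib, Finset.sum_ite_eq',
    Finset.mem_univ, if_true, ← Finset.mul_sum, hσ, ← hA]
  have hB' : Bcoef a a = ∑ c, Bcoef c a * σ c := by simp only [hB, mul_comm]
  simp only [mul_sub, Finset.sum_sub_distrib, ← Finset.sum_mul, ← hB']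
  ring

lemma integral_bmsUpdate_of_indepFun [Fintype A] [MeasurableSpace A] [MeasurableSingletonClass A]
    {Ω : Type*} [MeasurableSpace Ω] {μ : Measure Ω} [IsProbabilityMeasure μ]
    {α : Ω → A} {x : A → Ω → ℝ} (hα : Measurable α) (hx : ∀ b, Integrable (x b) μ)
    (hα_law : ∀ b, μ.real {ω | α ω = b} = σ b) (hαx : IndepFun α (fun ω b => x b ω) μ)
    (hσ : ∑ c, σ c = 1) (a : A)
    (hA : Acoef a a = ∑ c, σ c * Acoef c a) (hB : Bcoef a a = ∑ c, σ c * Bcoef c a) :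
    ∫ ω, bmsUpdate σ Acoef Bcoef a (α ω) (x (α ω) ω) ∂μ
      = σ a + σ a * ∑ b, Bcoef b a * σ b * ((∫ ω, x a ω ∂μ) - ∫ ω, x b ω ∂μ) := by
  rw [integral_comp_eq_sum_of_indepFun (F := fun b v => bmsUpdate σ Acoef Bcoef a b (v b))
    (X := fun ω b => x b ω) hα
    (aemeasurable_pi_lambda _ fun b => (hx b).aemeasurable) hαx
    (fun b => (measurable_bmsUpdate σ Acoef Bcoef a b).comp (measurable_pi_apply b))
    (fun b => integrable_bmsUpdate σ Acoef Bcoef a b (hx b))]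
  simp only [hα_law, integral_bmsUpdate σ Acoef Bcoef a _ (hx _)]
  exact sum_mul_bmsUpdate σ Acoef Bcoef hσ a hA hB _

end LearningRule

section Hazard

variable {A : Type*} {σ I : A → ℝ} {Bcoef : A → A → ℝ} {S : Finset A}

lemma mul_sub_nonneg_of_mem_of_notMem (hB : ∀ a b : A, a ≠ b → 0 ≤ Bcoef b a)
    (hS : ∀ a ∈ S, ∀ b, I b ≤ I a) {a b : A} (ha : a ∈ S) (hb : b ∉ S) :
    0 ≤ Bcoef b a * (I a - I b) :=
  mul_nonneg (hB a b fun h => hb (h ▸ ha)) (sub_nonneg.2 (hS a ha b))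

lemma mul_one_sub_le_sum_of_mem [Fintype A] (hσ_nonneg : ∀ a, 0 ≤ σ a) (hσ_sum : ∑ a, σ a = 1)
    (hS : ∀ a ∈ S, ∀ b, I b ≤ I a) {δ : ℝ}
    (hδ : ∀ a ∈ S, ∀ b ∉ S, δ ≤ Bcoef b a * (I a - I b)) {a : A} (ha : a ∈ S) :
    δ * (1 - ∑ b ∈ S, σ b) ≤ ∑ b, Bcoef b a * σ b * (I a - I b) := by
  classical
  have hcompl : 1 - ∑ b ∈ S, σ b = ∑ b ∈ Sᶜ, σ b := by
    rw [← hσ_sum, ← Finset.sum_add_sum_compl S σ, add_sub_cancel_left]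
  have hS_zero : ∑ b ∈ S, Bcoef b a * σ b * (I a - I b) = 0 :=
    Finset.sum_eq_zero fun b hb => by
      rw [le_antisymm (hS b hb a) (hS a ha b), sub_self, mul_zero]
  rw [← Finset.sum_add_sum_compl S, hS_zero, zero_add, hcompl, Finset.mul_sum]
  refine Finset.sum_le_sum fun b hb => ?_
  calc δ * σ b ≤ Bcoef b a * (I a - I b) * σ b :=
        mul_le_mul_of_nonneg_right (hδ a ha b (Finset.mem_compl.1 hb)) (hσ_nonneg b)
    _ = Bcoef b a * σ b * (I a - I b) := by ring

lemma mul_sum_mul_one_sub_le [Fintype A] (hσ_nonneg : ∀ a, 0 ≤ σ a) (hσ_sum : ∑ a, σ a = 1)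
    (hS : ∀ a ∈ S, ∀ b, I b ≤ I a) {δ : ℝ}
    (hδ : ∀ a ∈ S, ∀ b ∉ S, δ ≤ Bcoef b a * (I a - I b)) :
    δ * ((∑ a ∈ S, σ a) * (1 - ∑ a ∈ S, σ a))
      ≤ ∑ a ∈ S, σ a * ∑ b, Bcoef b a * σ b * (I a - I b) := by
  rw [Finset.sum_mul, Finset.mul_sum]
  refine Finset.sum_le_sum fun a ha => ?_
  calc δ * (σ a * (1 - ∑ b ∈ S, σ b)) = σ a * (δ * (1 - ∑ b ∈ S, σ b)) := by ring
    _ ≤ _ := mul_le_mul_of_nonneg_left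
        (mul_one_sub_le_sum_of_mem hσ_nonneg hσ_sum hS hδ ha) (hσ_nonneg a)

end Hazard

/-- One-step expected hazard-rate bound for monotone learning rules with partial
information (Börgers–Morales–Sarin form): the chosen action `α` has law `σ` and is
independent of the payoff profile, the coefficients satisfy the balance conditions, and
the update is linear in the obtained payoff.  Then
`E[σ'(a)] − σ(a) = σ(a)·Σ_b B_{b,a}·σ(b)·(E[x(a)] − E[x(b)])` for every `a`; consequently,
if the `B`-coefficients are nonnegative off the diagonal and `A*` is the set of expected
payoff maximizing actions, then with `P = Σ_{a∈A*} σ(a)` and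
`δ = min_{a∈A*, b∉A*} B_{b,a}·(E[x(a)] − E[x(b)])` one has `δ ≥ 0` and
`E[Σ_{a∈A*} σ'(a)] − P ≥ δ·P·(1 − P)`. -/
theorem stmt11 {Ω : Type*} [MeasurableSpace Ω] {μ : Measure Ω} [IsProbabilityMeasure μ]
    {A : Type*} [Fintype A] [DecidableEq A] [MeasurableSpace A] [DiscreteMeasurableSpace A]
    (xmin xmax : ℝ) (x : A → Ω → ℝ) (hx_meas : ∀ a, Measurable (x a))
    (hx_mem : ∀ a ω, x a ω ∈ Set.Icc xmin xmax)
    (σ : A → ℝ) (hσ_nonneg : ∀ a, 0 ≤ σ a) (hσ_sum : ∑ a, σ a = 1)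
    (α : Ω → A) (hα_meas : Measurable α)
    (hα_law : ∀ b : A, μ {ω | α ω = b} = ENNReal.ofReal (σ b))
    (hα_indep : IndepFun α (fun ω => fun b => x b ω) μ)
    (Acoef Bcoef : A → A → ℝ)
    (hA_bal : ∀ a, Acoef a a = ∑ c, σ c * Acoef c a)
    (hB_bal : ∀ a, Bcoef a a = ∑ c, σ c * Bcoef c a)
    (σ' : A → Ω → ℝ)
    (hσ' : ∀ a ω, σ' a ω =
      if α ω = a then σ a + (1 - σ a) * (Acoef a a + Bcoef a a * x a ω)
      else σ a - σ a * (Acoef (α ω) a + Bcoef (α ω) a * x (α ω) ω)) :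
    (∀ a : A, (∫ ω, σ' a ω ∂μ) - σ a
        = σ a * ∑ b, Bcoef b a * σ b * ((∫ ω, x a ω ∂μ) - ∫ ω, x b ω ∂μ)) ∧
    ∀ (_ : ∀ a b : A, a ≠ b → 0 ≤ Bcoef b a)
      (Astar : Finset A)
      (_ : ∀ a : A, a ∈ Astar ↔ ∀ b : A, (∫ ω, x b ω ∂μ) ≤ ∫ ω, x a ω ∂μ)
      (hne : (Astar ×ˢ Astarᶜ).Nonempty),
      0 ≤ (Astar ×ˢ Astarᶜ).inf' hne
          (fun p => Bcoef p.2 p.1 * ((∫ ω, x p.1 ω ∂μ) - ∫ ω, x p.2 ω ∂μ)) ∧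
      (Astar ×ˢ Astarᶜ).inf' hne
          (fun p => Bcoef p.2 p.1 * ((∫ ω, x p.1 ω ∂μ) - ∫ ω, x p.2 ω ∂μ))
          * ((∑ a ∈ Astar, σ a) * (1 - ∑ a ∈ Astar, σ a))
        ≤ (∫ ω, ∑ a ∈ Astar, σ' a ω ∂μ) - ∑ a ∈ Astar, σ a := by
  have hx_int : ∀ b, Integrable (x b) μ := fun b =>
    .of_mem_Icc xmin xmax (hx_meas b).aemeasurable (ae_of_all _ (hx_mem b))
  have hσ'_eq : ∀ a, σ' a = fun ω => bmsUpdate σ Acoef Bcoef a (α ω) (x (α ω) ω) := by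
    intro a
    funext ω
    rw [hσ', bmsUpdate]
    split_ifs with h
    · rw [h]
    · rfl
  have hσ'_int : ∀ a, Integrable (σ' a) μ := fun a => by
    rw [hσ'_eq a]
    exact integrable_comp_of_fintype (F := fun b v => bmsUpdate σ Acoef Bcoef a b (v b))
      (X := fun ω b => x b ω) hα_meas fun b => integrable_bmsUpdate σ Acoef Bcoef a b (hx_int b)
  have hα_law' : ∀ b, μ.real {ω | α ω = b} = σ b := fun b => by
    rw [measureReal_def, hα_law b, ENNReal.toReal_ofReal (hσ_nonneg b)]
  have hdrift : ∀ a : A, (∫ ω, σ' a ω ∂μ) - σ a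
      = σ a * ∑ b, Bcoef b a * σ b * ((∫ ω, x a ω ∂μ) - ∫ ω, x b ω ∂μ) := fun a => by
    rw [hσ'_eq a, integral_bmsUpdate_of_indepFun σ Acoef Bcoef hα_meas hx_int hα_law' hα_indep
      hσ_sum a (hA_bal a) (hB_bal a), add_sub_cancel_left]
  refine ⟨hdrift, fun hB Astar hAstar hne => ?_⟩
  have hmax : ∀ a ∈ Astar, ∀ b, ∫ ω, x b ω ∂μ ≤ ∫ ω, x a ω ∂μ := fun a => (hAstar a).1
  refine ⟨Finset.le_inf' hne _ fun p hp => ?_, ?_⟩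
  · obtain ⟨ha, hb⟩ := Finset.mem_product.1 hp
    exact mul_sub_nonneg_of_mem_of_notMem hB hmax ha (Finset.mem_compl.1 hb)
  · rw [integral_finsetSum _ fun a _ => hσ'_int a, ← Finset.sum_sub_distrib,
      Finset.sum_congr rfl fun a _ => hdrift a]
    exact mul_sum_mul_one_sub_le hσ_nonneg hσ_sum hmax fun a ha b hb =>
      Finset.inf'_le (b := (a, b)) _ (Finset.mem_product.2 ⟨ha, Finset.mem_compl.2 hb⟩)
end

section
/- Let A be a finite set of actions, fix c ∈ (0,1], and work on a filtered probability space (Ω, F, (F_t)_{t∈ℕ₀}, ℙ). Let (x_{t+1}(a))_{a∈A}, t ∈ ℕ₀, be [0,1]-valued F_{t+1}-measurable payoffs, let A* := { a ∈ A : E_t[x_{t+1}(a)] ≥ E_t[x_{t+1}(b)] almost surely for all b ∈ A and all t ∈ ℕ₀ }, and suppose inf_{t∈ℕ₀} min_{a∈A*, b∈A∖A*} ( E_t[x_{t+1}(a)] − E_t[x_{t+1}(b)] ) > 0 almost surely. Let σ₀ ∈ Δ(A) with Σ_{a∈A*} σ₀(a) > 0 and define recursively σ_{t+1}(a) := σ_t(a)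 + σ_t(a)·Σ_{b∈A∖{a}} σ_t(b)·(c/(t+2))·( x_{t+1}(a) − x_{t+1}(b) ). Then σ_t ∈ Δ(A) for all t and Σ_{a∈A*} σ_t(a) → 1 almost surely as t → ∞. -/
/-!
With `β t = c / (t + 2)` the update is the replicator map `σ a ↦ σ a (1 + β (x a - ⟪σ, x⟫))`,
so `σ t` stays in the simplex, and the mass `P t` on `A*` satisfies `P (t+1) = P t + β t D t`
with `D t = ∑_{a ∈ A*, b ∉ A*} σ a σ b (x a - x b)`, `|D t| ≤ P t (1 - P t)` and
`E_t D t ≥ ε P t (1 - P t)`. Since `log (1 + u) ≥ u - 2u²` for `|u| ≤ 1/2`, the potential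
`F t = -log P t - 2 ∑_{s<t} β s²` is a supermartingale, bounded below because `∑ β² < ∞`, with
`E_t F (t+1) ≤ F t - β t ε (1 - P t)`. Hence `F t` converges a.s., so `P t` converges to a
positive limit `ℓ`, and `∑ β t ε (1 - P t) < ∞` a.s.; as `∑ β = ∞`, this forces `ℓ = 1`.
-/

open MeasureTheory Filter Set Topology

section Replicator

variable {A : Type*} [Fintype A]

def replicator (β : ℝ) (σ y : A → ℝ) (a : A) : ℝ :=
  σ a * (1 + β * (y a - ∑ b, σ b * y b))

lemma replicator_eq_add_sum_erase [DecidableEq A] {σ : A → ℝ} (hσ : ∑ b, σ b = 1)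
    (β : ℝ) (y : A → ℝ) (a : A) :
    replicator β σ y a = σ a + σ a * ∑ b ∈ Finset.univ.erase a, σ b * (β * (y a - y b)) := by
  have hmean : ∑ b, σ b * (y a - y b) = y a - ∑ b, σ b * y b := by
    simp only [mul_sub, Finset.sum_sub_distrib, ← Finset.sum_mul, hσ, one_mul]
  rw [Finset.sum_erase _ (by simp), replicator]
  simp only [mul_left_comm _ β, ← Finset.mul_sum, hmean]
  ring

lemma sum_mul_mem_Icc {σ y : A → ℝ} (hσ : σ ∈ stdSimplex ℝ A) (hy : ∀ a, y a ∈ Icc 0 1) :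
    ∑ b, σ b * y b ∈ Icc 0 1 := by
  refine ⟨Finset.sum_nonneg fun b _ => mul_nonneg (hσ.1 b) (hy b).1, ?_⟩
  calc ∑ b, σ b * y b ≤ ∑ b, σ b :=
        Finset.sum_le_sum fun b _ => mul_le_of_le_one_right (hσ.1 b) (hy b).2
    _ = 1 := hσ.2

lemma replicator_mem_stdSimplex {β : ℝ} {σ y : A → ℝ} (hσ : σ ∈ stdSimplex ℝ A)
    (hy : ∀ a, y a ∈ Icc 0 1) (hβ : β ∈ Icc 0 1) : replicator β σ y ∈ stdSimplex ℝ A := by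
  obtain ⟨hmean₀, hmean₁⟩ := sum_mul_mem_Icc hσ hy
  refine ⟨fun a => mul_nonneg (hσ.1 a) ?_, ?_⟩
  · have := mul_nonneg hβ.1 (show 0 ≤ y a - ∑ b, σ b * y b + 1 by linarith [(hy a).1])
    nlinarith [hβ.2]
  · simp only [replicator, mul_add, mul_one, Finset.sum_add_distrib, mul_left_comm _ β,
      ← Finset.mul_sum, mul_sub, Finset.sum_sub_distrib, ← Finset.sum_mul, hσ.2]
    ring

variable [DecidableEq A]

lemma mem_stdSimplex_and_eq_replicator {s y : ℕ → A → ℝ} {β : ℕ → ℝ}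
    (h₀ : s 0 ∈ stdSimplex ℝ A) (hy : ∀ t a, y t a ∈ Icc 0 1) (hβ : ∀ t, β t ∈ Icc 0 1)
    (hs : ∀ t a, s (t + 1) a =
      s t a + s t a * ∑ b ∈ Finset.univ.erase a, s t b * (β t * (y t a - y t b)))
    (t : ℕ) : s t ∈ stdSimplex ℝ A ∧ s (t + 1) = replicator (β t) (s t) (y t) := by
  have hsucc : ∀ t, ∑ a, s t a = 1 → s (t + 1) = replicator (β t) (s t) (y t) := fun t h =>
    funext fun a => (hs t a).trans (replicator_eq_add_sum_erase h (β t) (y t) a).symm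
  have hmem : ∀ t, s t ∈ stdSimplex ℝ A := by
    intro t
    induction t with
    | zero => exact h₀
    | succ t ih =>
      rw [hsucc t ih.2]
      exact replicator_mem_stdSimplex ih (hy t) (hβ t)
  exact ⟨hmem t, hsucc t (hmem t).2⟩

def pairGap (S : Finset A) (σ y : A → ℝ) : ℝ :=
  ∑ p ∈ S ×ˢ Sᶜ, σ p.1 * σ p.2 * (y p.1 - y p.2)

lemma sum_compl_eq_one_sub {σ : A → ℝ} (hσ : ∑ a, σ a = 1) (S : Finset A) :
    ∑ b ∈ Sᶜ, σ b = 1 - ∑ a ∈ S, σ a := by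
  rw [← hσ, ← Finset.sum_add_sum_compl S]
  ring

lemma sum_product_compl_mul {σ : A → ℝ} (hσ : ∑ a, σ a = 1) (S : Finset A) :
    ∑ p ∈ S ×ˢ Sᶜ, σ p.1 * σ p.2 = (∑ a ∈ S, σ a) * (1 - ∑ a ∈ S, σ a) := by
  rw [Finset.sum_product, ← sum_compl_eq_one_sub hσ, Finset.sum_mul_sum]

lemma sum_replicator {σ : A → ℝ} (hσ : ∑ a, σ a = 1) (β : ℝ) (y : A → ℝ) (S : Finset A) :
    ∑ a ∈ S, replicator β σ y a = ∑ a ∈ S, σ a + β * pairGap S σ y := by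
  have hgap : pairGap S σ y =
      (∑ a ∈ S, σ a * y a) * ∑ b ∈ Sᶜ, σ b - (∑ a ∈ S, σ a) * ∑ b ∈ Sᶜ, σ b * y b := by
    simp only [pairGap, Finset.sum_product, Finset.sum_mul_sum, ← Finset.sum_sub_distrib]
    exact Finset.sum_congr rfl fun a _ => Finset.sum_congr rfl fun b _ => by ring
  have hmean : ∑ b, σ b * y b = ∑ a ∈ S, σ a * y a + ∑ b ∈ Sᶜ, σ b * y b :=
    (Finset.sum_add_sum_compl S _).symm
  simp only [replicator, hgap, sum_compl_eq_one_sub hσ, hmean, mul_add, mul_one,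
    Finset.sum_add_distrib, mul_left_comm _ β, ← Finset.mul_sum, mul_sub, Finset.sum_sub_distrib,
    ← Finset.sum_mul]
  ring

lemma abs_pairGap_le {σ y : A → ℝ} (hσ : σ ∈ stdSimplex ℝ A) (hy : ∀ a, y a ∈ Icc 0 1)
    (S : Finset A) : |pairGap S σ y| ≤ (∑ a ∈ S, σ a) * (1 - ∑ a ∈ S, σ a) := by
  rw [← sum_product_compl_mul hσ.2]
  refine (Finset.abs_sum_le_sum_abs _ _).trans (Finset.sum_le_sum fun p _ => ?_)
  have hσσ : 0 ≤ σ p.1 * σ p.2 := mul_nonneg (hσ.1 _) (hσ.1 _)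
  have hdiff : |y p.1 - y p.2| ≤ 1 :=
    abs_sub_le_iff.2 ⟨by linarith [(hy p.1).2, (hy p.2).1], by linarith [(hy p.1).1, (hy p.2).2]⟩
  rw [abs_mul, abs_of_nonneg hσσ]
  exact mul_le_of_le_one_right hσσ hdiff

end Replicator

lemma sub_two_mul_sq_le_log_one_add {u : ℝ} (hu : |u| ≤ 1 / 2) :
    u - 2 * u ^ 2 ≤ Real.log (1 + u) := by
  obtain ⟨hu₁, hu₂⟩ := abs_le.1 hu
  have hpos : 0 < 1 + u := by linarith
  have hinv : u - 2 * u ^ 2 ≤ 1 - (1 + u)⁻¹ := by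
    have hform : 1 - (1 + u)⁻¹ = u / (1 + u) := by field_simp; ring
    rw [hform, le_div_iff₀ hpos]
    nlinarith [mul_nonneg (sq_nonneg u) (show 0 ≤ 1 + 2 * u by linarith)]
  exact hinv.trans (Real.one_sub_inv_le_log_of_pos hpos)

section ScalarStep

variable {p d β : ℝ}

lemma half_le_add_mul (hp : p ∈ Icc 0 1) (hd : |d| ≤ p * (1 - p)) (hβ : β ∈ Icc 0 (1 / 2)) :
    p / 2 ≤ p + β * d := by
  have hβd : |β * d| ≤ p / 2 := by
    rw [abs_mul, abs_of_nonneg hβ.1]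
    nlinarith [abs_nonneg d, hβ.2, hp.1, hp.2]
  linarith [neg_abs_le (β * d)]

lemma neg_log_add_mul_le (hp₀ : 0 < p) (hd : |d| ≤ p * (1 - p)) (hβ : β ∈ Icc 0 (1 / 2)) :
    -Real.log (p + β * d) ≤ -Real.log p - β / p * d + 2 * β ^ 2 := by
  set u := β / p * d
  have hu : |u| ≤ β := calc
    |u| = β / p * |d| := by rw [abs_mul, abs_of_nonneg (div_nonneg hβ.1 hp₀.le)]
    _ ≤ β / p * (p * (1 - p)) := by gcongr; exact div_nonneg hβ.1 hp₀.le
    _ = β * (1 - p) := by field_simp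
    _ ≤ β := by nlinarith [hβ.1]
  have hsplit : p + β * d = p * (1 + u) := by simp only [u]; field_simp
  have h1u : 0 < 1 + u := by linarith [neg_abs_le u, hβ.2]
  rw [hsplit, Real.log_mul hp₀.ne' h1u.ne']
  have hu2 : u ^ 2 ≤ β ^ 2 := by
    rw [← sq_abs]; exact pow_le_pow_left₀ (abs_nonneg u) hu 2
  linarith [sub_two_mul_sq_le_log_one_add (hu.trans hβ.2)]

end ScalarStep

lemma nonpos_of_tendsto_of_summable_mul {β y : ℕ → ℝ} {L : ℝ} (hβ : ∀ t, 0 ≤ β t)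
    (hβ_not : ¬Summable β) (hy : Tendsto y atTop (𝓝 L)) (hβy : Summable fun t => β t * y t) :
    L ≤ 0 := by
  by_contra! hL
  refine hβ_not (Summable.of_norm_bounded_eventually (hβy.mul_left (2 / L)) ?_)
  have hlarge : ∀ᶠ t in atTop, L / 2 ≤ y t := hy.eventually (Ici_mem_nhds (by linarith))
  filter_upwards [Nat.cofinite_eq_atTop ▸ hlarge] with t ht
  rw [Real.norm_of_nonneg (hβ t)]
  calc β t = 2 / L * (β t * (L / 2)) := by field_simp
    _ ≤ 2 / L * (β t * y t) := by gcongr; exact hβ t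

lemma div_nat_add_two_mem_Icc {c : ℝ} (hc : c ∈ Ioc 0 1) (t : ℕ) :
    c / ((t : ℝ) + 2) ∈ Icc 0 (1 / 2) := by
  refine ⟨div_nonneg hc.1.le (by positivity), ?_⟩
  rw [div_le_iff₀ (by positivity)]
  linarith [hc.2, (Nat.cast_nonneg t : (0 : ℝ) ≤ t)]

lemma summable_div_nat_add_two_sq (c : ℝ) : Summable fun t : ℕ => (c / ((t : ℝ) + 2)) ^ 2 := by
  have h := (summable_nat_add_iff 2).2 (Real.summable_one_div_nat_pow.2 one_lt_two)
  refine (h.mul_left (c ^ 2)).congr fun t => ?_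
  push_cast
  field_simp

lemma not_summable_div_nat_add_two {c : ℝ} (hc : c ≠ 0) :
    ¬Summable fun t : ℕ => c / ((t : ℝ) + 2) := by
  intro h
  refine Real.not_summable_natCast_inv
    ((summable_nat_add_iff 2).1 ((h.mul_left c⁻¹).congr fun t => ?_))
  push_cast
  field_simp

section Martingale

variable {Ω : Type*} {mΩ : MeasurableSpace Ω} {μ : Measure Ω}

theorem MeasureTheory.Supermartingale.exists_ae_tendsto_of_forall_le [IsFiniteMeasure μ]
    {𝓕 : Filtration ℕ mΩ} {F : ℕ → Ω → ℝ} (hF : Supermartingale F 𝓕 μ) {C : ℝ}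
    (hC : ∀ t ω, C ≤ F t ω) : ∀ᵐ ω ∂μ, ∃ L, Tendsto (fun t => F t ω) atTop (𝓝 L) := by
  set R := ∫ ω, F 0 ω ∂μ + μ.real univ * (2 * |C|)
  have hbdd : ∀ t, eLpNorm ((-F) t) 1 μ ≤ R.toNNReal := by
    intro t
    have habs : ∀ ω, |F t ω| ≤ F t ω + 2 * |C| := fun ω => by
      cases abs_cases (F t ω) <;> cases abs_cases C <;> linarith [hC t ω]
    have hint : ∫ ω, |F t ω| ∂μ ≤ R := calc
      ∫ ω, |F t ω| ∂μ ≤ ∫ ω, (F t ω + 2 * |C|) ∂μ :=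
        integral_mono (hF.integrable t).abs ((hF.integrable t).add (integrable_const _)) habs
      _ = ∫ ω, F t ω ∂μ + μ.real univ * (2 * |C|) := by
        rw [integral_add (hF.integrable t) (integrable_const _), integral_const, smul_eq_mul]
      _ ≤ R := by
        have := hF.setIntegral_le (Nat.zero_le t) MeasurableSet.univ
        simp only [setIntegral_univ] at this
        linarith
    rw [Pi.neg_apply, eLpNorm_neg, eLpNorm_one_eq_lintegral_enorm,
      ← ofReal_integral_norm_eq_lintegral_enorm (hF.integrable t)]
    exact ENNReal.ofReal_le_ofReal (by simpa only [Real.norm_eq_abs] using hint)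
  filter_upwards [hF.neg.exists_ae_tendsto_of_bdd hbdd] with ω ⟨L, hL⟩
  exact ⟨-L, by simpa using hL.neg⟩

lemma summable_integral_of_condExp_le_sub [IsProbabilityMeasure μ] {𝓕 : Filtration ℕ mΩ}
    {F Y : ℕ → Ω → ℝ} {C : ℝ} (hF_int : ∀ t, Integrable (F t) μ) (hC : ∀ t ω, C ≤ F t ω)
    (hY_int : ∀ t, Integrable (Y t) μ) (hY_nonneg : ∀ t ω, 0 ≤ Y t ω)
    (hstep : ∀ t, μ[F (t + 1)|𝓕 t] ≤ᵐ[μ] F t - Y t) :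
    Summable fun t => ∫ ω, Y t ω ∂μ := by
  have hdecr : ∀ t, ∫ ω, Y t ω ∂μ ≤ ∫ ω, F t ω ∂μ - ∫ ω, F (t + 1) ω ∂μ := by
    intro t
    have := integral_mono_ae integrable_condExp ((hF_int t).sub (hY_int t)) (hstep t)
    rw [integral_condExp (𝓕.le t), integral_sub' (hF_int t) (hY_int t)] at this
    linarith
  refine summable_of_sum_range_le (c := ∫ ω, F 0 ω ∂μ - C)
    (fun t => integral_nonneg (hY_nonneg t)) fun n => ?_
  have hlow : C ≤ ∫ ω, F n ω ∂μ := by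
    simpa using integral_mono (integrable_const C) (hF_int n) (hC n)
  calc ∑ t ∈ Finset.range n, ∫ ω, Y t ω ∂μ
      ≤ ∑ t ∈ Finset.range n, (∫ ω, F t ω ∂μ - ∫ ω, F (t + 1) ω ∂μ) :=
        Finset.sum_le_sum fun t _ => hdecr t
    _ = ∫ ω, F 0 ω ∂μ - ∫ ω, F n ω ∂μ := Finset.sum_range_sub' _ n
    _ ≤ ∫ ω, F 0 ω ∂μ - C := by linarith

lemma ae_summable_of_summable_integral {Y : ℕ → Ω → ℝ} (hY_int : ∀ t, Integrable (Y t) μ)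
    (hY_nonneg : ∀ t ω, 0 ≤ Y t ω) (hY : Summable fun t => ∫ ω, Y t ω ∂μ) :
    ∀ᵐ ω ∂μ, Summable fun t => Y t ω := by
  have hnorm : ∀ t, eLpNorm (Y t) 1 μ = ENNReal.ofReal (∫ ω, Y t ω ∂μ) := fun t => by
    rw [eLpNorm_one_eq_lintegral_enorm, ofReal_integral_eq_lintegral_ofReal (hY_int t)
      (ae_of_all _ (hY_nonneg t))]
    exact lintegral_congr fun ω => Real.enorm_of_nonneg (hY_nonneg t ω)
  have hfin : ∑' t, eLpNorm (Y t) 1 μ ≠ ⊤ := by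
    simp_rw [hnorm, ← ENNReal.ofReal_tsum_of_nonneg (fun t => integral_nonneg (hY_nonneg t)) hY]
    exact ENNReal.ofReal_ne_top
  filter_upwards [summable_norm_of_tsum_eLpNorm_ne_top le_rfl
    (fun t => (hY_int t).aestronglyMeasurable) hfin] with ω hω
  simpa only [Real.norm_of_nonneg (hY_nonneg _ ω)] using hω

lemma condExp_le_sub_mul_condExp {m : MeasurableSpace Ω} (hm : m ≤ mΩ) [SigmaFinite (μ.trim hm)]
    {f g h d : Ω → ℝ} (hf : Integrable f μ) (hg_meas : StronglyMeasurable[m] g)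
    (hg : Integrable g μ) (hh_meas : StronglyMeasurable[m] h) (hhd : Integrable (h * d) μ)
    (hd : Integrable d μ) (hle : ∀ ω, f ω ≤ g ω - h ω * d ω) :
    μ[f|m] ≤ᵐ[μ] g - h * μ[d|m] := by
  have hmono := condExp_mono (m := m) hf (hg.sub hhd) (ae_of_all _ hle)
  filter_upwards [hmono, condExp_sub hg hhd m,
    condExp_mul_of_stronglyMeasurable_left hh_meas hhd hd] with ω h₁ h₂ h₃
  rw [condExp_of_stronglyMeasurable hm hg_meas hg] at h₂
  simp only [Pi.sub_apply, Pi.mul_apply] at h₁ h₂ h₃ ⊢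
  rw [← h₃, ← h₂]
  exact h₁

lemma mul_sum_le_condExp_sum_mul {m : MeasurableSpace Ω} {ι : Type*} {s : Finset ι}
    {f g : ι → Ω → ℝ} {ε : Ω → ℝ} (hf_meas : ∀ i ∈ s, StronglyMeasurable[m] (f i))
    (hf_nonneg : ∀ i ∈ s, ∀ ω, 0 ≤ f i ω) (hfg : ∀ i ∈ s, Integrable (f i * g i) μ)
    (hg : ∀ i ∈ s, Integrable (g i) μ) (hgap : ∀ i ∈ s, ∀ᵐ ω ∂μ, ε ω ≤ μ[g i|m] ω) :
    ∀ᵐ ω ∂μ, ε ω * ∑ i ∈ s, f i ω ≤ μ[∑ i ∈ s, f i * g i|m] ω := by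
  have hpull : ∀ i ∈ s, ∀ᵐ ω ∂μ, ε ω * f i ω ≤ μ[f i * g i|m] ω := fun i hi => by
    filter_upwards [hgap i hi, condExp_mul_of_stronglyMeasurable_left (hf_meas i hi) (hfg i hi)
      (hg i hi)] with ω hε hmul
    rw [hmul, Pi.mul_apply, mul_comm]
    exact mul_le_mul_of_nonneg_left hε (hf_nonneg i hi ω)
  filter_upwards [condExp_finsetSum hfg m, (eventually_all_finset s).2 hpull] with ω hsum hle
  rw [hsum, Finset.sum_apply, Finset.mul_sum]
  exact Finset.sum_le_sum hle

end Martingale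

lemma mul_half_pow_le {p d β : ℕ → ℝ} {p₀ : ℝ} (hp₀ : 0 ≤ p₀) (hp₀_le : p₀ ≤ p 0)
    (hp_le : ∀ t, p t ≤ 1) (hd : ∀ t, |d t| ≤ p t * (1 - p t)) (hβ : ∀ t, β t ∈ Icc 0 (1 / 2))
    (hrec : ∀ t, p (t + 1) = p t + β t * d t) (t : ℕ) : p₀ * (1 / 2) ^ t ≤ p t := by
  induction t with
  | zero => simpa using hp₀_le
  | succ t ih =>
    have hpt : p t ∈ Icc 0 1 := ⟨le_trans (by positivity) ih, hp_le t⟩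
    rw [pow_succ, hrec]
    linarith [half_le_add_mul hpt (hd t) (hβ t)]

section Potential

variable {Ω : Type*} {mΩ : MeasurableSpace Ω} {μ : Measure Ω} {P D : ℕ → Ω → ℝ} {β : ℕ → ℝ}

noncomputable def logPotential (β : ℕ → ℝ) (P : ℕ → Ω → ℝ) (t : ℕ) (ω : Ω) : ℝ :=
  -Real.log (P t ω) - 2 * ∑ s ∈ Finset.range t, β s ^ 2

lemma measurable_logPotential {m : MeasurableSpace Ω} {t : ℕ} (hP : Measurable[m] (P t)) :
    Measurable[m] (logPotential β P t) :=
  (Real.measurable_log.comp hP).neg.sub_const _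

lemma integrable_logPotential [IsFiniteMeasure μ] {t : ℕ} {c : ℝ} (hc : 0 < c)
    (hP_meas : Measurable (P t)) (hP : ∀ ω, P t ω ∈ Icc c 1) :
    Integrable (logPotential β P t) μ := by
  refine Integrable.of_bound (measurable_logPotential hP_meas).aestronglyMeasurable
    (-Real.log c + 2 * ∑ s ∈ Finset.range t, β s ^ 2) (ae_of_all _ fun ω => ?_)
  have hlog_le : Real.log c ≤ Real.log (P t ω) := Real.log_le_log hc (hP ω).1
  have hlog_nonpos : Real.log (P t ω) ≤ 0 := Real.log_nonpos (hc.le.trans (hP ω).1) (hP ω).2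
  have hK : 0 ≤ ∑ s ∈ Finset.range t, β s ^ 2 := Finset.sum_nonneg fun s _ => sq_nonneg _
  rw [Real.norm_eq_abs, logPotential, abs_le]
  constructor <;> linarith

lemma condExp_logPotential_succ_le [IsFiniteMeasure μ] {𝓕 : Filtration ℕ mΩ} {ε : Ω → ℝ}
    {t : ℕ} {c : ℝ} (hc : 0 < c) (hP_meas : StronglyAdapted 𝓕 P)
    (hP : ∀ ω, P t ω ∈ Icc c 1) (hP_le : ∀ ω, P (t + 1) ω ≤ 1) (hβ : β t ∈ Icc 0 (1 / 2))
    (hD_meas : AEStronglyMeasurable (D t) μ) (hD : ∀ ω, |D t ω| ≤ P t ω * (1 - P t ω))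
    (hrec : ∀ ω, P (t + 1) ω = P t ω + β t * D t ω)
    (hdrift : ∀ᵐ ω ∂μ, ε ω * (P t ω * (1 - P t ω)) ≤ μ[D t|𝓕 t] ω) :
    μ[logPotential β P (t + 1)|𝓕 t] ≤ᵐ[μ]
      fun ω => logPotential β P t ω - β t * (ε ω * (1 - P t ω)) := by
  have hPt_pos : ∀ ω, 0 < P t ω := fun ω => hc.trans_le (hP ω).1
  have hD_int : Integrable (D t) μ := Integrable.of_bound hD_meas 1 (ae_of_all _ fun ω => by
    rw [Real.norm_eq_abs]; nlinarith [hD ω, (hP ω).1, (hP ω).2, hPt_pos ω])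
  set g : Ω → ℝ := fun ω => β t / P t ω
  have hg_meas : StronglyMeasurable[𝓕 t] g :=
    ((hP_meas t).measurable.const_div (β t)).stronglyMeasurable
  have hgD_int : Integrable (g * D t) μ := hD_int.bdd_mul
    (hg_meas.mono (𝓕.le t)).aestronglyMeasurable (c := β t / c) (ae_of_all _ fun ω => by
      rw [Real.norm_eq_abs, abs_of_nonneg (div_nonneg hβ.1 (hPt_pos ω).le)]
      exact div_le_div_of_nonneg_left hβ.1 hc (hP ω).1)
  have hP_succ : ∀ ω, P (t + 1) ω ∈ Icc (c / 2) 1 := fun ω => ⟨by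
    rw [hrec]; linarith [(hP ω).1, half_le_add_mul ⟨(hPt_pos ω).le, (hP ω).2⟩ (hD ω) hβ], hP_le ω⟩
  have hle : ∀ ω, logPotential β P (t + 1) ω ≤ logPotential β P t ω - g ω * D t ω := fun ω => by
    simp only [logPotential, Finset.sum_range_succ, hrec]
    linarith [neg_log_add_mul_le (hPt_pos ω) (hD ω) hβ]
  have hcond := condExp_le_sub_mul_condExp (𝓕.le t)
    (integrable_logPotential (half_pos hc) ((hP_meas (t + 1)).mono (𝓕.le _)).measurable hP_succ)
    (measurable_logPotential (hP_meas t).measurable).stronglyMeasurable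
    (integrable_logPotential hc ((hP_meas t).mono (𝓕.le t)).measurable hP)
    hg_meas hgD_int hD_int hle
  filter_upwards [hcond, hdrift] with ω hω hdω
  have hgdrift : β t * (ε ω * (1 - P t ω)) ≤ g ω * μ[D t|𝓕 t] ω := calc
    β t * (ε ω * (1 - P t ω)) = g ω * (ε ω * (P t ω * (1 - P t ω))) := by
      have := (hPt_pos ω).ne'
      simp only [g]
      field_simp
    _ ≤ g ω * μ[D t|𝓕 t] ω := mul_le_mul_of_nonneg_left hdω (div_nonneg hβ.1 (hPt_pos ω).le)
  simp only [Pi.sub_apply, Pi.mul_apply] at hω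
  linarith

lemma tendsto_one_of_tendsto_logPotential {ω : Ω} {L e : ℝ} (hP : ∀ t, 0 < P t ω)
    (hP_le : ∀ t, P t ω ≤ 1) (hβ : ∀ t, 0 ≤ β t) (hβ_sq : Summable fun t => β t ^ 2)
    (hβ_not : ¬Summable β) (he : 0 < e)
    (hL : Tendsto (fun t => logPotential β P t ω) atTop (𝓝 L))
    (hdrift : Summable fun t => β t * (e * (1 - P t ω))) :
    Tendsto (fun t => P t ω) atTop (𝓝 1) := by
  have hK := hβ_sq.hasSum.tendsto_sum_nat.const_mul 2
  have hlog : Tendsto (fun t => Real.log (P t ω)) atTop (𝓝 (-(L + 2 * ∑' t, β t ^ 2))) :=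
    ((hL.add hK).neg).congr fun t => by simp only [logPotential]; ring
  have hlim := ((Real.continuous_exp.tendsto _).comp hlog).congr fun t => Real.exp_log (hP t)
  set ℓ := Real.exp (-(L + 2 * ∑' t, β t ^ 2))
  have hℓ_le : ℓ ≤ 1 := le_of_tendsto' hlim hP_le
  have hgap : e * (1 - ℓ) ≤ 0 := nonpos_of_tendsto_of_summable_mul hβ hβ_not
    (tendsto_const_nhds.mul (tendsto_const_nhds.sub hlim)) hdrift
  have hℓ : ℓ = 1 := by nlinarith
  rwa [hℓ] at hlim

theorem ae_tendsto_one_of_drift [IsProbabilityMeasure μ] {𝓕 : Filtration ℕ mΩ} {ε : Ω → ℝ}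
    {p₀ : ℝ} (hp₀ : 0 < p₀) (hP_adapted : StronglyAdapted 𝓕 P) (hP₀ : ∀ ω, p₀ ≤ P 0 ω)
    (hP_le : ∀ t ω, P t ω ≤ 1) (hβ : ∀ t, β t ∈ Icc 0 (1 / 2))
    (hβ_sq : Summable fun t => β t ^ 2) (hβ_not : ¬Summable β)
    (hD_meas : ∀ t, AEStronglyMeasurable (D t) μ) (hD : ∀ t ω, |D t ω| ≤ P t ω * (1 - P t ω))
    (hrec : ∀ t ω, P (t + 1) ω = P t ω + β t * D t ω)
    (hε_meas : AEStronglyMeasurable ε μ) (hε : ∀ ω, ε ω ∈ Icc 0 1) (hε_pos : ∀ᵐ ω ∂μ, 0 < ε ω)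
    (hdrift : ∀ t, ∀ᵐ ω ∂μ, ε ω * (P t ω * (1 - P t ω)) ≤ μ[D t|𝓕 t] ω) :
    ∀ᵐ ω ∂μ, Tendsto (fun t => P t ω) atTop (𝓝 1) := by
  have hlb : ∀ t ω, p₀ * (1 / 2) ^ t ≤ P t ω := fun t ω =>
    mul_half_pow_le hp₀.le (hP₀ ω) (hP_le · ω) (hD · ω) hβ (hrec · ω) t
  have hc : ∀ t, 0 < p₀ * (1 / 2) ^ t := fun t => by positivity
  have hP : ∀ t ω, P t ω ∈ Icc (p₀ * (1 / 2) ^ t) 1 := fun t ω => ⟨hlb t ω, hP_le t ω⟩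
  set F := logPotential β P
  set Y : ℕ → Ω → ℝ := fun t ω => β t * (ε ω * (1 - P t ω))
  have hεP : ∀ t ω, ε ω * (1 - P t ω) ∈ Icc 0 1 := fun t ω =>
    ⟨mul_nonneg (hε ω).1 (sub_nonneg.2 (hP_le t ω)),
      mul_le_one₀ (hε ω).2 (sub_nonneg.2 (hP_le t ω)) (by linarith [hlb t ω, hc t])⟩
  have hY_nonneg : ∀ t ω, 0 ≤ Y t ω := fun t ω => mul_nonneg (hβ t).1 (hεP t ω).1
  have hY_int : ∀ t, Integrable (Y t) μ := fun t => Integrable.of_bound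
    (aestronglyMeasurable_const.mul (hε_meas.mul (aestronglyMeasurable_const.sub
      ((hP_adapted t).mono (𝓕.le t)).aestronglyMeasurable))) 1 (ae_of_all _ fun ω => by
    rw [Real.norm_of_nonneg (hY_nonneg t ω)]
    exact mul_le_one₀ ((hβ t).2.trans (by norm_num)) (hεP t ω).1 (hεP t ω).2)
  have hF_int : ∀ t, Integrable (F t) μ := fun t =>
    integrable_logPotential (hc t) ((hP_adapted t).mono (𝓕.le t)).measurable (hP t)
  have hF_lb : ∀ t ω, -(2 * ∑' s, β s ^ 2) ≤ F t ω := fun t ω => by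
    have hK := hβ_sq.sum_le_tsum (Finset.range t) (fun s _ => sq_nonneg (β s))
    have hlog := Real.log_nonpos ((hc t).le.trans (hlb t ω)) (hP_le t ω)
    simp only [F, logPotential]
    linarith
  have hstep : ∀ t, μ[F (t + 1)|𝓕 t] ≤ᵐ[μ] F t - Y t := fun t =>
    condExp_logPotential_succ_le (hc t) hP_adapted (hP t) (hP_le (t + 1)) (hβ t) (hD_meas t)
      (hD t) (hrec t) (hdrift t)
  have hsuper : Supermartingale F 𝓕 μ := supermartingale_nat
    (fun t => (measurable_logPotential (hP_adapted t).measurable).stronglyMeasurable) hF_int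
    fun t => (hstep t).trans (ae_of_all _ fun ω => sub_le_self _ (hY_nonneg t ω))
  have hY_sum := ae_summable_of_summable_integral hY_int hY_nonneg
    (summable_integral_of_condExp_le_sub hF_int hF_lb hY_int hY_nonneg hstep)
  filter_upwards [hsuper.exists_ae_tendsto_of_forall_le hF_lb, hY_sum, hε_pos]
    with ω ⟨L, hL⟩ hYω hεω
  exact tendsto_one_of_tendsto_logPotential (fun t => (hc t).trans_le (hlb t ω)) (hP_le · ω)
    (fun t => (hβ t).1) hβ_sq hβ_not hεω hL hYω

end Potential

section RandomReplicator

variable {Ω A : Type*} {mΩ : MeasurableSpace Ω} {μ : Measure Ω} [Fintype A]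

lemma integrable_pairGap_term {m : MeasurableSpace Ω} (hm : m ≤ mΩ) {σ y : A → Ω → ℝ}
    (hσ_meas : ∀ a, StronglyMeasurable[m] (σ a)) (hσ : ∀ ω, (σ · ω) ∈ stdSimplex ℝ A)
    (hy_int : ∀ a, Integrable (y a) μ) (a b : A) :
    Integrable ((fun ω => σ a ω * σ b ω) * (y a - y b)) μ := by
  have hσ_le : ∀ a ω, σ a ω ≤ 1 := fun a ω =>
    (Finset.single_le_sum (fun b _ => (hσ ω).1 b) (Finset.mem_univ a)).trans (hσ ω).2.le
  refine ((hy_int a).sub (hy_int b)).bdd_mul (c := 1)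
    (((hσ_meas a).mul (hσ_meas b)).mono hm).aestronglyMeasurable (ae_of_all _ fun ω => ?_)
  rw [Real.norm_of_nonneg (mul_nonneg ((hσ ω).1 a) ((hσ ω).1 b))]
  exact mul_le_one₀ (hσ_le a ω) ((hσ ω).1 b) (hσ_le b ω)

variable [DecidableEq A]

lemma pairGap_eq_sum_mul (S : Finset A) (σ y : A → Ω → ℝ) :
    (fun ω => pairGap S (σ · ω) (y · ω)) =
      ∑ p ∈ S ×ˢ Sᶜ, (fun ω => σ p.1 ω * σ p.2 ω) * (y p.1 - y p.2) := by
  ext ω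
  simp only [pairGap, Finset.sum_apply, Pi.mul_apply, Pi.sub_apply]

lemma integrable_pairGap {m : MeasurableSpace Ω} (hm : m ≤ mΩ) {S : Finset A}
    {σ y : A → Ω → ℝ} (hσ_meas : ∀ a, StronglyMeasurable[m] (σ a))
    (hσ : ∀ ω, (σ · ω) ∈ stdSimplex ℝ A) (hy_int : ∀ a, Integrable (y a) μ) :
    Integrable (fun ω => pairGap S (σ · ω) (y · ω)) μ := by
  rw [pairGap_eq_sum_mul]
  exact integrable_finsetSum' _ fun p _ => integrable_pairGap_term hm hσ_meas hσ hy_int p.1 p.2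

lemma ae_mul_le_condExp_pairGap {m : MeasurableSpace Ω} (hm : m ≤ mΩ) {S : Finset A}
    {σ y : A → Ω → ℝ} {ε : Ω → ℝ} (hσ_meas : ∀ a, StronglyMeasurable[m] (σ a))
    (hσ : ∀ ω, (σ · ω) ∈ stdSimplex ℝ A) (hy_int : ∀ a, Integrable (y a) μ)
    (hgap : ∀ a ∈ S, ∀ b ∉ S, ∀ᵐ ω ∂μ, ε ω ≤ μ[y a|m] ω - μ[y b|m] ω) :
    ∀ᵐ ω ∂μ, ε ω * ((∑ a ∈ S, σ a ω) * (1 - ∑ a ∈ S, σ a ω)) ≤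
      μ[fun ω => pairGap S (σ · ω) (y · ω)|m] ω := by
  have hgap' : ∀ p ∈ S ×ˢ Sᶜ, ∀ᵐ ω ∂μ, ε ω ≤ μ[y p.1 - y p.2|m] ω := fun p hp => by
    rw [Finset.mem_product, Finset.mem_compl] at hp
    filter_upwards [hgap p.1 hp.1 p.2 hp.2, condExp_sub (hy_int p.1) (hy_int p.2) m] with ω h h'
    rwa [h']
  filter_upwards [mul_sum_le_condExp_sum_mul (fun p _ => (hσ_meas p.1).mul (hσ_meas p.2))
    (fun p _ ω => mul_nonneg ((hσ ω).1 p.1) ((hσ ω).1 p.2))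
    (fun p _ => integrable_pairGap_term hm hσ_meas hσ hy_int p.1 p.2)
    (fun p _ => (hy_int p.1).sub (hy_int p.2)) hgap'] with ω hω
  rwa [pairGap_eq_sum_mul, ← sum_product_compl_mul (hσ ω).2]

end RandomReplicator

lemma exists_mem_Icc_le_of_ae_pos {Ω : Type*} {mΩ : MeasurableSpace Ω} {μ : Measure Ω}
    {ε : Ω → ℝ} (hε_meas : Measurable ε) (hε_pos : ∀ᵐ ω ∂μ, 0 < ε ω) :
    ∃ ε' : Ω → ℝ, Measurable ε' ∧ (∀ ω, ε' ω ∈ Icc 0 1) ∧ (∀ᵐ ω ∂μ, 0 < ε' ω) ∧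
      ∀ᵐ ω ∂μ, ε' ω ≤ ε ω :=
  ⟨fun ω => max 0 (min (ε ω) 1), measurable_const.max (hε_meas.min measurable_const),
    fun _ => ⟨le_max_left _ _, max_le zero_le_one (min_le_right _ _)⟩,
    hε_pos.mono fun _ h => lt_max_of_lt_right (lt_min h one_pos),
    hε_pos.mono fun _ h => max_le h.le (min_le_left _ _)⟩

theorem stmt13_general {Ω : Type*} {mΩ : MeasurableSpace Ω}
    {μ : Measure Ω} [IsProbabilityMeasure μ] (𝓕 : Filtration ℕ mΩ)
    {A : Type*} [Fintype A] [DecidableEq A]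
    (c : ℝ) (hc : c ∈ Set.Ioc (0 : ℝ) 1)
    (x : ℕ → A → Ω → ℝ)
    (hx_mem : ∀ (t : ℕ) (a : A) (ω : Ω), x (t + 1) a ω ∈ Set.Icc (0 : ℝ) 1)
    (hx_int : ∀ (t : ℕ) (a : A), Integrable (x (t + 1) a) μ)
    (Astar : Finset A)
    (ε : Ω → ℝ) (hε_meas : Measurable ε) (hε_pos : ∀ᵐ ω ∂μ, 0 < ε ω)
    (hgap : ∀ t : ℕ, ∀ a ∈ Astar, ∀ b ∉ Astar, ∀ᵐ ω ∂μ,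
      ε ω ≤ (μ[x (t + 1) a|𝓕 t]) ω - (μ[x (t + 1) b|𝓕 t]) ω)
    (σ₀ : A → ℝ) (hσ₀_nonneg : ∀ a, 0 ≤ σ₀ a) (hσ₀_sum : ∑ a, σ₀ a = 1)
    (hP0 : 0 < ∑ a ∈ Astar, σ₀ a)
    (σ : ℕ → A → Ω → ℝ)
    (hσ_meas : ∀ (t : ℕ) (a : A), StronglyMeasurable[𝓕 t] (σ t a))
    (hσ_init : ∀ (a : A) (ω : Ω), σ 0 a ω = σ₀ a)
    (hrec : ∀ (t : ℕ) (a : A) (ω : Ω), σ (t + 1) a ω =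
      σ t a ω + σ t a ω * ∑ b ∈ Finset.univ.erase a,
        σ t b ω * ((c / ((t : ℝ) + 2)) * (x (t + 1) a ω - x (t + 1) b ω))) :
    (∀ (t : ℕ) (ω : Ω), (∀ a, 0 ≤ σ t a ω) ∧ ∑ a, σ t a ω = 1) ∧
    ∀ᵐ ω ∂μ, Tendsto (fun t => ∑ a ∈ Astar, σ t a ω) atTop (nhds 1) := by
  set β : ℕ → ℝ := fun t => c / ((t : ℝ) + 2)
  have hβ : ∀ t, β t ∈ Icc 0 (1 / 2) := div_nat_add_two_mem_Icc hc
  have htraj := fun ω => mem_stdSimplex_and_eq_replicator (s := (σ · · ω))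
    (y := fun t a => x (t + 1) a ω) (β := β) (by simpa only [hσ_init] using ⟨hσ₀_nonneg, hσ₀_sum⟩)
    (fun t a => hx_mem t a ω) (fun t => Icc_subset_Icc_right (by norm_num) (hβ t))
    (fun t a => hrec t a ω)
  have hsimplex : ∀ t ω, (σ t · ω) ∈ stdSimplex ℝ A := fun t ω => (htraj ω t).1
  refine ⟨hsimplex, ?_⟩
  -- `ε` need not be integrable; its truncation to `[0, 1]` still bounds the gap
  obtain ⟨ε', hε'_meas, hε', hε'_pos, hε'_le⟩ := exists_mem_Icc_le_of_ae_pos hε_meas hε_pos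
  have hgap' : ∀ t, ∀ a ∈ Astar, ∀ b ∉ Astar, ∀ᵐ ω ∂μ,
      ε' ω ≤ (μ[x (t + 1) a|𝓕 t]) ω - (μ[x (t + 1) b|𝓕 t]) ω := fun t a ha b hb => by
    filter_upwards [hgap t a ha b hb, hε'_le] with ω h h' using h'.trans h
  refine ae_tendsto_one_of_drift (𝓕 := 𝓕) hP0 (β := β)
    (D := fun t ω => pairGap Astar (σ t · ω) (x (t + 1) · ω))
    (fun t => Finset.stronglyMeasurable_fun_sum _ fun a _ => hσ_meas t a)
    (fun ω => by simp only [hσ_init, le_refl])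
    (fun t ω => (Finset.sum_le_univ_sum_of_nonneg (hsimplex t ω).1).trans (hsimplex t ω).2.le)
    hβ (summable_div_nat_add_two_sq c) (not_summable_div_nat_add_two hc.1.ne')
    (fun t => (integrable_pairGap (𝓕.le t) (hσ_meas t) (hsimplex t) (hx_int t)).1)
    (fun t ω => abs_pairGap_le (hsimplex t ω) (hx_mem t · ω) Astar)
    (fun t ω => by rw [(htraj ω t).2]; exact sum_replicator (hsimplex t ω).2 _ _ _)
    hε'_meas.aestronglyMeasurable hε' hε'_pos
    (fun t => ae_mul_le_condExp_pairGap (𝓕.le t) (hσ_meas t) (hsimplex t) (hx_int t) (hgap' t))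

/-- Almost-sure optimality of the full-information adaptive learning rule in which
probability mass is shifted between each pair of actions proportionally to the payoff
difference with weight `c/(t+2)`: starting from any `σ₀ ∈ Δ(A)` with positive mass on the
optimal actions `A*`, the vectors `σ_t` remain probability vectors and
`Σ_{a∈A*} σ_t(a) → 1` almost surely, provided the conditional expected payoff gap between
optimal and suboptimal actions is bounded below by an a.s. strictly positive random
variable `ε`. -/
theorem stmt13 {Ω : Type*} {mΩ : MeasurableSpace Ω}
    {μ : Measure Ω} [IsProbabilityMeasure μ] (𝓕 : Filtration ℕ mΩ)
    {A : Type*} [Fintype A] [DecidableEq A]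
    (c : ℝ) (hc : c ∈ Set.Ioc (0 : ℝ) 1)
    (x : ℕ → A → Ω → ℝ)
    (hx_meas : ∀ (t : ℕ) (a : A), StronglyMeasurable[𝓕 (t + 1)] (x (t + 1) a))
    (hx_mem : ∀ (t : ℕ) (a : A) (ω : Ω), x (t + 1) a ω ∈ Set.Icc (0 : ℝ) 1)
    (hx_int : ∀ (t : ℕ) (a : A), Integrable (x (t + 1) a) μ)
    (Astar : Finset A)
    (hAstar : ∀ a : A, a ∈ Astar ↔ ∀ (b : A) (t : ℕ),
      ∀ᵐ ω ∂μ, (μ[x (t + 1) b|𝓕 t]) ω ≤ (μ[x (t + 1) a|𝓕 t]) ω)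
    (ε : Ω → ℝ) (hε_meas : Measurable ε) (hε_pos : ∀ᵐ ω ∂μ, 0 < ε ω)
    (hgap : ∀ t : ℕ, ∀ a ∈ Astar, ∀ b ∉ Astar, ∀ᵐ ω ∂μ,
      ε ω ≤ (μ[x (t + 1) a|𝓕 t]) ω - (μ[x (t + 1) b|𝓕 t]) ω)
    (σ₀ : A → ℝ) (hσ₀_nonneg : ∀ a, 0 ≤ σ₀ a) (hσ₀_sum : ∑ a, σ₀ a = 1)
    (hP0 : 0 < ∑ a ∈ Astar, σ₀ a)
    (σ : ℕ → A → Ω → ℝ)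
    (hσ_meas : ∀ (t : ℕ) (a : A), StronglyMeasurable[𝓕 t] (σ t a))
    (hσ_init : ∀ (a : A) (ω : Ω), σ 0 a ω = σ₀ a)
    (hrec : ∀ (t : ℕ) (a : A) (ω : Ω), σ (t + 1) a ω =
      σ t a ω + σ t a ω * ∑ b ∈ Finset.univ.erase a,
        σ t b ω * ((c / ((t : ℝ) + 2)) * (x (t + 1) a ω - x (t + 1) b ω))) :
    (∀ (t : ℕ) (ω : Ω), (∀ a, 0 ≤ σ t a ω) ∧ ∑ a, σ t a ω = 1) ∧
    ∀ᵐ ω ∂μ, Tendsto (fun t => ∑ a ∈ Astar, σ t a ω) atTop (nhds 1) :=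
  stmt13_general 𝓕 c hc x hx_mem hx_int Astar ε hε_meas hε_pos hgap σ₀ hσ₀_nonneg hσ₀_sum hP0 σ
    hσ_meas hσ_init hrec
end

section
/- Work on a filtered probability space as follows: fix constants 0 ≤ x_min < x_max, a constant ε > 0, a finite action set A with A* ⊊ A nonempty, and the Roth–Erev process with attractions f_{a,0} > 0, V_t := Σ_{a∈A} f_{a,t}, action a_{t+1} chosen with ℙ_t(a_{t+1} = b) = f_{b,t}/V_t conditionally independently of the payoffs (x_{t+1}(b))_{b∈A} ∈ [x_min, x_max]^A, and f_{b,t+1} = f_{b,t} + 1_{{a_{t+1} = b}}·x_{t+1}(b). Assume E_t[ x_{t+1}(a) − x_{t+1}(b) ] ≥ ε almost surely for all a ∈ A*, b ∈ A∖A*, t ∈ ℕ₀, and V₀ > max( 2·x_max²/ε, x_max ). Then the process P_t := Σ_{a∈A*} f_{a,t}/V_t satisfies, for every t ∈ ℕ₀, E_t[P_{t+1}] − P_t ≥ ( ε / ( 2·( V₀ + (t+1)·x_max ) ) ) · P_t·(1 − P_t) almost surely. -/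
/-!
Fix `t` and write `S`, `V` and `P = S / V` for the attraction of `A*`, the total attraction and
the share of `A*` at time `t`, `q_b = f_{b,t} / V` and `m_b = E_t[x_{t+1}(b)]`. If `b` is played
with payoff `X ∈ [0, x_max]`, the share becomes `(S + [b ∈ A*] X) / (V + X)`, an increment of at
least `g_b X`, where `g_b = (1 - P) / (V + x_max)` for `b ∈ A*` and `g_b = -P / V` otherwise.
The slopes `g_b` are `𝓕 t`-measurable and the action is conditionally independent of the
payoffs, so `E_t[P_{t+1}] - P ≥ ∑_b g_b q_b m_b`. Pairing each optimal with each suboptimal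
action, the payoff gap bounds this sum below by
`ε P (1 - P) / (V + x_max) - P (1 - P) x_max² / (V (V + x_max))`, which is at least
`ε P (1 - P) / (2 (V + x_max))` because `V ≥ V₀ > 2 x_max² / ε`; finally `V ≤ V₀ + t x_max`.
-/

open MeasureTheory ProbabilityTheory Filter Set

theorem ProbabilityTheory.CondIndepFun.condExp_comp_mul_comp {Ω β γ : Type*}
    {m mΩ : MeasurableSpace Ω} [StandardBorelSpace Ω] {μ : Measure Ω} [IsFiniteMeasure μ]
    {hm : m ≤ mΩ} [MeasurableSpace β] [MeasurableSpace γ]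
    [MeasurableSpace.CountableOrCountablyGenerated Ω (β × γ)] {F : Ω → β} {G : Ω → γ}
    (hind : CondIndepFun m hm F G μ) (hF : Measurable F) (hG : Measurable G)
    {ψ : β → ℝ} {φ : γ → ℝ} (hψ : Measurable ψ) (hφ : Measurable φ)
    (hψF : Integrable (fun ω => ψ (F ω)) μ) (hφG : Integrable (fun ω => φ (G ω)) μ)
    (hψφ : Integrable (fun ω => ψ (F ω) * φ (G ω)) μ) :
    μ[fun ω => ψ (F ω) * φ (G ω)|m]
      =ᵐ[μ] μ[fun ω => ψ (F ω)|m] * μ[fun ω => φ (G ω)|m] := by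
  set κ := condExpKernel μ m
  have hprod := ae_of_ae_trim hm ((condIndepFun_iff_map_prod_eq_prod_map_map hF hG).1 hind)
  filter_upwards [hprod, condExp_ae_eq_integral_condExpKernel hm hψφ,
    condExp_ae_eq_integral_condExpKernel hm hψF, condExp_ae_eq_integral_condExpKernel hm hφG]
    with ω hω hψφω hψω hφω
  rw [hψφω, Pi.mul_apply, hψω, hφω]
  calc ∫ y, ψ (F y) * φ (G y) ∂κ ω
      = ∫ p, ψ p.1 * φ p.2 ∂(κ.map fun y => (F y, G y)) ω := by
        rw [Kernel.map_apply _ (hF.prodMk hG), integral_map (hF.prodMk hG).aemeasurable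
          (by fun_prop : Measurable fun p : β × γ => ψ p.1 * φ p.2).aestronglyMeasurable]
    _ = ∫ p, ψ p.1 * φ p.2 ∂((κ.map F) ×ₖ (κ.map G)) ω := by rw [hω]
    _ = (∫ y, ψ (F y) ∂κ ω) * ∫ y, φ (G y) ∂κ ω := by
        rw [Kernel.prod_apply, integral_prod_mul, Kernel.map_apply _ hF, Kernel.map_apply _ hG,
          integral_map hF.aemeasurable hψ.aestronglyMeasurable,
          integral_map hG.aemeasurable hφ.aestronglyMeasurable]

theorem MeasureTheory.condExp_mem_Icc {Ω : Type*} {m mΩ : MeasurableSpace Ω} {μ : Measure Ω}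
    [IsFiniteMeasure μ] (hm : m ≤ mΩ) {g : Ω → ℝ} {a b : ℝ} (hg : Integrable g μ)
    (h : ∀ᵐ ω ∂μ, g ω ∈ Icc a b) : ∀ᵐ ω ∂μ, μ[g|m] ω ∈ Icc a b := by
  have hlow := condExp_mono (m := m) (integrable_const a) hg (h.mono fun _ h => h.1)
  have hup := condExp_mono (m := m) hg (integrable_const b) (h.mono fun _ h => h.2)
  rw [condExp_const hm] at hlow hup
  filter_upwards [hlow, hup] with ω hl hu using ⟨hl, hu⟩

theorem MeasureTheory.Integrable.ite_one_mul {Ω : Type*} {mΩ : MeasurableSpace Ω}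
    {μ : Measure Ω} {g : Ω → ℝ} {p : Ω → Prop} [DecidablePred p] (hg : Integrable g μ)
    (hp : MeasurableSet {ω | p ω}) :
    Integrable (fun ω => (if p ω then (1 : ℝ) else 0) * g ω) μ := by
  refine (hg.indicator hp).congr (Eventually.of_forall fun ω => ?_)
  simp [Set.indicator_apply]

theorem mul_sum_mul_sum_le_of_le_sub {ι : Type*} {s t : Finset ι} {w m : ι → ℝ} {ε : ℝ}
    (hw : ∀ i, 0 ≤ w i) (hgap : ∀ a ∈ s, ∀ b ∈ t, ε ≤ m a - m b) :
    ε * ((∑ a ∈ s, w a) * ∑ b ∈ t, w b)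
      ≤ (∑ b ∈ t, w b) * (∑ a ∈ s, w a * m a) - (∑ a ∈ s, w a) * ∑ b ∈ t, w b * m b := by
  have hpairs : (∑ b ∈ t, w b) * (∑ a ∈ s, w a * m a) - (∑ a ∈ s, w a) * ∑ b ∈ t, w b * m b
      = ∑ a ∈ s, ∑ b ∈ t, w a * w b * (m a - m b) := by
    rw [Finset.sum_mul_sum, Finset.sum_mul_sum, Finset.sum_comm, ← Finset.sum_sub_distrib]
    refine Finset.sum_congr rfl fun a _ => ?_
    rw [← Finset.sum_sub_distrib]
    exact Finset.sum_congr rfl fun b _ => by ring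
  rw [hpairs, Finset.sum_mul_sum, Finset.mul_sum]
  refine Finset.sum_le_sum fun a ha => ?_
  rw [Finset.mul_sum]
  refine Finset.sum_le_sum fun b hb => ?_
  rw [mul_comm ε]
  exact mul_le_mul_of_nonneg_left (hgap a ha b hb) (mul_nonneg (hw a) (hw b))

section Reinforcement

variable {A : Type*} [DecidableEq A]

theorem sum_reinforce (s : Finset A) {f f' X : A → ℝ} {a : A}
    (h : ∀ b, f' b = f b + if a = b then X b else 0) :
    ∑ b ∈ s, f' b = ∑ b ∈ s, f b + if a ∈ s then X a else 0 := by
  simp only [h, Finset.sum_add_distrib, Finset.sum_ite_eq]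

variable {f x : ℕ → A → ℝ} {act : ℕ → A}

theorem monotone_of_reinforce
    (hrec : ∀ t b, f (t + 1) b = f t b + if act (t + 1) = b then x (t + 1) b else 0)
    (hx : ∀ t b, 0 ≤ x (t + 1) b) (b : A) : Monotone (f · b) :=
  monotone_nat_of_le_succ fun t => by
    rw [hrec]
    split_ifs
    exacts [le_add_of_nonneg_right (hx t b), (add_zero _).ge]

theorem sum_le_of_reinforce [Fintype A]
    (hrec : ∀ t b, f (t + 1) b = f t b + if act (t + 1) = b then x (t + 1) b else 0)
    {c : ℝ} (hx : ∀ t b, x (t + 1) b ≤ c) (t : ℕ) : ∑ b, f t b ≤ ∑ b, f 0 b + t * c := by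
  induction t with
  | zero => simp
  | succ t ih =>
    rw [sum_reinforce _ (hrec t), if_pos (Finset.mem_univ _)]
    push_cast
    linarith [hx t (act (t + 1))]

end Reinforcement

noncomputable section Share

variable {A : Type*}

def share [Fintype A] (Astar : Finset A) (f : A → ℝ) : ℝ := (∑ a ∈ Astar, f a) / ∑ a, f a

theorem share_mem_Icc [Fintype A] (Astar : Finset A) {f : A → ℝ} (hf : ∀ a, 0 ≤ f a) :
    share Astar f ∈ Icc 0 1 := by
  refine ⟨div_nonneg (Finset.sum_nonneg fun a _ => hf a) (Finset.sum_nonneg fun a _ => hf a),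
    div_le_one_of_le₀ ?_ (Finset.sum_nonneg fun a _ => hf a)⟩
  exact Finset.sum_le_sum_of_subset_of_nonneg (Finset.subset_univ _) fun a _ _ => hf a

variable [DecidableEq A]

/-- `V + c` rather than `V + X` in the denominator makes the slope independent of the payoff. -/
def shareSlope (Astar : Finset A) (c V P : ℝ) (b : A) : ℝ :=
  if b ∈ Astar then (1 - P) / (V + c) else -(P / V)

theorem abs_shareSlope_le {Astar : Finset A} {c V P : ℝ} (b : A) (hc : 0 < c) (hcV : c ≤ V)
    (hP : P ∈ Icc 0 1) : |shareSlope Astar c V P b| ≤ 1 / c := by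
  unfold shareSlope
  split_ifs
  · rw [abs_of_nonneg (div_nonneg (by linarith [hP.2]) (by linarith))]
    exact div_le_div₀ zero_le_one (by linarith [hP.1]) hc (by linarith)
  · rw [abs_neg, abs_of_nonneg (div_nonneg hP.1 (by linarith))]
    exact div_le_div₀ zero_le_one hP.2 hc hcV

theorem shareSlope_mul_le {Astar : Finset A} {c S V X : ℝ} (b : A) (hS : 0 ≤ S) (hSV : S ≤ V)
    (hV : 0 < V) (hX : 0 ≤ X) (hXc : X ≤ c) :
    shareSlope Astar c V (S / V) b * X ≤ (S + if b ∈ Astar then X else 0) / (V + X) - S / V := by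
  unfold shareSlope
  split_ifs
  · rw [show (S + X) / (V + X) - S / V = (1 - S / V) / (V + X) * X by field_simp; ring]
    have : 0 ≤ 1 - S / V := by rw [sub_nonneg, div_le_one hV]; exact hSV
    gcongr
  · rw [show (S + 0) / (V + X) - S / V = -(S / V / (V + X) * X) by field_simp; ring, neg_mul,
      neg_le_neg_iff]
    gcongr
    linarith

theorem share_add_sum_shareSlope_mul_le [Fintype A] (Astar : Finset A) {f f' X : A → ℝ}
    {a₀ : A} {c : ℝ} (hf : ∀ a, 0 ≤ f a) (hV : 0 < ∑ a, f a) (hX : X a₀ ∈ Icc 0 c)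
    (hf' : ∀ b, f' b = f b + if a₀ = b then X b else 0) :
    share Astar f + ∑ b, shareSlope Astar c (∑ a, f a) (share Astar f) b
        * ((if a₀ = b then (1 : ℝ) else 0) * X b) ≤ share Astar f' := by
  have hsum : ∑ b, shareSlope Astar c (∑ a, f a) (share Astar f) b
      * ((if a₀ = b then (1 : ℝ) else 0) * X b)
      = shareSlope Astar c (∑ a, f a) (share Astar f) a₀ * X a₀ := by
    simp
  have := shareSlope_mul_le (Astar := Astar) a₀ (Finset.sum_nonneg fun a _ => hf a)
    (Finset.sum_le_sum_of_subset_of_nonneg (Finset.subset_univ Astar) fun a _ _ => hf a) hV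
    hX.1 hX.2
  rw [hsum, share, share, sum_reinforce _ hf', sum_reinforce _ hf', if_pos (Finset.mem_univ _)]
  linarith

theorem mul_share_le_sum_shareSlope_mul [Fintype A] {Astar : Finset A} {q m : A → ℝ}
    {ε c V : ℝ} (hq : ∀ b, 0 ≤ q b) (hq1 : ∑ b, q b = 1) (hm : ∀ b, m b ∈ Icc 0 c)
    (hgap : ∀ a ∈ Astar, ∀ b ∉ Astar, ε ≤ m a - m b) (hε : 0 < ε) (hc : 0 ≤ c)
    (hV : 2 * c ^ 2 / ε < V) :
    ε / (2 * (V + c)) * ((∑ a ∈ Astar, q a) * (1 - ∑ a ∈ Astar, q a))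
      ≤ ∑ b, shareSlope Astar c V (∑ a ∈ Astar, q a) b * (q b * m b) := by
  set P := ∑ a ∈ Astar, q a
  set SA := ∑ a ∈ Astar, q a * m a
  set SB := ∑ b ∈ Astarᶜ, q b * m b
  have hV0 : 0 < V := lt_of_le_of_lt (by positivity) hV
  have hQ : 1 - P = ∑ b ∈ Astarᶜ, q b := by
    rw [← hq1, ← Finset.sum_add_sum_compl Astar q]; ring
  have hP : 0 ≤ P := Finset.sum_nonneg fun a _ => hq a
  have hQ0 : 0 ≤ 1 - P := hQ ▸ Finset.sum_nonneg fun b _ => hq b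
  have hsplit : ∑ b, shareSlope Astar c V P b * (q b * m b)
      = (1 - P) / (V + c) * SA - P / V * SB := by
    rw [← Finset.sum_add_sum_compl Astar, Finset.mul_sum, Finset.mul_sum, sub_eq_add_neg,
      ← Finset.sum_neg_distrib]
    congr 1 <;> refine Finset.sum_congr rfl fun b hb => ?_
    · simp [shareSlope, hb]
    · simp [shareSlope, Finset.mem_compl.mp hb]
  have hpair : ε * (P * (1 - P)) ≤ (1 - P) * SA - P * SB := by
    rw [hQ]
    exact mul_sum_mul_sum_le_of_le_sub hq fun a ha b hb => hgap a ha b (Finset.mem_compl.mp hb)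
  have hSB : SB ≤ c * (1 - P) := by
    rw [hQ, Finset.mul_sum]
    exact Finset.sum_le_sum fun b _ => by
      rw [mul_comm c]; exact mul_le_mul_of_nonneg_left (hm b).2 (hq b)
  have hc2 : 2 * c ^ 2 ≤ ε * V := by rw [div_lt_iff₀ hε] at hV; linarith
  rw [hsplit, show (1 - P) / (V + c) * SA - P / V * SB
      = (2 * V * ((1 - P) * SA - P * SB) - 2 * c * (P * SB)) / (2 * (V + c) * V) by
        field_simp; ring,
    show ε / (2 * (V + c)) * (P * (1 - P)) = ε * V * (P * (1 - P)) / (2 * (V + c) * V) by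
        field_simp]
  gcongr
  nlinarith [mul_nonneg hP hQ0, mul_le_mul_of_nonneg_left hSB hP]

end Share

theorem integrable_share {Ω A : Type*} {mΩ : MeasurableSpace Ω} {μ : Measure Ω}
    [IsFiniteMeasure μ] [Fintype A] (Astar : Finset A) {f : A → Ω → ℝ}
    (hf : ∀ a, Measurable (f a)) (hf_nonneg : ∀ᵐ ω ∂μ, ∀ a, 0 ≤ f a ω) :
    Integrable (fun ω => share Astar (f · ω)) μ := by
  have hm : Measurable fun ω => share Astar (f · ω) :=
    (Finset.measurable_sum _ fun a _ => hf a).div (Finset.measurable_sum _ fun a _ => hf a)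
  exact memLp_one_iff_integrable.1 (memLp_of_bounded
    (hf_nonneg.mono fun ω h => share_mem_Icc Astar h) hm.aestronglyMeasurable 1)

section ConditionalDrift

variable {Ω A : Type*} {m mΩ : MeasurableSpace Ω} {μ : Measure Ω} [IsFiniteMeasure μ]
  [Fintype A] [DecidableEq A]

theorem ae_mul_share_le_sum_shareSlope_mul_condExp (hm : m ≤ mΩ) (Astar : Finset A)
    {ε c : ℝ} (hε : 0 < ε) (hc : 0 ≤ c) {f X : A → Ω → ℝ} (hf_pos : ∀ᵐ ω ∂μ, ∀ a, 0 < f a ω)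
    (hX_mem : ∀ᵐ ω ∂μ, ∀ a, X a ω ∈ Icc 0 c) (hX_int : ∀ a, Integrable (X a) μ)
    (hgap : ∀ a ∈ Astar, ∀ b ∉ Astar, ∀ᵐ ω ∂μ, ε ≤ μ[fun ω' => X a ω' - X b ω'|m] ω)
    (hV : ∀ᵐ ω ∂μ, 2 * c ^ 2 / ε < ∑ a, f a ω) :
    ∀ᵐ ω ∂μ, ε / (2 * (∑ a, f a ω + c)) * (share Astar (f · ω) * (1 - share Astar (f · ω)))
      ≤ ∑ b, shareSlope Astar c (∑ a, f a ω) (share Astar (f · ω)) b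
          * (f b ω / (∑ a, f a ω) * μ[X b|m] ω) := by
  have hmean_mem : ∀ᵐ ω ∂μ, ∀ b, μ[X b|m] ω ∈ Icc 0 c :=
    ae_all_iff.2 fun b => condExp_mem_Icc hm (hX_int b) (hX_mem.mono fun ω h => h b)
  have hmean_gap : ∀ᵐ ω ∂μ, ∀ a b, a ∈ Astar → b ∉ Astar → ε ≤ μ[X a|m] ω - μ[X b|m] ω := by
    refine ae_all_iff.2 fun a => ae_all_iff.2 fun b => ?_
    by_cases hab : a ∈ Astar ∧ b ∉ Astar
    · filter_upwards [hgap a hab.1 b hab.2, condExp_sub (hX_int a) (hX_int b) m]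
        with ω h1 h2 _ _
      exact h1.trans_eq h2
    · exact Eventually.of_forall fun ω ha hb => absurd ⟨ha, hb⟩ hab
  filter_upwards [hf_pos, hV, hmean_mem, hmean_gap] with ω hfω hVω hmω hgω
  have hV0 : 0 < ∑ a, f a ω := lt_of_le_of_lt (by positivity) hVω
  have hPq : share Astar (f · ω) = ∑ a ∈ Astar, f a ω / ∑ a, f a ω := Finset.sum_div _ _ _
  rw [hPq]
  exact mul_share_le_sum_shareSlope_mul (fun b => div_nonneg (hfω b).le hV0.le)
    (by rw [← Finset.sum_div, div_self hV0.ne']) hmω (fun a ha b hb => hgω a b ha hb) hε hc hVω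

end ConditionalDrift

section OneStep

variable {Ω A : Type*} {m mΩ : MeasurableSpace Ω} [StandardBorelSpace Ω] {μ : Measure Ω}
  [IsFiniteMeasure μ] [Fintype A] [DecidableEq A] [MeasurableSpace A]
  [MeasurableSingletonClass A]

theorem condExp_ite_mul_eq {hm : m ≤ mΩ} {f X : A → Ω → ℝ} {α : Ω → A} (hα : Measurable α)
    (hX : ∀ a, Measurable (X a)) (hX_int : ∀ a, Integrable (X a) μ)
    (hα_law : ∀ b, μ[(fun ω => if α ω = b then (1 : ℝ) else 0)|m]
      =ᵐ[μ] fun ω => f b ω / ∑ a, f a ω)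
    (hindep : CondIndepFun m hm α (fun ω a => X a ω) μ) (b : A) :
    μ[fun ω => (if α ω = b then (1 : ℝ) else 0) * X b ω|m]
      =ᵐ[μ] fun ω => f b ω / (∑ a, f a ω) * μ[X b|m] ω := by
  have hψ : Measurable fun a : A => if a = b then (1 : ℝ) else 0 := measurable_of_countable _
  have hψα : Integrable (fun ω => if α ω = b then (1 : ℝ) else 0) μ :=
    (integrable_const 1).mono' (hψ.comp hα).aestronglyMeasurable
      (Eventually.of_forall fun ω => by split_ifs <;> simp)
  have hprod := hindep.condExp_comp_mul_comp hα (measurable_pi_lambda _ hX) hψ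
    (measurable_pi_apply b) hψα (hX_int b)
    ((hX_int b).ite_one_mul (measurableSet_eq_fun hα measurable_const))
  filter_upwards [hprod, hα_law b] with ω h1 h2
  rw [h1, Pi.mul_apply, h2]

theorem condExp_add_sum_mul_ite_mul {hm : m ≤ mΩ} {f X : A → Ω → ℝ} {α : Ω → A}
    (hα : Measurable α) (hX : ∀ a, Measurable (X a)) (hX_int : ∀ a, Integrable (X a) μ)
    (hα_law : ∀ b, μ[(fun ω => if α ω = b then (1 : ℝ) else 0)|m]
      =ᵐ[μ] fun ω => f b ω / ∑ a, f a ω)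
    (hindep : CondIndepFun m hm α (fun ω a => X a ω) μ) {P : Ω → ℝ} {g : A → Ω → ℝ}
    (hP : StronglyMeasurable[m] P) (hP_int : Integrable P μ)
    (hg : ∀ b, StronglyMeasurable[m] (g b))
    (hgY_int : ∀ b, Integrable (g b * fun ω => (if α ω = b then (1 : ℝ) else 0) * X b ω) μ) :
    μ[P + ∑ b, g b * fun ω => (if α ω = b then (1 : ℝ) else 0) * X b ω|m]
      =ᵐ[μ] fun ω => P ω + ∑ b, g b ω * (f b ω / (∑ a, f a ω) * μ[X b|m] ω) := by
  have hY_int : ∀ b, Integrable (fun ω => (if α ω = b then (1 : ℝ) else 0) * X b ω) μ :=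
    fun b => (hX_int b).ite_one_mul (measurableSet_eq_fun hα measurable_const)
  have hadd := condExp_add hP_int (integrable_finsetSum' Finset.univ fun b _ => hgY_int b) m
  rw [condExp_of_stronglyMeasurable hm hP hP_int] at hadd
  have hsum := (condExp_finsetSum (s := Finset.univ) (fun b _ => hgY_int b) m).trans
    (eventuallyEq_sum fun b _ => condExp_mul_of_stronglyMeasurable_left (hg b) (hgY_int b)
      (hY_int b))
  filter_upwards [hadd, hsum, ae_all_iff.2 (condExp_ite_mul_eq hα hX hX_int hα_law hindep)]
    with ω h1 h2 h3
  rw [h1, Pi.add_apply, h2, Finset.sum_apply]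
  exact congrArg (P ω + ·) (Finset.sum_congr rfl fun b _ => congrArg (g b ω * ·) (h3 b))

theorem mul_share_le_condExp_share_sub (hm : m ≤ mΩ) (Astar : Finset A) {ε c : ℝ}
    (hε : 0 < ε) (hc : 0 < c) {f f' X : A → Ω → ℝ} {α : Ω → A}
    (hf : ∀ a, StronglyMeasurable[m] (f a)) (hf_pos : ∀ᵐ ω ∂μ, ∀ a, 0 < f a ω)
    (hf'_meas : ∀ a, Measurable (f' a)) (hX : ∀ a, Measurable (X a))
    (hX_mem : ∀ᵐ ω ∂μ, ∀ a, X a ω ∈ Icc 0 c) (hX_int : ∀ a, Integrable (X a) μ)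
    (hα : Measurable α)
    (hα_law : ∀ b, μ[(fun ω => if α ω = b then (1 : ℝ) else 0)|m]
      =ᵐ[μ] fun ω => f b ω / ∑ a, f a ω)
    (hindep : CondIndepFun m hm α (fun ω a => X a ω) μ)
    (hf' : ∀ b ω, f' b ω = f b ω + if α ω = b then X b ω else 0)
    (hgap : ∀ a ∈ Astar, ∀ b ∉ Astar, ∀ᵐ ω ∂μ, ε ≤ μ[fun ω' => X a ω' - X b ω'|m] ω)
    (hV : ∀ᵐ ω ∂μ, max (2 * c ^ 2 / ε) c < ∑ a, f a ω) :
    ∀ᵐ ω ∂μ, ε / (2 * (∑ a, f a ω + c)) * (share Astar (f · ω) * (1 - share Astar (f · ω)))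
      ≤ μ[fun ω => share Astar (f' · ω)|m] ω - share Astar (f · ω) := by
  set P := fun ω => share Astar (f · ω)
  set g := fun b ω => shareSlope Astar c (∑ a, f a ω) (P ω) b
  set Y := fun b ω => (if α ω = b then (1 : ℝ) else 0) * X b ω
  have hPm : StronglyMeasurable[m] P := by unfold P share; fun_prop
  have hP_mem : ∀ᵐ ω ∂μ, P ω ∈ Icc 0 1 :=
    hf_pos.mono fun ω h => share_mem_Icc Astar fun a => (h a).le
  have hP_int : Integrable P μ :=
    integrable_share Astar (fun a => ((hf a).mono hm).measurable)
      (hf_pos.mono fun ω h a => (h a).le)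
  have hgm : ∀ b, StronglyMeasurable[m] (g b) := fun b => by
    unfold g shareSlope
    split_ifs <;> fun_prop
  have hgY_int : ∀ b, Integrable (g b * Y b) μ := fun b =>
    ((hX_int b).ite_one_mul (measurableSet_eq_fun hα measurable_const)).bdd_mul
      ((hgm b).mono hm).aestronglyMeasurable (c := 1 / c) <| by
      filter_upwards [hP_mem, hV] with ω hP hVω
      exact abs_shareSlope_le b hc ((le_max_right _ _).trans hVω.le) hP
  have hP'_int : Integrable (fun ω => share Astar (f' · ω)) μ := by
    refine integrable_share Astar hf'_meas ?_
    filter_upwards [hf_pos, hX_mem] with ω hfω hXω b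
    rw [hf' b ω]
    split_ifs <;> linarith [(hfω b).le, (hXω b).1]
  have hlin : P + ∑ b, g b * Y b ≤ᵐ[μ] fun ω => share Astar (f' · ω) := by
    filter_upwards [hf_pos, hX_mem] with ω hfω hXω
    simp only [Pi.add_apply, Finset.sum_apply, Pi.mul_apply]
    exact share_add_sum_shareSlope_mul_le Astar (fun a => (hfω a).le)
      (Finset.sum_pos (fun a _ => hfω a) ⟨α ω, Finset.mem_univ _⟩) (hXω (α ω)) fun b => hf' b ω
  filter_upwards [condExp_mono (hP_int.add (integrable_finsetSum' _ fun b _ => hgY_int b))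
      hP'_int hlin,
    condExp_add_sum_mul_ite_mul hα hX hX_int hα_law hindep hPm hP_int hgm hgY_int,
    ae_mul_share_le_sum_shareSlope_mul_condExp hm Astar hε hc.le hf_pos hX_mem hX_int hgap
      (hV.mono fun ω h => (le_max_left _ _).trans_lt h)] with ω hmono hcond hdrift
  rw [hcond] at hmono
  linarith

end OneStep

theorem stmt16_general {Ω : Type*} {mΩ : MeasurableSpace Ω} [StandardBorelSpace Ω]
    {μ : Measure Ω} [IsProbabilityMeasure μ] (𝓕 : Filtration ℕ mΩ)
    {A : Type*} [Fintype A] [DecidableEq A] [MeasurableSpace A] [DiscreteMeasurableSpace A]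
    (xmin xmax : ℝ) (hxmin : 0 ≤ xmin) (hx : xmin < xmax)
    (ε : ℝ) (hε : 0 < ε)
    (Astar : Finset A)
    (f : ℕ → A → Ω → ℝ)
    (hf_meas : ∀ (t : ℕ) (a : A), StronglyMeasurable[𝓕 t] (f t a))
    (hf0_pos : ∀ a : A, ∀ᵐ ω ∂μ, 0 < f 0 a ω)
    (x : ℕ → A → Ω → ℝ)
    (hx_meas : ∀ (t : ℕ) (a : A), StronglyMeasurable[𝓕 (t + 1)] (x (t + 1) a))
    (hx_mem : ∀ (t : ℕ) (a : A), ∀ᵐ ω ∂μ, x (t + 1) a ω ∈ Set.Icc xmin xmax)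
    (hx_int : ∀ (t : ℕ) (a : A), Integrable (x (t + 1) a) μ)
    (act : ℕ → Ω → A)
    (hact_meas : ∀ t : ℕ, Measurable[𝓕 (t + 1)] (act (t + 1)))
    (hact_law : ∀ (t : ℕ) (b : A),
      μ[(fun ω => if act (t + 1) ω = b then (1 : ℝ) else 0)|𝓕 t]
        =ᵐ[μ] fun ω => f t b ω / ∑ a, f t a ω)
    (hact_indep : ∀ t : ℕ,
      CondIndepFun (𝓕 t) (𝓕.le t) (act (t + 1)) (fun ω => fun a => x (t + 1) a ω) μ)
    (hrec : ∀ (t : ℕ) (b : A) (ω : Ω),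
      f (t + 1) b ω = f t b ω + (if act (t + 1) ω = b then x (t + 1) b ω else 0))
    (hgap : ∀ t : ℕ, ∀ a ∈ Astar, ∀ b ∉ Astar, ∀ᵐ ω ∂μ,
      ε ≤ (μ[fun ω' => x (t + 1) a ω' - x (t + 1) b ω'|𝓕 t]) ω)
    (hV0 : ∀ᵐ ω ∂μ, max (2 * xmax ^ 2 / ε) xmax < ∑ a, f 0 a ω) :
    ∀ t : ℕ, ∀ᵐ ω ∂μ,
      ε / (2 * ((∑ a, f 0 a ω) + ((t : ℝ) + 1) * xmax))
          * (((∑ a ∈ Astar, f t a ω) / ∑ a, f t a ω)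
              * (1 - (∑ a ∈ Astar, f t a ω) / ∑ a, f t a ω))
        ≤ (μ[fun ω' => (∑ a ∈ Astar, f (t + 1) a ω') / ∑ a, f (t + 1) a ω'|𝓕 t]) ω
          - (∑ a ∈ Astar, f t a ω) / ∑ a, f t a ω := by
  intro t
  have hxmax : 0 < xmax := hxmin.trans_lt hx
  have hx_bdd : ∀ᵐ ω ∂μ, ∀ s a, x (s + 1) a ω ∈ Icc 0 xmax :=
    (ae_all_iff.2 fun s => ae_all_iff.2 (hx_mem s)).mono fun ω h s a =>
      ⟨hxmin.trans (h s a).1, (h s a).2⟩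
  have hgrowth : ∀ᵐ ω ∂μ, (∀ a, f 0 a ω ≤ f t a ω) ∧ ∑ a, f t a ω ≤ ∑ a, f 0 a ω + t * xmax :=
    hx_bdd.mono fun ω h =>
      ⟨fun a => monotone_of_reinforce (f := (f · · ω)) (x := (x · · ω)) (act := (act · ω))
          (fun s b => hrec s b ω) (fun s b => (h s b).1) a (Nat.zero_le t),
        sum_le_of_reinforce (f := (f · · ω)) (x := (x · · ω)) (act := (act · ω))
          (fun s b => hrec s b ω) (fun s b => (h s b).2) t⟩
  have hpos : ∀ᵐ ω ∂μ, ∀ a, 0 < f t a ω := by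
    filter_upwards [ae_all_iff.2 hf0_pos, hgrowth] with ω h0 hg a using (h0 a).trans_le (hg.1 a)
  have hstep := mul_share_le_condExp_share_sub (𝓕.le t) Astar hε hxmax (hf_meas t) hpos
    (fun a => ((hf_meas (t + 1) a).mono (𝓕.le _)).measurable)
    (fun a => ((hx_meas t a).mono (𝓕.le _)).measurable) (hx_bdd.mono fun ω h => h t) (hx_int t)
    ((hact_meas t).mono (𝓕.le _) le_rfl) (hact_law t) (hact_indep t) (hrec t) (hgap t)
    (by filter_upwards [hV0, hgrowth] with ω h hg using
      h.trans_le (Finset.sum_le_sum fun a _ => hg.1 a))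
  filter_upwards [hstep, hgrowth, hpos] with ω h hg hpos
  have hP := share_mem_Icc Astar fun a => (hpos a).le
  have hVt : 0 < ∑ a, f t a ω + xmax :=
    add_pos_of_nonneg_of_pos (Finset.sum_nonneg fun a _ => (hpos a).le) hxmax
  refine le_trans (mul_le_mul_of_nonneg_right ?_ (mul_nonneg hP.1 (sub_nonneg.2 hP.2))) h
  exact div_le_div_of_nonneg_left hε.le (by positivity) (by linarith [hg.2])

/-- Hazard-rate bound for the Roth–Erev learning process: if the conditional expected
payoff gap between actions in the nonempty proper subset `A*` and the other actions is at
least a constant `ε > 0`, and the initial total attraction satisfies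
`V₀ > max(2x_max²/ε, x_max)`, then the probability `P_t = Σ_{a∈A*} f_{a,t}/V_t` of
choosing an optimal action satisfies, for every `t`,
`E_t[P_{t+1}] − P_t ≥ (ε/(2(V₀ + (t+1)x_max)))·P_t·(1 − P_t)` almost surely. -/
theorem stmt16 {Ω : Type*} {mΩ : MeasurableSpace Ω} [StandardBorelSpace Ω] [Nonempty Ω]
    {μ : Measure Ω} [IsProbabilityMeasure μ] (𝓕 : Filtration ℕ mΩ)
    {A : Type*} [Fintype A] [DecidableEq A] [MeasurableSpace A] [DiscreteMeasurableSpace A]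
    (xmin xmax : ℝ) (hxmin : 0 ≤ xmin) (hx : xmin < xmax)
    (ε : ℝ) (hε : 0 < ε)
    (Astar : Finset A) (hAstar_ne : Astar.Nonempty) (hAstar_proper : Astar ≠ Finset.univ)
    (f : ℕ → A → Ω → ℝ)
    (hf_meas : ∀ (t : ℕ) (a : A), StronglyMeasurable[𝓕 t] (f t a))
    (hf0_pos : ∀ a : A, ∀ᵐ ω ∂μ, 0 < f 0 a ω)
    (x : ℕ → A → Ω → ℝ)
    (hx_meas : ∀ (t : ℕ) (a : A), StronglyMeasurable[𝓕 (t + 1)] (x (t + 1) a))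
    (hx_mem : ∀ (t : ℕ) (a : A), ∀ᵐ ω ∂μ, x (t + 1) a ω ∈ Set.Icc xmin xmax)
    (hx_int : ∀ (t : ℕ) (a : A), Integrable (x (t + 1) a) μ)
    (act : ℕ → Ω → A)
    (hact_meas : ∀ t : ℕ, Measurable[𝓕 (t + 1)] (act (t + 1)))
    (hact_law : ∀ (t : ℕ) (b : A),
      μ[(fun ω => if act (t + 1) ω = b then (1 : ℝ) else 0)|𝓕 t]
        =ᵐ[μ] fun ω => f t b ω / ∑ a, f t a ω)
    (hact_indep : ∀ t : ℕ,
      CondIndepFun (𝓕 t) (𝓕.le t) (act (t + 1)) (fun ω => fun a => x (t + 1) a ω) μ)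
    (hrec : ∀ (t : ℕ) (b : A) (ω : Ω),
      f (t + 1) b ω = f t b ω + (if act (t + 1) ω = b then x (t + 1) b ω else 0))
    (hgap : ∀ t : ℕ, ∀ a ∈ Astar, ∀ b ∉ Astar, ∀ᵐ ω ∂μ,
      ε ≤ (μ[fun ω' => x (t + 1) a ω' - x (t + 1) b ω'|𝓕 t]) ω)
    (hV0 : ∀ᵐ ω ∂μ, max (2 * xmax ^ 2 / ε) xmax < ∑ a, f 0 a ω) :
    ∀ t : ℕ, ∀ᵐ ω ∂μ,
      ε / (2 * ((∑ a, f 0 a ω) + ((t : ℝ) + 1) * xmax))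
          * (((∑ a ∈ Astar, f t a ω) / ∑ a, f t a ω)
              * (1 - (∑ a ∈ Astar, f t a ω) / ∑ a, f t a ω))
        ≤ (μ[fun ω' => (∑ a ∈ Astar, f (t + 1) a ω') / ∑ a, f (t + 1) a ω'|𝓕 t]) ω
          - (∑ a ∈ Astar, f t a ω) / ∑ a, f t a ω :=
  stmt16_general 𝓕 xmin xmax hxmin hx ε hε Astar f hf_meas hf0_pos x hx_meas hx_mem hx_int act
    hact_meas hact_law hact_indep hrec hgap hV0
end
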